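/- arXiv:2304.13528 — 11 statements merged into one kernel-verified Lean document; each statement's English description precedes it below -/
import Mathlib

section
/- Let a ≥ 0, b > 0 and c ∈ ℝ. There exists ξ ∈ ℝ such that the function x ↦ ξ·(sin x − a) + b + c·cos x has definite sign on ℝ (i.e. it is ≥ 0 for all x, or ≤ 0 for all x) if and only if a ≥ 1, or (0 ≤ a < 1 and b² ≥ c²·(1 − a²)). -/
open Real

lemma jos_exists_sin_cos (s c : ℝ) (h : s ^ 2 + c ^ 2 = 1) :
    ∃ x : ℝ, Real.sin x = s ∧ Real.cos x = c := by
  rcases le_or_gt 0 s with hs | hs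
  · refine ⟨Real.arccos c, ?_, Real.cos_arccos (by nlinarith) (by nlinarith)⟩
    rw [Real.sin_arccos]
    have h1 : 1 - c ^ 2 = s ^ 2 := by linarith
    rw [h1, Real.sqrt_sq hs]
  · refine ⟨-Real.arccos c, ?_, ?_⟩
    · rw [Real.sin_neg, Real.sin_arccos]
      have h1 : 1 - c ^ 2 = s ^ 2 := by linarith
      rw [h1, Real.sqrt_sq_eq_abs, abs_of_neg hs]; ring
    · rw [Real.cos_neg]; exact Real.cos_arccos (by nlinarith) (by nlinarith)

lemma jos_pointwise (ξ c Y : ℝ) (hY : 0 ≤ Y) (h : ξ ^ 2 + c ^ 2 ≤ Y ^ 2) (x : ℝ) :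
    0 ≤ ξ * Real.sin x + c * Real.cos x + Y := by
  have hs := Real.sin_sq_add_cos_sq x
  nlinarith [sq_nonneg (ξ * Real.cos x - c * Real.sin x),
    sq_nonneg (ξ * Real.sin x + c * Real.cos x + Y),
    sq_nonneg (ξ * Real.sin x + c * Real.cos x - Y)]

/-- For the Abel equation coefficients `f x = b + c·cos x`, `g x = sin x − a` coming
from the Josephson equation, with `a ≥ 0`, `b > 0`: there exists `ξ` such that
`ξ·g + f` has definite sign on `ℝ` iff `a ≥ 1` or (`0 ≤ a < 1` and `b² ≥ c²·(1 − a²)`). -/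
theorem josephson_definite_sign_iff (a b c : ℝ) (ha : 0 ≤ a) (hb : 0 < b) :
    (∃ ξ : ℝ,
        (∀ x : ℝ, 0 ≤ ξ * (Real.sin x - a) + b + c * Real.cos x) ∨
        (∀ x : ℝ, ξ * (Real.sin x - a) + b + c * Real.cos x ≤ 0)) ↔
      (1 ≤ a ∨ (0 ≤ a ∧ a < 1 ∧ b ^ 2 ≥ c ^ 2 * (1 - a ^ 2))) := by
  constructor
  · rintro ⟨ξ, hξ⟩
    by_cases h1 : 1 ≤ a
    · exact Or.inl h1
    push_neg at h1
    refine Or.inr ⟨ha, h1, ?_⟩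
    have hA : 0 < 1 - a ^ 2 := by nlinarith
    by_cases hR : ξ = 0 ∧ c = 0
    · obtain ⟨h₁, h₂⟩ := hR
      subst h₁ h₂
      nlinarith
    have hR2 : 0 < ξ ^ 2 + c ^ 2 := by
      rcases not_and_or.mp hR with h | h
      · have : 0 < ξ ^ 2 := by positivity
        nlinarith [sq_nonneg c]
      · have : 0 < c ^ 2 := by positivity
        nlinarith [sq_nonneg ξ]
    set R := Real.sqrt (ξ ^ 2 + c ^ 2) with hRdef
    have hRpos : 0 < R := Real.sqrt_pos.mpr hR2
    have hRsq : R ^ 2 = ξ ^ 2 + c ^ 2 := Real.sq_sqrt hR2.le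
    -- key: (b - a*ξ)^2 ≥ ξ^2 + c^2
    have key : ξ ^ 2 + c ^ 2 ≤ (b - a * ξ) ^ 2 := by
      rcases hξ with hpos | hneg
      · -- evaluate at the minimizer
        obtain ⟨x, hsx, hcx⟩ := jos_exists_sin_cos (-ξ / R) (-c / R)
          (by field_simp; linarith [hRsq])
        have hx := hpos x
        rw [hsx, hcx] at hx
        have hxx : b - a * ξ ≥ R := by
          have hRR : ξ * (ξ / R) + c * (c / R) = R := by
            field_simp
            linarith [hRsq]
          have : ξ * (-ξ / R - a) + b + c * (-c / R)
              = b - a * ξ - (ξ * (ξ / R) + c * (c / R)) := by ring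
          rw [this, hRR] at hx
          linarith
        calc ξ ^ 2 + c ^ 2 = R ^ 2 := hRsq.symm
          _ ≤ (b - a * ξ) ^ 2 := by nlinarith
      · -- evaluate at the maximizer
        obtain ⟨x, hsx, hcx⟩ := jos_exists_sin_cos (ξ / R) (c / R)
          (by field_simp; linarith [hRsq])
        have hx := hneg x
        rw [hsx, hcx] at hx
        have hxx : a * ξ - b ≥ R := by
          have hRR : ξ * (ξ / R) + c * (c / R) = R := by
            field_simp
            linarith [hRsq]
          have : ξ * (ξ / R - a) + b + c * (c / R)
              = (ξ * (ξ / R) + c * (c / R)) - (a * ξ - b) := by ring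
          rw [this, hRR] at hx
          linarith
        calc ξ ^ 2 + c ^ 2 = R ^ 2 := hRsq.symm
          _ ≤ (b - a * ξ) ^ 2 := by nlinarith
    nlinarith [sq_nonneg ((1 - a ^ 2) * ξ + a * b), mul_pos hA hA]
  · rintro (h1 | ⟨-, h1, h2⟩)
    · -- a ≥ 1 : take ξ = -c^2/(2b)
      refine ⟨-(c ^ 2 / (2 * b)), Or.inl fun x => ?_⟩
      have hY : 0 ≤ b - (-(c ^ 2 / (2 * b))) * a := by
        have : 0 ≤ c ^ 2 / (2 * b) := by positivity
        nlinarith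
      have hsq : (-(c ^ 2 / (2 * b))) ^ 2 + c ^ 2 ≤ (b - (-(c ^ 2 / (2 * b))) * a) ^ 2 := by
        have hb' : (2 * b) ^ 2 > 0 := by positivity
        have ht : 0 ≤ c ^ 2 / (2 * b) := by positivity
        have h3 : b - (-(c ^ 2 / (2 * b))) * a ≥ b + c ^ 2 / (2 * b) := by nlinarith
        have h4 : (b + c ^ 2 / (2 * b)) ^ 2 = (c ^ 2 / (2 * b)) ^ 2 + c ^ 2 + b ^ 2 := by
          field_simp
          ring
        nlinarith
      have heq : (-(c ^ 2 / (2 * b))) * (Real.sin x - a) + b + c * Real.cos x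
          = (-(c ^ 2 / (2 * b))) * Real.sin x + c * Real.cos x
            + (b - (-(c ^ 2 / (2 * b))) * a) := by ring
      rw [heq]
      exact jos_pointwise _ _ _ hY hsq x
    · -- 0 ≤ a < 1, b² ≥ c²(1-a²) : take ξ = -a*b/(1-a²)
      have hA : 0 < 1 - a ^ 2 := by nlinarith
      refine ⟨-(a * b / (1 - a ^ 2)), Or.inl fun x => ?_⟩
      have hY : 0 ≤ b - (-(a * b / (1 - a ^ 2))) * a := by
        have : 0 ≤ a * b / (1 - a ^ 2) := by positivity
        nlinarith
      have hsq : (-(a * b / (1 - a ^ 2))) ^ 2 + c ^ 2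
          ≤ (b - (-(a * b / (1 - a ^ 2))) * a) ^ 2 := by
        have hY2 : b - (-(a * b / (1 - a ^ 2))) * a = b / (1 - a ^ 2) := by
          field_simp
          ring
        rw [hY2]
        have h5 : (b / (1 - a ^ 2)) ^ 2 - (a * b / (1 - a ^ 2)) ^ 2
            = b ^ 2 / (1 - a ^ 2) := by
          field_simp
        have h6 : c ^ 2 ≤ b ^ 2 / (1 - a ^ 2) := by
          rw [ge_iff_le, ← sub_nonneg] at h2
          rw [le_div_iff₀ hA]
          nlinarith
        nlinarith
      have heq : (-(a * b / (1 - a ^ 2))) * (Real.sin x - a) + b + c * Real.cos x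
          = (-(a * b / (1 - a ^ 2))) * Real.sin x + c * Real.cos x
            + (b - (-(a * b / (1 - a ^ 2))) * a) := by ring
      rw [heq]
      exact jos_pointwise _ _ _ hY hsq x
end

section
/- Let 0 ≤ a < 1, c > 0 and 0 ≤ b < c·√(1 − a²). Then for every x ∈ ℝ with sin x ≠ a, the derivative of ω(x) = −(b + c·cos x)/(sin x − a) satisfies ω′(x) = (c − a·c·sin x + b·cos x)/(sin x − a)² > 0; in particular ω is strictly increasing on every interval on which sin x ≠ a. -/
open Real

/-- Monotonicity of the isocline `ω(x) = −(b + c·cos x)/(sin x − a)` of the Abel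
equation when `0 ≤ a < 1`, `c > 0`, `0 ≤ b < c·√(1 − a²)`: its derivative is
`(c − a·c·sin x + b·cos x)/(sin x − a)² > 0` wherever `sin x ≠ a`, and `ω` is
strictly increasing on every interval on which `sin x ≠ a`. -/
theorem isocline_strict_mono (a b c : ℝ) (ha0 : 0 ≤ a) (ha1 : a < 1) (hc : 0 < c)
    (hb0 : 0 ≤ b) (hb : b < c * Real.sqrt (1 - a ^ 2)) :
    (∀ x : ℝ, Real.sin x ≠ a →
        HasDerivAt (fun t => -(b + c * Real.cos t) / (Real.sin t - a))
          ((c - a * c * Real.sin x + b * Real.cos x) / (Real.sin x - a) ^ 2) x ∧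
        0 < (c - a * c * Real.sin x + b * Real.cos x) / (Real.sin x - a) ^ 2) ∧
    (∀ s : Set ℝ, s.OrdConnected → (∀ x ∈ s, Real.sin x ≠ a) →
        StrictMonoOn (fun t => -(b + c * Real.cos t) / (Real.sin t - a)) s) := by
  have h1a : (0:ℝ) ≤ 1 - a ^ 2 := by nlinarith
  have hb2 : b ^ 2 < c ^ 2 * (1 - a ^ 2) := by
    have := Real.sq_sqrt h1a
    nlinarith [Real.sqrt_nonneg (1 - a ^ 2)]
  have hnum : ∀ x : ℝ, 0 < c - a * c * Real.sin x + b * Real.cos x := by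
    intro x
    have hs1 : Real.sin x ≤ 1 := Real.sin_le_one x
    have hP : 0 < c * (1 - a * Real.sin x) := mul_pos hc (by nlinarith)
    have hD : 0 < c ^ 2 * (1 - a ^ 2) - b ^ 2 := by linarith
    have h2 : 0 < 1 + a ^ 2 - 2 * a * Real.sin x := by nlinarith
    have hsq : (b * Real.cos x) ^ 2 < (c * (1 - a * Real.sin x)) ^ 2 := by
      nlinarith [Real.sin_sq_add_cos_sq x, mul_pos hD h2,
        mul_nonneg (by positivity : (0:ℝ) ≤ c ^ 2 * a ^ 2 + b ^ 2) (sq_nonneg (a - Real.sin x))]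
    nlinarith [hP, hsq]
  have key : ∀ x : ℝ, Real.sin x ≠ a →
      HasDerivAt (fun t => -(b + c * Real.cos t) / (Real.sin t - a))
        ((c - a * c * Real.sin x + b * Real.cos x) / (Real.sin x - a) ^ 2) x ∧
      0 < (c - a * c * Real.sin x + b * Real.cos x) / (Real.sin x - a) ^ 2 := by
    intro x hx
    have hxne : Real.sin x - a ≠ 0 := sub_ne_zero.mpr hx
    have hd1 : HasDerivAt (fun t => -(b + c * Real.cos t)) (c * Real.sin x) x := by
      have := ((Real.hasDerivAt_cos x).const_mul c).const_add b
      have := this.neg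
      exact this.congr_deriv (by ring)
    have hd2 : HasDerivAt (fun t => Real.sin t - a) (Real.cos x) x := by
      simpa using (Real.hasDerivAt_sin x).sub_const a
    have hd := hd1.div hd2 hxne
    constructor
    · refine hd.congr_deriv ?_
      have := Real.sin_sq_add_cos_sq x
      field_simp
      ring_nf
      nlinarith [Real.sin_sq_add_cos_sq x]
    · exact div_pos (hnum x) (by positivity)
  refine ⟨key, ?_⟩
  intro s hs hsa
  have hconv : Convex ℝ s := convex_iff_ordConnected.mpr hs
  apply StrictMonoOn.mono (s := s) ?_ le_rfl
  apply strictMonoOn_of_hasDerivWithinAt_pos hconv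
  · exact fun x hx => ((key x (hsa x hx)).1).continuousAt.continuousWithinAt
  · intro x hx
    exact ((key x (hsa x (interior_subset hx))).1).hasDerivWithinAt
  · intro x hx
    exact (key x (hsa x (interior_subset hx))).2
end

section
/- Let 0 ≤ a < 1, c < 0 and 0 ≤ b < −c·√(1 − a²). Then for every x ∈ ℝ with sin x ≠ a, the derivative of ω(x) = −(b + c·cos x)/(sin x − a) satisfies ω′(x) = (c − a·c·sin x + b·cos x)/(sin x − a)² < 0; in particular ω is strictly decreasing on every interval on which sin x ≠ a. -/
open Real

/-!
The derivative of `ω` is `N(x)/(sin x - a)²` with numerator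
`N(x) = c (1 - a sin x) + b cos x`. With `r = √(1 - a²)`, AM-GM gives `a sin x + r |cos x| ≤ 1`,
so `-c (1 - a sin x) ≥ -c r |cos x| ≥ b cos x`, with strict inequality
either from `b < -c r` (when `cos x ≠ 0`) or from `1 - a sin x > 0` (when `cos x = 0`).
Monotonicity on intervals then follows from the mean value theorem.
-/

noncomputable def isocline (a b c t : ℝ) : ℝ := -(b + c * cos t) / (sin t - a)

lemma mul_add_mul_le_one {a r u v : ℝ} (har : a ^ 2 + r ^ 2 = 1) (huv : u ^ 2 + v ^ 2 = 1) :
    a * u + r * v ≤ 1 := by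
  nlinarith [sq_nonneg (a - u), sq_nonneg (r - v)]

lemma mul_sin_add_mul_abs_cos_le_one {a r : ℝ} (har : a ^ 2 + r ^ 2 = 1) (x : ℝ) :
    a * sin x + r * |cos x| ≤ 1 :=
  mul_add_mul_le_one har (by rw [sq_abs, sin_sq_add_cos_sq])

lemma isocline_numerator_neg {a b c : ℝ} (hb0 : 0 ≤ b) (hb : b < -c * √(1 - a ^ 2)) (x : ℝ) :
    c - a * c * sin x + b * cos x < 0 := by
  set r := √(1 - a ^ 2)
  obtain ⟨hc, hr⟩ : 0 < -c ∧ 0 < r :=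
    (pos_and_pos_or_neg_and_neg_of_mul_pos (hb0.trans_lt hb)).resolve_right
      fun h ↦ (sqrt_nonneg _).not_gt h.2
  have har : a ^ 2 + r ^ 2 = 1 := by
    rw [sq_sqrt (sqrt_pos.mp hr).le]
    ring
  have hbound := mul_sin_add_mul_abs_cos_le_one har x
  have hcos : b * cos x ≤ b * |cos x| := mul_le_mul_of_nonneg_left (le_abs_self _) hb0
  rcases (abs_nonneg (cos x)).eq_or_lt with hcos_zero | hcos_pos
  · have hsin : a * sin x < 1 := by
      have hsin2 : sin x ^ 2 = 1 := by
        rw [← sin_sq_add_cos_sq x, abs_eq_zero.mp hcos_zero.symm]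
        ring
      have : (a * sin x) ^ 2 < 1 := by rw [mul_pow, hsin2]; nlinarith
      nlinarith
    nlinarith
  · nlinarith [mul_lt_mul_of_pos_right hb hcos_pos]

lemma hasDerivAt_isocline {a x : ℝ} (b c : ℝ) (hx : sin x ≠ a) :
    HasDerivAt (isocline a b c)
      ((c - a * c * sin x + b * cos x) / (sin x - a) ^ 2) x := by
  have hnum : HasDerivAt (fun t ↦ -(b + c * cos t)) (c * sin x) x :=
    (((hasDerivAt_cos x).const_mul c).const_add b).neg.congr_deriv (by ring)
  refine (hnum.div ((hasDerivAt_sin x).sub_const a) (sub_ne_zero.mpr hx)).congr_deriv ?_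
  congr 1
  linear_combination c * sin_sq_add_cos_sq x

theorem isocline_strict_anti_general (a b c : ℝ)
    (hb0 : 0 ≤ b) (hb : b < -c * Real.sqrt (1 - a ^ 2)) :
    (∀ x : ℝ, Real.sin x ≠ a →
        HasDerivAt (fun t => -(b + c * Real.cos t) / (Real.sin t - a))
          ((c - a * c * Real.sin x + b * Real.cos x) / (Real.sin x - a) ^ 2) x ∧
        (c - a * c * Real.sin x + b * Real.cos x) / (Real.sin x - a) ^ 2 < 0) ∧
    (∀ s : Set ℝ, s.OrdConnected → (∀ x ∈ s, Real.sin x ≠ a) →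
        StrictAntiOn (fun t => -(b + c * Real.cos t) / (Real.sin t - a)) s) := by
  have hderiv : ∀ x, sin x ≠ a →
      (c - a * c * sin x + b * cos x) / (sin x - a) ^ 2 < 0 := fun x hx ↦
    div_neg_of_neg_of_pos (isocline_numerator_neg hb0 hb x)
      (sq_pos_of_ne_zero (sub_ne_zero.mpr hx))
  refine ⟨fun x hx ↦ ⟨hasDerivAt_isocline b c hx, hderiv x hx⟩, fun s hs hsa ↦ ?_⟩
  refine strictAntiOn_of_hasDerivWithinAt_neg hs.convex
    (fun x hx ↦ (hasDerivAt_isocline b c (hsa x hx)).continuousAt.continuousWithinAt)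
    (fun x hx ↦ (hasDerivAt_isocline b c (hsa x (interior_subset hx))).hasDerivWithinAt)
    (fun x hx ↦ hderiv x (hsa x (interior_subset hx)))

/-- Monotonicity of the isocline `ω(x) = −(b + c·cos x)/(sin x − a)` of the Abel
equation when `0 ≤ a < 1`, `c < 0`, `0 ≤ b < −c·√(1 − a²)`: its derivative is
`(c − a·c·sin x + b·cos x)/(sin x − a)² < 0` wherever `sin x ≠ a`, and `ω` is
strictly decreasing on every interval on which `sin x ≠ a`. -/
theorem isocline_strict_anti (a b c : ℝ) (ha0 : 0 ≤ a) (ha1 : a < 1) (hc : c < 0)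
    (hb0 : 0 ≤ b) (hb : b < -c * Real.sqrt (1 - a ^ 2)) :
    (∀ x : ℝ, Real.sin x ≠ a →
        HasDerivAt (fun t => -(b + c * Real.cos t) / (Real.sin t - a))
          ((c - a * c * Real.sin x + b * Real.cos x) / (Real.sin x - a) ^ 2) x ∧
        (c - a * c * Real.sin x + b * Real.cos x) / (Real.sin x - a) ^ 2 < 0) ∧
    (∀ s : Set ℝ, s.OrdConnected → (∀ x ∈ s, Real.sin x ≠ a) →
        StrictAntiOn (fun t => -(b + c * Real.cos t) / (Real.sin t - a)) s) :=
  isocline_strict_anti_general a b c hb0 hb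
end

section
/- Let 0 ≤ a < 1, c > 0, 0 ≤ b < c·√(1 − a²), and let y be a 2π-periodic solution of (E) with y(x) > 0 for all x. Then in every half-open interval of length 2π the derivative y′ vanishes at exactly two points; at one of these points y attains its global maximum and at the other its global minimum. -/
open Real Set Filter

/-- key pointwise inequality -/
lemma abel_L1 (a b c : ℝ) (ha0 : 0 ≤ a) (ha1 : a < 1) (hc : 0 < c)
    (hb0 : 0 ≤ b) (hb : b < c * Real.sqrt (1 - a ^ 2)) (x : ℝ) :
    b * |Real.cos x| < c * (1 - a * Real.sin x) := by
  set s := Real.sqrt (1 - a ^ 2) with hs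
  have h1 : (0:ℝ) ≤ 1 - a ^ 2 := by nlinarith
  have hs0 : 0 ≤ s := Real.sqrt_nonneg _
  have hs2 : s ^ 2 = 1 - a ^ 2 := Real.sq_sqrt h1
  have hsin : Real.sin x ≤ 1 := Real.sin_le_one x
  have hsin' : -1 ≤ Real.sin x := Real.neg_one_le_sin x
  have hpos : 0 < 1 - a * Real.sin x := by nlinarith
  have habs : 0 ≤ |Real.cos x| := abs_nonneg _
  have habs2 : |Real.cos x| ^ 2 = Real.cos x ^ 2 := sq_abs _
  have hpyth := Real.sin_sq_add_cos_sq x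
  -- s * |cos x| ≤ 1 - a * sin x
  have hkey : s * |Real.cos x| ≤ 1 - a * Real.sin x := by
    nlinarith [sq_nonneg (Real.sin x - a), sq_nonneg (s * |Real.cos x| - (1 - a * Real.sin x)),
      sq_nonneg (s * |Real.cos x| + (1 - a * Real.sin x))]
  rcases eq_or_lt_of_le habs with h | h
  · rw [← h]; nlinarith
  · have : b * |Real.cos x| < (c * s) * |Real.cos x| := by nlinarith
    nlinarith

/-- algebra at a zero of φ -/
lemma abel_key (a b c : ℝ) (ha0 : 0 ≤ a) (ha1 : a < 1) (hc : 0 < c)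
    (hb0 : 0 ≤ b) (hb : b < c * Real.sqrt (1 - a ^ 2)) (x Y : ℝ) (hY : 0 < Y)
    (hx : b + c * Real.cos x + (Real.sin x - a) * Y = 0) :
    0 < (a - Real.sin x) * (Y * Real.cos x - c * Real.sin x) := by
  have hid : (a - Real.sin x) * (Y * Real.cos x - c * Real.sin x)
      = b * Real.cos x + c * (1 - a * Real.sin x) := by
    have hpyth := Real.sin_sq_add_cos_sq x
    linear_combination (-Real.cos x) * hx + c * (Real.sin_sq_add_cos_sq x)
  rw [hid]
  have h1 := abel_L1 a b c ha0 ha1 hc hb0 hb x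
  have h2 : -(b * |Real.cos x|) ≤ b * Real.cos x := by
    nlinarith [neg_abs_le (Real.cos x), abs_nonneg (Real.cos x)]
  linarith
open Real Set Filter

/-- if f has negative derivative at a zero, f is positive on a left interval and
negative on a right interval -/
lemma abel_interval_right_neg (f : ℝ → ℝ) (d z : ℝ) (hf : HasDerivAt f d z)
    (h0 : f z = 0) (hd : d < 0) : ∃ u, z < u ∧ ∀ x ∈ Set.Ioo z u, f x < 0 := by
  have hs := hasDerivAt_iff_tendsto_slope.1 hf
  have h1 : ∀ᶠ x in nhdsWithin z {z}ᶜ, slope f z x < 0 := hs.eventually_lt_const hd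
  have h2 : ∀ᶠ x in nhdsWithin z (Set.Ioi z), slope f z x < 0 :=
    h1.filter_mono (nhdsWithin_mono z (fun x hx => ne_of_gt hx))
  obtain ⟨u, hu, hsub⟩ := mem_nhdsGT_iff_exists_Ioo_subset.1 h2
  refine ⟨u, hu, fun x hx => ?_⟩
  have hslope : slope f z x < 0 := hsub hx
  rw [slope_def_field, h0, sub_zero] at hslope
  rcases div_neg_iff.1 hslope with ⟨h', h''⟩ | ⟨h', h''⟩
  · linarith [hx.1]
  · exact h'

lemma abel_interval_left_pos (f : ℝ → ℝ) (d z : ℝ) (hf : HasDerivAt f d z)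
    (h0 : f z = 0) (hd : d < 0) : ∃ u, u < z ∧ ∀ x ∈ Set.Ioo u z, 0 < f x := by
  have hs := hasDerivAt_iff_tendsto_slope.1 hf
  have h1 : ∀ᶠ x in nhdsWithin z {z}ᶜ, slope f z x < 0 := hs.eventually_lt_const hd
  have h2 : ∀ᶠ x in nhdsWithin z (Set.Iio z), slope f z x < 0 :=
    h1.filter_mono (nhdsWithin_mono z (fun x hx => ne_of_lt hx))
  obtain ⟨u, hu, hsub⟩ := mem_nhdsLT_iff_exists_Ioo_subset.1 h2
  refine ⟨u, hu, fun x hx => ?_⟩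
  have hslope : slope f z x < 0 := hsub hx
  rw [slope_def_field, h0, sub_zero] at hslope
  rcases div_neg_iff.1 hslope with ⟨h', h''⟩ | ⟨h', h''⟩
  · linarith
  · linarith [hx.2]

lemma abel_interval_right_pos (f : ℝ → ℝ) (d z : ℝ) (hf : HasDerivAt f d z)
    (h0 : f z = 0) (hd : 0 < d) : ∃ u, z < u ∧ ∀ x ∈ Set.Ioo z u, 0 < f x := by
  obtain ⟨u, hu, h⟩ := abel_interval_right_neg (fun x => -f x) (-d) z hf.neg
    (by simp [h0]) (by linarith)
  exact ⟨u, hu, fun x hx => by have := h x hx; simpa using this⟩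

lemma abel_interval_left_neg (f : ℝ → ℝ) (d z : ℝ) (hf : HasDerivAt f d z)
    (h0 : f z = 0) (hd : 0 < d) : ∃ u, u < z ∧ ∀ x ∈ Set.Ioo u z, f x < 0 := by
  obtain ⟨u, hu, h⟩ := abel_interval_left_pos (fun x => -f x) (-d) z hf.neg
    (by simp [h0]) (by linarith)
  exact ⟨u, hu, fun x hx => by have := h x hx; simp at this; linarith⟩

/-- first zero after a negative point, before a positive point, has nonneg derivative -/
lemma abel_first_zero (f d : ℝ → ℝ) (hf : ∀ x, HasDerivAt f (d x) x)
    (s₁ s₂ : ℝ) (h12 : s₁ < s₂) (h1 : f s₁ < 0) (h2 : 0 < f s₂) :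
    ∃ w ∈ Set.Ioc s₁ s₂, f w = 0 ∧ 0 ≤ d w := by
  have hcont : Continuous f := by
    rw [continuous_iff_continuousAt]; exact fun x => (hf x).continuousAt
  set S : Set ℝ := Set.Icc s₁ s₂ ∩ f ⁻¹' {0} with hS
  have hSne : S.Nonempty := by
    have : (0:ℝ) ∈ Set.Icc (f s₁) (f s₂) := ⟨h1.le, h2.le⟩
    obtain ⟨z, hz, hz0⟩ := intermediate_value_Icc h12.le hcont.continuousOn this
    exact ⟨z, hz, hz0⟩
  have hScl : IsClosed S := isClosed_Icc.inter (isClosed_singleton.preimage hcont)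
  have hSbd : BddBelow S := ⟨s₁, fun x hx => hx.1.1⟩
  set w := sInf S with hw
  have hwS : w ∈ S := hScl.csInf_mem hSne hSbd
  have hw0 : f w = 0 := hwS.2
  have hw1 : s₁ ≤ w := hwS.1.1
  have hw1' : s₁ < w := lt_of_le_of_ne hw1 (fun h => by rw [← h] at hw0; linarith)
  have hneg : ∀ x ∈ Set.Ico s₁ w, f x < 0 := by
    intro x hx
    by_contra hge
    push_neg at hge
    rcases eq_or_lt_of_le hge with h | h
    · have : x ∈ S := ⟨⟨hx.1, le_trans hx.2.le hwS.1.2⟩, h.symm ▸ rfl⟩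
      exact absurd (csInf_le hSbd this) (not_le.2 hx.2)
    · have : (0:ℝ) ∈ Set.Icc (f s₁) (f x) := ⟨h1.le, h.le⟩
      obtain ⟨z, hz, hz0⟩ := intermediate_value_Icc hx.1 hcont.continuousOn this
      have hzS : z ∈ S := ⟨⟨hz.1, le_trans (le_trans hz.2 hx.2.le) hwS.1.2⟩, hz0⟩
      have := csInf_le hSbd hzS
      have : z < w := lt_of_le_of_lt hz.2 hx.2
      linarith [csInf_le hSbd hzS]
  refine ⟨w, ⟨hw1', hwS.1.2⟩, hw0, ?_⟩
  -- derivative nonneg via left slopes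
  have hs := hasDerivAt_iff_tendsto_slope.1 (hf w)
  have hs' : Filter.Tendsto (slope f w) (nhdsWithin w (Set.Iio w)) (nhds (d w)) :=
    hs.mono_left (nhdsWithin_mono w (fun x hx => ne_of_lt hx))
  have hev : ∀ᶠ x in nhdsWithin w (Set.Iio w), 0 ≤ slope f w x := by
    filter_upwards [Ioo_mem_nhdsLT hw1'] with x hx
    rw [slope_def_field, hw0, sub_zero]
    have hfx : f x < 0 := hneg x ⟨hx.1.le, hx.2⟩
    have : x - w < 0 := by linarith [hx.2]
    exact le_of_lt (div_pos_of_neg_of_neg hfx this)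
  exact ge_of_tendsto hs' hev

/-- increasing point from positive derivative on interval -/
lemma abel_incr (f g : ℝ → ℝ) (hf : ∀ x, HasDerivAt f (g x) x) (p u : ℝ)
    (h : p < u) (hg : ∀ x ∈ Set.Ioo p u, 0 < g x) : f p < f u := by
  have hcont : Continuous f := by
    rw [continuous_iff_continuousAt]; exact fun x => (hf x).continuousAt
  obtain ⟨ξ, hξ, hd⟩ := exists_deriv_eq_slope f h hcont.continuousOn
    (fun x _ => (hf x).differentiableAt.differentiableWithinAt)
  have h1 : deriv f ξ = g ξ := (hf ξ).deriv
  have h2 : 0 < g ξ := hg ξ hξ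
  rw [h1] at hd
  rw [eq_div_iff (by linarith : u - p ≠ 0)] at hd
  nlinarith
open Real Set Filter

/-- circle counting lemma -/
lemma abel_circ (T : ℝ) (hT : 0 < T) (α₁ β₁ α₂ β₂ : ℝ)
    (h2 : β₁ ≤ α₂) (h4 : β₂ ≤ α₁ + T)
    (u w v w₂ : ℝ) (k₁ k₂ k₃ k₄ : ℤ)
    (hu : u - k₁ * T ∈ Set.Ioo α₁ β₁) (hw : w - k₂ * T ∈ Set.Ioo α₂ β₂)
    (hv : v - k₃ * T ∈ Set.Ioo α₁ β₁) (hw₂ : w₂ - k₄ * T ∈ Set.Ioo α₂ β₂)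
    (o1 : u < w) (o2 : w < v) (o3 : v < w₂) (o4 : w₂ < u + T) : False := by
  obtain ⟨hu1, hu2⟩ := hu; obtain ⟨hw1, hw2⟩ := hw
  obtain ⟨hv1, hv2⟩ := hv; obtain ⟨hw₂1, hw₂2⟩ := hw₂
  have int_eq : ∀ m : ℤ, -T < (m:ℝ) * T → (m:ℝ) * T < T → m = 0 := by
    intro m hm1 hm2
    have h1 : (-1:ℝ) < (m:ℝ) := by nlinarith
    have h2 : ((m:ℝ)) < 1 := by nlinarith
    have h1' : (-1:ℤ) < m := by exact_mod_cast h1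
    have h2' : m < 1 := by exact_mod_cast h2
    omega
  have e1 : k₂ = k₁ := by
    have key : ((k₂ - k₁ : ℤ):ℝ) * T = (w - u) - ((w - k₂*T) - (u - k₁*T)) := by
      push_cast; ring
    have := int_eq (k₂ - k₁) (by rw [key]; linarith) (by rw [key]; linarith)
    omega
  have e2 : k₃ = k₂ + 1 := by
    have key : ((k₃ - k₂ - 1 : ℤ):ℝ) * T = (v - w) - ((v - k₃*T) - (w - k₂*T)) - T := by
      push_cast; ring
    have := int_eq (k₃ - k₂ - 1) (by rw [key]; linarith) (by rw [key]; linarith)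
    omega
  have e3 : k₄ = k₃ := by
    have key : ((k₄ - k₃ : ℤ):ℝ) * T = (w₂ - v) - ((w₂ - k₄*T) - (v - k₃*T)) := by
      push_cast; ring
    have := int_eq (k₄ - k₃) (by rw [key]; linarith) (by rw [key]; linarith)
    omega
  have key : w₂ - u = (w₂ - k₄*T) - (u - k₁*T) + ((k₄ - k₁ : ℤ):ℝ)*T := by push_cast; ring
  have : ((k₄ - k₁ : ℤ):ℝ) = 1 := by rw [e3, e2, e1]; push_cast; ring
  rw [this] at key
  linarith
open Real Set Filter

lemma abel_sin_per (w : ℝ) (n : ℤ) : Real.sin (w - n * (2*Real.pi)) = Real.sin w := by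
  simpa [sub_eq_add_neg] using Real.sin_add_int_mul_two_pi w (-n)

lemma abel_cos_per (w : ℝ) (n : ℤ) : Real.cos (w - n * (2*Real.pi)) = Real.cos w := by
  simpa [sub_eq_add_neg] using Real.cos_add_int_mul_two_pi w (-n)

lemma abel_coslt {u v : ℝ} (hu : u ∈ Set.Icc 0 Real.pi) (hv : v ∈ Set.Icc 0 Real.pi)
    (h : Real.cos u < Real.cos v) : v < u :=
  (Real.strictAntiOn_cos.lt_iff_gt hu hv).1 h

lemma abel_cosle {u v : ℝ} (hu : u ∈ Set.Icc 0 Real.pi) (hv : v ∈ Set.Icc 0 Real.pi)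
    (h : v ≤ u) : Real.cos u ≤ Real.cos v :=
  (Real.strictAntiOn_cos.le_iff_ge hu hv).2 h

lemma abel_sinlt {u v : ℝ} (hu : u ∈ Set.Icc (-(Real.pi/2)) (Real.pi/2))
    (hv : v ∈ Set.Icc (-(Real.pi/2)) (Real.pi/2))
    (h : Real.sin u < Real.sin v) : u < v :=
  (Real.strictMonoOn_sin.lt_iff_lt hu hv).1 h

section arcs
variable (a b c : ℝ)

/-- membership in the A-arc -/
lemma abel_memA (ha0 : 0 ≤ a) (ha1 : a < 1) (hc : 0 < c) (hb0 : 0 ≤ b)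
    (hb : b < c * Real.sqrt (1 - a ^ 2)) (z : ℝ)
    (hs : a < Real.sin z) (hcz : Real.cos z < -(b/c)) :
    ∃ k : ℤ, z - k * (2*Real.pi) ∈ Set.Ioo (Real.arccos (-(b/c))) (Real.pi - Real.arcsin a) := by
  have hπ := Real.pi_pos
  have h2π := Real.two_pi_pos
  have hbc : b/c < Real.sqrt (1 - a^2) := (div_lt_iff₀ hc).2 (by linarith [mul_comm c (Real.sqrt (1 - a^2))])
  have hsq1 : Real.sqrt (1 - a^2) ≤ 1 := Real.sqrt_le_one.2 (by nlinarith)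
  have hbc1 : b/c < 1 := lt_of_lt_of_le hbc hsq1
  have hbc0 : 0 ≤ b/c := div_nonneg hb0 hc.le
  set x₃ := Real.arccos (-(b/c)) with hx₃
  have hcos3 : Real.cos x₃ = -(b/c) := Real.cos_arccos (by linarith) (by linarith)
  have hx₃0 : 0 ≤ x₃ := Real.arccos_nonneg _
  have hx₃pi : x₃ ≤ Real.pi := Real.arccos_le_pi _
  set x₁ := Real.arcsin a with hx₁
  have hsin1 : Real.sin x₁ = a := Real.sin_arcsin (by linarith) ha1.le
  have hx₁0 : 0 ≤ x₁ := Real.arcsin_nonneg.2 ha0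
  have hx₁half : x₁ < Real.pi/2 := Real.arcsin_lt_pi_div_two.2 ha1
  set x₂ := Real.pi - x₁ with hx₂
  have hsin2 : Real.sin x₂ = a := by rw [hx₂, Real.sin_pi_sub, hsin1]
  have hx₂half : Real.pi/2 < x₂ := by rw [hx₂]; linarith
  have hx₂pi : x₂ ≤ Real.pi := by rw [hx₂]; linarith
  refine ⟨toIcoDiv h2π 0 z, ?_⟩
  have hmem : toIcoMod h2π 0 z ∈ Set.Ico 0 (0 + 2*Real.pi) := toIcoMod_mem_Ico h2π 0 z
  have heq : toIcoMod h2π 0 z = z - (toIcoDiv h2π 0 z) * (2*Real.pi) := by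
    rw [toIcoMod]; rw [zsmul_eq_mul]
  set z' := z - (toIcoDiv h2π 0 z : ℝ) * (2*Real.pi) with hz'
  rw [heq] at hmem
  rw [zero_add] at hmem
  have hsz : Real.sin z' = Real.sin z := abel_sin_per z _
  have hcz' : Real.cos z' = Real.cos z := abel_cos_per z _
  have hz'pi : z' < Real.pi := by
    by_contra h
    push_neg at h
    have h1 : 0 ≤ Real.sin (z' - Real.pi) :=
      Real.sin_nonneg_of_nonneg_of_le_pi (by linarith) (by linarith [hmem.2])
    rw [Real.sin_sub_pi] at h1
    rw [hsz] at h1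
    linarith
  have hz'0 : 0 ≤ z' := hmem.1
  have h3 : x₃ < z' := by
    refine abel_coslt ⟨hz'0, hz'pi.le⟩ ⟨hx₃0, hx₃pi⟩ ?_
    rw [hcz', hcos3]; exact hcz
  have hz'half : Real.pi/2 ≤ x₃ := by
    by_contra h
    push_neg at h
    have := Real.arccos_lt_pi_div_two.1 h
    linarith
  have h2' : z' < x₂ := by
    have h5 : z' - Real.pi/2 < x₂ - Real.pi/2 := by
      refine abel_coslt (u := x₂ - Real.pi/2) (v := z' - Real.pi/2)
        ⟨by linarith, by linarith⟩ ⟨by linarith, by linarith⟩ ?_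
      rw [Real.cos_sub_pi_div_two, Real.cos_sub_pi_div_two, hsz, hsin2]; exact hs
    linarith
  exact ⟨h3, h2'⟩

/-- membership in the B-arc -/
lemma abel_memB (ha0 : 0 ≤ a) (ha1 : a < 1) (hc : 0 < c) (hb0 : 0 ≤ b)
    (hb : b < c * Real.sqrt (1 - a ^ 2)) (z : ℝ)
    (hs : Real.sin z < a) (hcz : -(b/c) < Real.cos z) :
    ∃ k : ℤ, z - k * (2*Real.pi) ∈
      Set.Ioo (2*Real.pi - Real.arccos (-(b/c))) (2*Real.pi + Real.arcsin a) := by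
  have hπ := Real.pi_pos
  have h2π := Real.two_pi_pos
  have hbc : b/c < Real.sqrt (1 - a^2) := (div_lt_iff₀ hc).2 (by linarith [mul_comm c (Real.sqrt (1 - a^2))])
  have hsqnn : 0 ≤ Real.sqrt (1 - a^2) := Real.sqrt_nonneg _
  have hsq1 : Real.sqrt (1 - a^2) ≤ 1 := Real.sqrt_le_one.2 (by nlinarith)
  have hbc1 : b/c < 1 := lt_of_lt_of_le hbc hsq1
  have hbc0 : 0 ≤ b/c := div_nonneg hb0 hc.le
  set x₃ := Real.arccos (-(b/c)) with hx₃
  have hcos3 : Real.cos x₃ = -(b/c) := Real.cos_arccos (by linarith) (by linarith)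
  have hx₃0 : 0 ≤ x₃ := Real.arccos_nonneg _
  have hx₃pi : x₃ ≤ Real.pi := Real.arccos_le_pi _
  set x₁ := Real.arcsin a with hx₁
  have hsin1 : Real.sin x₁ = a := Real.sin_arcsin (by linarith) ha1.le
  have hx₁0 : 0 ≤ x₁ := Real.arcsin_nonneg.2 ha0
  have hx₁half : x₁ < Real.pi/2 := Real.arcsin_lt_pi_div_two.2 ha1
  set x₂ := Real.pi - x₁ with hx₂
  have hsin2 : Real.sin x₂ = a := by rw [hx₂, Real.sin_pi_sub, hsin1]
  have hcos2 : Real.cos x₂ = -Real.sqrt (1 - a^2) := by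
    rw [hx₂, Real.cos_pi_sub, hx₁, Real.cos_arcsin]
  have hx₂half : Real.pi/2 < x₂ := by rw [hx₂]; linarith
  have hx₂pi : x₂ ≤ Real.pi := by rw [hx₂]; linarith
  refine ⟨toIcoDiv h2π x₂ z, ?_⟩
  have hmem : toIcoMod h2π x₂ z ∈ Set.Ico x₂ (x₂ + 2*Real.pi) := toIcoMod_mem_Ico h2π x₂ z
  have heq : toIcoMod h2π x₂ z = z - (toIcoDiv h2π x₂ z) * (2*Real.pi) := by
    rw [toIcoMod]; rw [zsmul_eq_mul]
  set z' := z - (toIcoDiv h2π x₂ z : ℝ) * (2*Real.pi) with hz'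
  rw [heq] at hmem
  have hsz : Real.sin z' = Real.sin z := abel_sin_per z _
  have hcz' : Real.cos z' = Real.cos z := abel_cos_per z _
  have hz'pi : Real.pi < z' := by
    by_contra h
    push_neg at h
    have h1 : Real.cos z' ≤ Real.cos x₂ :=
      abel_cosle ⟨by linarith [hmem.1, hx₂half], h⟩ ⟨by linarith, hx₂pi⟩ hmem.1
    rw [hcz', hcos2] at h1
    linarith
  rcases le_or_gt z' (2*Real.pi) with hcase | hcase
  · constructor
    · have h5 : 2*Real.pi - z' < x₃ := by
        refine abel_coslt ⟨hx₃0, hx₃pi⟩ ⟨by linarith, by linarith⟩ ?_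
        rw [Real.cos_two_pi_sub, hcz', hcos3]; exact hcz
      linarith
    · rcases eq_or_lt_of_le hcase with h | h
      · have hz0 : Real.sin z' = 0 := by rw [h]; simp [Real.sin_two_pi]
        have ha' : 0 < a := by rw [hsz] at hz0; linarith
        have : 0 < x₁ := Real.arcsin_pos.2 ha'
        linarith
      · linarith
  · have hz2 : z' - 2*Real.pi < x₂ := by linarith [hmem.2]
    have hz20 : 0 < z' - 2*Real.pi := by linarith
    have hss : Real.sin (z' - 2*Real.pi) = Real.sin z' := by
      have := abel_sin_per z' (1 : ℤ)
      simpa using this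
    constructor
    · have : 0 < x₃ := Real.arccos_pos.2 (by linarith)
      linarith
    · rcases le_or_gt (z' - 2*Real.pi) (Real.pi/2) with hh | hh
      · have h5 : z' - 2*Real.pi < x₁ := by
          refine abel_sinlt ⟨by linarith, hh⟩ ⟨by linarith, hx₁half.le⟩ ?_
          rw [hss, hsz, hsin1]; exact hs
        linarith
      · exfalso
        have h6 : Real.sin (z' - 2*Real.pi) < Real.sin x₂ := by rw [hss, hsz, hsin2]; exact hs
        rw [← Real.cos_sub_pi_div_two (z' - 2*Real.pi), ← Real.cos_sub_pi_div_two x₂] at h6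
        have h7 : x₂ - Real.pi/2 < z' - 2*Real.pi - Real.pi/2 :=
          abel_coslt (u := z' - 2*Real.pi - Real.pi/2) (v := x₂ - Real.pi/2)
            ⟨by linarith, by linarith⟩ ⟨by linarith, by linarith⟩ h6
        linarith
end arcs
open Real Set Filter

section main
/-- A positive 2π-periodic solution of the Abel equation
`y′ = (b + c·cos x)·y² + (sin x − a)·y³` with `0 ≤ a < 1`, `c > 0`,
`0 ≤ b < c·√(1 − a²)` has, in every half-open interval of length `2π`,
exactly two critical points: one global maximum point and one global
minimum point. -/
theorem abel_periodic_solution_two_critical_points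
    (a b c : ℝ) (ha0 : 0 ≤ a) (ha1 : a < 1) (hc : 0 < c)
    (hb0 : 0 ≤ b) (hb : b < c * Real.sqrt (1 - a ^ 2))
    (y : ℝ → ℝ)
    (hsol : ∀ x : ℝ, HasDerivAt y
      ((b + c * Real.cos x) * (y x) ^ 2 + (Real.sin x - a) * (y x) ^ 3) x)
    (hper : ∀ x : ℝ, y (x + 2 * Real.pi) = y x)
    (hpos : ∀ x : ℝ, 0 < y x) :
    ∀ t : ℝ, ∃ p ∈ Set.Ico t (t + 2 * Real.pi), ∃ q ∈ Set.Ico t (t + 2 * Real.pi),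
      p ≠ q ∧ deriv y p = 0 ∧ deriv y q = 0 ∧
      (∀ x : ℝ, y x ≤ y p) ∧ (∀ x : ℝ, y q ≤ y x) ∧
      (∀ r ∈ Set.Ico t (t + 2 * Real.pi), deriv y r = 0 → r = p ∨ r = q) := by
  intro t
  have hπ := Real.pi_pos
  have h2π := Real.two_pi_pos
  set g : ℝ → ℝ := fun x => (b + c * Real.cos x) * (y x) ^ 2 + (Real.sin x - a) * (y x) ^ 3
    with hg
  have hderiv : ∀ x, deriv y x = g x := fun x => (hsol x).deriv
  have hy' : ∀ x, HasDerivAt y (deriv y x) x := fun x => by rw [hderiv]; exact hsol x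
  have ycont : Continuous y := by
    rw [continuous_iff_continuousAt]; exact fun x => (hsol x).continuousAt
  set φ : ℝ → ℝ := fun x => b + c * Real.cos x + (Real.sin x - a) * y x with hφ
  have hgφ : ∀ x, g x = (y x)^2 * φ x := fun x => by simp only [hg, hφ]; ring
  have hzero : ∀ x, deriv y x = 0 ↔ φ x = 0 := by
    intro x
    rw [hderiv, hgφ]
    constructor
    · intro h
      rcases mul_eq_zero.1 h with h' | h'
      · exact absurd h' (pow_ne_zero 2 (hpos x).ne')
      · exact h'
    · intro h; rw [h, mul_zero]
  set dφ : ℝ → ℝ := fun x => Real.cos x * y x - c * Real.sin x + (Real.sin x - a) * deriv y x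
    with hdφdef
  have hdφ : ∀ x, HasDerivAt φ (dφ x) x := by
    intro x
    have h1 : HasDerivAt (fun x => b + c * Real.cos x) (c * (-Real.sin x)) x :=
      ((Real.hasDerivAt_cos x).const_mul c).const_add b
    have h2 : HasDerivAt (fun x => (Real.sin x - a) * y x)
        (Real.cos x * y x + (Real.sin x - a) * deriv y x) x :=
      ((Real.hasDerivAt_sin x).sub_const a).mul (hy' x)
    have h3 := h1.add h2
    refine h3.congr_deriv ?_
    simp only [hdφdef]; ring
  have hkey : ∀ x, φ x = 0 → 0 < (a - Real.sin x) * (y x * Real.cos x - c * Real.sin x) := by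
    intro x h0
    exact abel_key a b c ha0 ha1 hc hb0 hb x (y x) (hpos x) h0
  have hdφ0 : ∀ x, φ x = 0 → dφ x = y x * Real.cos x - c * Real.sin x := by
    intro x h0
    have h1 : deriv y x = 0 := (hzero x).2 h0
    simp only [hdφdef, h1]; ring
  have htype : ∀ x, φ x = 0 →
      (a < Real.sin x ∧ dφ x < 0 ∧ Real.cos x < -(b/c)) ∨
      (Real.sin x < a ∧ 0 < dφ x ∧ -(b/c) < Real.cos x) := by
    intro x h0
    have hk := hkey x h0
    have hD := hdφ0 x h0
    have hφx : b + c * Real.cos x + (Real.sin x - a) * y x = 0 := h0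
    have h1 : b + c * Real.cos x = (a - Real.sin x) * y x := by linear_combination hφx
    rcases lt_trichotomy (Real.sin x) a with h | h | h
    · right
      refine ⟨h, ?_, ?_⟩
      · rw [hD]; nlinarith
      · have h2 : 0 < (a - Real.sin x) * y x := mul_pos (by linarith) (hpos x)
        rw [← neg_div, div_lt_iff₀ hc]
        nlinarith
    · exfalso; rw [h] at hk; simp at hk
    · left
      refine ⟨h, ?_, ?_⟩
      · rw [hD]; nlinarith
      · have h2 : (a - Real.sin x) * y x < 0 :=
          mul_neg_of_neg_of_pos (by linarith) (hpos x)
        rw [← neg_div, lt_div_iff₀ hc]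
        nlinarith
  have hφper : ∀ x, φ (x + 2*Real.pi) = φ x := by
    intro x
    simp only [hφ, Real.sin_add_two_pi, Real.cos_add_two_pi, hper x]
  have hyper : Function.Periodic y (2*Real.pi) := hper
  have hymod : ∀ x : ℝ, ∀ k : ℤ, y (x - k * (2*Real.pi)) = y x := by
    intro x k
    have h1 := hyper.sub_zsmul_eq k (x := x)
    rwa [zsmul_eq_mul] at h1
  have htlt : t < t + 2*Real.pi := by linarith
  obtain ⟨m, hm_mem, hm⟩ :=
    isCompact_Icc.exists_isMaxOn (Set.nonempty_Icc.2 htlt.le) ycont.continuousOn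
  obtain ⟨m', hm'_mem, hm'⟩ :=
    isCompact_Icc.exists_isMinOn (Set.nonempty_Icc.2 htlt.le) ycont.continuousOn
  set p := if m = t + 2*Real.pi then t else m with hpdef
  set q := if m' = t + 2*Real.pi then t else m' with hqdef
  have hyp : y p = y m := by
    by_cases h : m = t + 2*Real.pi
    · simp only [hpdef, if_pos h]; rw [h]; exact (hper t).symm
    · simp only [hpdef, if_neg h]
  have hyq : y q = y m' := by
    by_cases h : m' = t + 2*Real.pi
    · simp only [hqdef, if_pos h]; rw [h]; exact (hper t).symm
    · simp only [hqdef, if_neg h]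
  have hp_mem : p ∈ Set.Ico t (t + 2*Real.pi) := by
    by_cases h : m = t + 2*Real.pi
    · simp only [hpdef, if_pos h]; exact ⟨le_refl t, htlt⟩
    · simp only [hpdef, if_neg h]
      exact ⟨hm_mem.1, lt_of_le_of_ne hm_mem.2 h⟩
  have hq_mem : q ∈ Set.Ico t (t + 2*Real.pi) := by
    by_cases h : m' = t + 2*Real.pi
    · simp only [hqdef, if_pos h]; exact ⟨le_refl t, htlt⟩
    · simp only [hqdef, if_neg h]
      exact ⟨hm'_mem.1, lt_of_le_of_ne hm'_mem.2 h⟩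
  have hmax : ∀ x, y x ≤ y p := by
    intro x
    have h1 : toIcoMod h2π t x ∈ Set.Icc t (t + 2*Real.pi) :=
      Set.Ico_subset_Icc_self (toIcoMod_mem_Ico h2π t x)
    have h2 : y (toIcoMod h2π t x) ≤ y m := hm h1
    have h3 : y (toIcoMod h2π t x) = y x := by
      rw [toIcoMod, zsmul_eq_mul]; exact hymod x _
    rw [hyp, ← h3]; exact h2
  have hmin : ∀ x, y q ≤ y x := by
    intro x
    have h1 : toIcoMod h2π t x ∈ Set.Icc t (t + 2*Real.pi) :=
      Set.Ico_subset_Icc_self (toIcoMod_mem_Ico h2π t x)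
    have h2 : y m' ≤ y (toIcoMod h2π t x) := hm' h1
    have h3 : y (toIcoMod h2π t x) = y x := by
      rw [toIcoMod, zsmul_eq_mul]; exact hymod x _
    rw [hyq, ← h3]; exact h2
  have hp0 : deriv y p = 0 := by
    have h1 : IsLocalMax y p := Filter.Eventually.of_forall hmax
    exact h1.deriv_eq_zero
  have hq0 : deriv y q = 0 := by
    have h1 : IsLocalMin y q := Filter.Eventually.of_forall hmin
    exact h1.deriv_eq_zero
  have hφp : φ p = 0 := (hzero p).1 hp0
  have hφq : φ q = 0 := (hzero q).1 hq0
  have hptype : a < Real.sin p ∧ Real.cos p < -(b/c) := by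
    rcases htype p hφp with ⟨h1, _, h3⟩ | ⟨h1, h2, h3⟩
    · exact ⟨h1, h3⟩
    · exfalso
      obtain ⟨u, hu, hint⟩ := abel_interval_right_pos φ (dφ p) p (hdφ p) hφp h2
      have h4 : y p < y u := by
        refine abel_incr y g hsol p u hu (fun x hx => ?_)
        rw [hgφ]
        exact mul_pos (pow_pos (hpos x) 2) (hint x hx)
      linarith [hmax u]
  have hqtype : Real.sin q < a ∧ -(b/c) < Real.cos q := by
    rcases htype q hφq with ⟨h1, h2, h3⟩ | ⟨h1, _, h3⟩
    · exfalso
      obtain ⟨u, hu, hint⟩ := abel_interval_right_neg φ (dφ q) q (hdφ q) hφq h2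
      have h4 : -y q < -y u := by
        refine abel_incr (fun x => -y x) (fun x => -g x)
          (fun x => (hsol x).neg) q u hu (fun x hx => ?_)
        have h5 : φ x < 0 := hint x hx
        have h6 : g x < 0 := by rw [hgφ]; exact mul_neg_of_pos_of_neg (pow_pos (hpos x) 2) h5
        show (0:ℝ) < -g x
        linarith
      have : y u < y q := by linarith
      linarith [hmin u]
    · exact ⟨h1, h3⟩
  have hpq : p ≠ q := by
    intro h
    rw [h] at hptype
    linarith [hptype.1, hqtype.1]
  refine ⟨p, hp_mem, q, hq_mem, hpq, hp0, hq0, hmax, hmin, ?_⟩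
  intro r hr hr0
  by_contra hcon
  push_neg at hcon
  obtain ⟨hrp, hrq⟩ := hcon
  have hφr : φ r = 0 := (hzero r).1 hr0
  -- between lemmas
  have betweenA : ∀ z z' : ℝ, z < z' → φ z = 0 → φ z' = 0 → a < Real.sin z → a < Real.sin z' →
      ∃ w, w ∈ Set.Ioo z z' ∧ φ w = 0 ∧ Real.sin w < a ∧ -(b/c) < Real.cos w := by
    intro z z' hlt h0 h0' hsA hsA'
    have hdz : dφ z < 0 := by
      rcases htype z h0 with ⟨_, h, _⟩ | ⟨h, _, _⟩
      · exact h
      · linarith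
    have hdz' : dφ z' < 0 := by
      rcases htype z' h0' with ⟨_, h, _⟩ | ⟨h, _, _⟩
      · exact h
      · linarith
    obtain ⟨u1, hu1, hint1⟩ := abel_interval_right_neg φ (dφ z) z (hdφ z) h0 hdz
    set s₁ := (z + min u1 z')/2 with hs₁
    have hzs₁ : z < s₁ ∧ s₁ < u1 ∧ s₁ < z' := by
      constructor
      · rw [hs₁]; rcases le_total u1 z' with h | h <;> simp [min_eq_left, min_eq_right, h] <;> linarith
      constructor
      · rw [hs₁]; rcases le_total u1 z' with h | h
        · rw [min_eq_left h]; linarith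
        · rw [min_eq_right h]; linarith
      · rw [hs₁]; rcases le_total u1 z' with h | h
        · rw [min_eq_left h]; linarith
        · rw [min_eq_right h]; linarith
    have hφs₁ : φ s₁ < 0 := hint1 s₁ ⟨hzs₁.1, hzs₁.2.1⟩
    obtain ⟨u2, hu2, hint2⟩ := abel_interval_left_pos φ (dφ z') z' (hdφ z') h0' hdz'
    set s₂ := (max u2 s₁ + z')/2 with hs₂
    have hmaxlt : max u2 s₁ < z' := max_lt hu2 hzs₁.2.2
    have hzs₂ : u2 < s₂ ∧ s₁ < s₂ ∧ s₂ < z' := by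
      refine ⟨?_, ?_, ?_⟩
      · rw [hs₂]; linarith [le_max_left u2 s₁]
      · rw [hs₂]; linarith [le_max_right u2 s₁]
      · rw [hs₂]; linarith
    have hφs₂ : 0 < φ s₂ := hint2 s₂ ⟨hzs₂.1, hzs₂.2.2⟩
    obtain ⟨w, hw, hw0, hwd⟩ := abel_first_zero φ dφ hdφ s₁ s₂ hzs₂.2.1 hφs₁ hφs₂
    rcases htype w hw0 with ⟨_, h2, _⟩ | ⟨h1, _, h3⟩
    · linarith
    · exact ⟨w, ⟨lt_trans hzs₁.1 hw.1, lt_of_le_of_lt hw.2 hzs₂.2.2⟩, hw0, h1, h3⟩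
  have betweenB : ∀ z z' : ℝ, z < z' → φ z = 0 → φ z' = 0 → Real.sin z < a → Real.sin z' < a →
      ∃ w, w ∈ Set.Ioo z z' ∧ φ w = 0 ∧ a < Real.sin w ∧ Real.cos w < -(b/c) := by
    intro z z' hlt h0 h0' hsB hsB'
    have hdz : 0 < dφ z := by
      rcases htype z h0 with ⟨h, _, _⟩ | ⟨_, h, _⟩
      · linarith
      · exact h
    have hdz' : 0 < dφ z' := by
      rcases htype z' h0' with ⟨h, _, _⟩ | ⟨_, h, _⟩
      · linarith
      · exact h
    obtain ⟨u1, hu1, hint1⟩ := abel_interval_right_pos φ (dφ z) z (hdφ z) h0 hdz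
    set s₁ := (z + min u1 z')/2 with hs₁
    have hzs₁ : z < s₁ ∧ s₁ < u1 ∧ s₁ < z' := by
      refine ⟨?_, ?_, ?_⟩
      · rw [hs₁]; rcases le_total u1 z' with h | h <;> simp [min_eq_left, min_eq_right, h] <;> linarith
      · rw [hs₁]; rcases le_total u1 z' with h | h
        · rw [min_eq_left h]; linarith
        · rw [min_eq_right h]; linarith
      · rw [hs₁]; rcases le_total u1 z' with h | h
        · rw [min_eq_left h]; linarith
        · rw [min_eq_right h]; linarith
    have hφs₁ : 0 < φ s₁ := hint1 s₁ ⟨hzs₁.1, hzs₁.2.1⟩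
    obtain ⟨u2, hu2, hint2⟩ := abel_interval_left_neg φ (dφ z') z' (hdφ z') h0' hdz'
    set s₂ := (max u2 s₁ + z')/2 with hs₂
    have hmaxlt : max u2 s₁ < z' := max_lt hu2 hzs₁.2.2
    have hzs₂ : u2 < s₂ ∧ s₁ < s₂ ∧ s₂ < z' := by
      refine ⟨?_, ?_, ?_⟩
      · rw [hs₂]; linarith [le_max_left u2 s₁]
      · rw [hs₂]; linarith [le_max_right u2 s₁]
      · rw [hs₂]; linarith
    have hφs₂ : φ s₂ < 0 := hint2 s₂ ⟨hzs₂.1, hzs₂.2.2⟩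
    obtain ⟨w, hw, hw0, hwd⟩ := abel_first_zero (fun x => -φ x) (fun x => -dφ x)
      (fun x => (hdφ x).neg) s₁ s₂ hzs₂.2.1
      (by show -φ s₁ < 0; linarith) (by show (0:ℝ) < -φ s₂; linarith)
    have hw0' : φ w = 0 := by
      have h9 : -φ w = 0 := hw0
      linarith
    have hwd' : dφ w ≤ 0 := by
      have h9 : (0:ℝ) ≤ -dφ w := hwd
      linarith
    rcases htype w hw0' with ⟨h1, _, h3⟩ | ⟨_, h2, _⟩
    · exact ⟨w, ⟨lt_trans hzs₁.1 hw.1, lt_of_le_of_lt hw.2 hzs₂.2.2⟩, hw0', h1, h3⟩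
    · linarith
  -- arc data
  have hbc : b/c < Real.sqrt (1 - a^2) :=
    (div_lt_iff₀ hc).2 (by linarith [mul_comm c (Real.sqrt (1 - a^2))])
  have hbc0 : 0 ≤ b/c := div_nonneg hb0 hc.le
  set x₁ := Real.arcsin a with hx₁def
  set x₃ := Real.arccos (-(b/c)) with hx₃def
  set x₂ := Real.pi - x₁ with hx₂def
  have hx₁0 : 0 ≤ x₁ := Real.arcsin_nonneg.2 ha0
  have hx₁half : x₁ < Real.pi/2 := Real.arcsin_lt_pi_div_two.2 ha1
  have hx₃pi : x₃ ≤ Real.pi := Real.arccos_le_pi _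
  have hx₃half : Real.pi/2 ≤ x₃ := by
    by_contra h
    push_neg at h
    have := Real.arccos_lt_pi_div_two.1 h
    linarith
  have hx₂pi : x₂ ≤ Real.pi := by rw [hx₂def]; linarith
  have harc1 : x₂ ≤ 2*Real.pi - x₃ := by rw [hx₂def]; linarith
  have harc2 : 2*Real.pi + x₁ ≤ x₃ + 2*Real.pi := by linarith
  have harc3 : 2*Real.pi + x₁ ≤ 2*Real.pi + x₃ := by linarith
  have harc4 : 2*Real.pi + x₂ ≤ (2*Real.pi - x₃) + 2*Real.pi := by linarith
  -- case analysis on type of r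
  rcases htype r hφr with ⟨hr1, _, hr3⟩ | ⟨hr1, _, hr3⟩
  · -- r type A; p type A
    set u := min r p with hu
    set v := max r p with hv
    have huv : u < v := min_lt_max.2 hrp
    have huA : φ u = 0 ∧ a < Real.sin u ∧ Real.cos u < -(b/c) := by
      rcases min_choice r p with h | h <;> rw [hu, h]
      · exact ⟨hφr, hr1, hr3⟩
      · exact ⟨hφp, hptype.1, hptype.2⟩
    have hvA : φ v = 0 ∧ a < Real.sin v ∧ Real.cos v < -(b/c) := by
      rcases max_choice r p with h | h <;> rw [hv, h]
      · exact ⟨hφr, hr1, hr3⟩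
      · exact ⟨hφp, hptype.1, hptype.2⟩
    have hvu2 : v < u + 2*Real.pi := by
      rcases min_choice r p with h | h <;> rcases max_choice r p with h' | h' <;>
        rw [hu, hv, h, h'] <;>
        first
          | linarith [hr.1, hr.2, hp_mem.1, hp_mem.2]
          | linarith [hr.1, hr.2, hp_mem.1, hp_mem.2]
    have hu2A : φ (u + 2*Real.pi) = 0 ∧ a < Real.sin (u + 2*Real.pi) ∧
        Real.cos (u + 2*Real.pi) < -(b/c) := by
      rw [hφper, Real.sin_add_two_pi, Real.cos_add_two_pi]
      exact huA
    obtain ⟨w₁, hw₁mem, hw₁0, hw₁s, hw₁c⟩ := betweenA u v huv huA.1 hvA.1 huA.2.1 hvA.2.1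
    obtain ⟨w₂, hw₂mem, hw₂0, hw₂s, hw₂c⟩ :=
      betweenA v (u + 2*Real.pi) hvu2 hvA.1 hu2A.1 hvA.2.1 hu2A.2.1
    obtain ⟨k₁, hk₁⟩ := abel_memA a b c ha0 ha1 hc hb0 hb u huA.2.1 huA.2.2
    obtain ⟨k₃, hk₃⟩ := abel_memA a b c ha0 ha1 hc hb0 hb v hvA.2.1 hvA.2.2
    obtain ⟨k₂, hk₂⟩ := abel_memB a b c ha0 ha1 hc hb0 hb w₁ hw₁s hw₁c
    obtain ⟨k₄, hk₄⟩ := abel_memB a b c ha0 ha1 hc hb0 hb w₂ hw₂s hw₂c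
    exact abel_circ (2*Real.pi) h2π x₃ x₂ (2*Real.pi - x₃) (2*Real.pi + x₁)
      harc1 harc2 u w₁ v w₂ k₁ k₂ k₃ k₄ hk₁ hk₂ hk₃ hk₄
      hw₁mem.1 hw₁mem.2 hw₂mem.1 hw₂mem.2
  · -- r type B; q type B
    set u := min r q with hu
    set v := max r q with hv
    have huv : u < v := min_lt_max.2 hrq
    have huB : φ u = 0 ∧ Real.sin u < a ∧ -(b/c) < Real.cos u := by
      rcases min_choice r q with h | h <;> rw [hu, h]
      · exact ⟨hφr, hr1, hr3⟩
      · exact ⟨hφq, hqtype.1, hqtype.2⟩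
    have hvB : φ v = 0 ∧ Real.sin v < a ∧ -(b/c) < Real.cos v := by
      rcases max_choice r q with h | h <;> rw [hv, h]
      · exact ⟨hφr, hr1, hr3⟩
      · exact ⟨hφq, hqtype.1, hqtype.2⟩
    have hvu2 : v < u + 2*Real.pi := by
      rcases min_choice r q with h | h <;> rcases max_choice r q with h' | h' <;>
        rw [hu, hv, h, h'] <;> linarith [hr.1, hr.2, hq_mem.1, hq_mem.2]
    have hu2B : φ (u + 2*Real.pi) = 0 ∧ Real.sin (u + 2*Real.pi) < a ∧
        -(b/c) < Real.cos (u + 2*Real.pi) := by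
      rw [hφper, Real.sin_add_two_pi, Real.cos_add_two_pi]
      exact huB
    obtain ⟨w₁, hw₁mem, hw₁0, hw₁s, hw₁c⟩ := betweenB u v huv huB.1 hvB.1 huB.2.1 hvB.2.1
    obtain ⟨w₂, hw₂mem, hw₂0, hw₂s, hw₂c⟩ :=
      betweenB v (u + 2*Real.pi) hvu2 hvB.1 hu2B.1 hvB.2.1 hu2B.2.1
    obtain ⟨k₁, hk₁⟩ := abel_memB a b c ha0 ha1 hc hb0 hb u huB.2.1 huB.2.2
    obtain ⟨k₃, hk₃⟩ := abel_memB a b c ha0 ha1 hc hb0 hb v hvB.2.1 hvB.2.2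
    obtain ⟨k₂', hk₂'⟩ := abel_memA a b c ha0 ha1 hc hb0 hb w₁ hw₁s hw₁c
    obtain ⟨k₄', hk₄'⟩ := abel_memA a b c ha0 ha1 hc hb0 hb w₂ hw₂s hw₂c
    have hk₂ : w₁ - ((k₂' - 1 : ℤ) : ℝ) * (2*Real.pi) ∈
        Set.Ioo (2*Real.pi + x₃) (2*Real.pi + x₂) := by
      obtain ⟨hl, hr'⟩ := hk₂'
      constructor <;> push_cast <;> [linarith; linarith]
    have hk₄ : w₂ - ((k₄' - 1 : ℤ) : ℝ) * (2*Real.pi) ∈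
        Set.Ioo (2*Real.pi + x₃) (2*Real.pi + x₂) := by
      obtain ⟨hl, hr'⟩ := hk₄'
      constructor <;> push_cast <;> [linarith; linarith]
    exact abel_circ (2*Real.pi) h2π (2*Real.pi - x₃) (2*Real.pi + x₁)
      (2*Real.pi + x₃) (2*Real.pi + x₂) harc3 harc4
      u w₁ v w₂ k₁ (k₂' - 1) k₃ (k₄' - 1) hk₁ hk₂ hk₃ hk₄
      hw₁mem.1 hw₁mem.2 hw₂mem.1 hw₂mem.2
end main
end

section
/- Let a = b = 0 and c > 0. Then the Abel equation y′(x) = c·cos x·y(x)² + sin x·y(x)³ has no 2π-periodic solution y with y(x) ≠ 0 for all x. -/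
open Real

private lemma abel_aux_pos (z : ℝ → ℝ) (hz : Continuous z) (hpos : ∀ x, 0 < z x) :
    0 < ∫ x in (0:ℝ)..(2*Real.pi), Real.sin x ^ 2 * z x := by
  have hint : ∀ a b : ℝ,
      IntervalIntegrable (fun x => Real.sin x ^ 2 * z x) MeasureTheory.volume a b :=
    fun a b => (((Real.continuous_sin.pow 2)).mul hz).intervalIntegrable a b
  rw [← intervalIntegral.integral_add_adjacent_intervals (hint 0 Real.pi)
      (hint Real.pi (2*Real.pi))]
  have h1 : 0 < ∫ x in (0:ℝ)..Real.pi, Real.sin x ^ 2 * z x := by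
    apply intervalIntegral.intervalIntegral_pos_of_pos_on (hint 0 Real.pi)
    · intro x hx
      exact mul_pos (pow_pos (Real.sin_pos_of_pos_of_lt_pi hx.1 hx.2) 2) (hpos x)
    · exact Real.pi_pos
  have h2 : 0 ≤ ∫ x in Real.pi..(2*Real.pi), Real.sin x ^ 2 * z x := by
    apply intervalIntegral.integral_nonneg
    · linarith [Real.pi_pos]
    · intro x _; exact mul_nonneg (sq_nonneg _) (hpos x).le
  linarith

/-- For `a = b = 0` and `c > 0`, the Abel equation
`y′ = c·cos x·y² + sin x·y³` has no nowhere-vanishing 2π-periodic solution. -/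
theorem abel_no_periodic_solution_a_b_zero (c : ℝ) (hc : 0 < c) :
    ¬ ∃ y : ℝ → ℝ,
      (∀ x : ℝ, HasDerivAt y
        (c * Real.cos x * (y x) ^ 2 + Real.sin x * (y x) ^ 3) x) ∧
      (∀ x : ℝ, y (x + 2 * Real.pi) = y x) ∧
      (∀ x : ℝ, y x ≠ 0) := by
  rintro ⟨y, hy, hper, hne⟩
  have hcont : Continuous y := by
    rw [continuous_iff_continuousAt]
    exact fun x => (hy x).differentiableAt.continuousAt
  have hinv : Continuous fun x => (y x)⁻¹ := hcont.inv₀ hne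
  -- derivative of -(1/2) * (y^2)⁻¹
  have hg : ∀ x, HasDerivAt (fun x => -(1/2) * ((y x)^2)⁻¹)
      (c * Real.cos x * (y x)⁻¹ + Real.sin x) x := by
    intro x
    have h1 : HasDerivAt (fun x => (y x)^2)
        ((2:ℕ) * y x ^ 1 * (c * Real.cos x * (y x) ^ 2 + Real.sin x * (y x) ^ 3)) x :=
      (hy x).pow 2
    have h2 := (h1.inv (pow_ne_zero 2 (hne x))).const_mul (-(1/2) : ℝ)
    refine h2.congr_deriv ?_
    have := hne x
    field_simp
    ring
  -- derivative of sin x * (y x)⁻¹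
  have hh : ∀ x, HasDerivAt (fun x => Real.sin x * (y x)⁻¹)
      (Real.cos x * (y x)⁻¹ - c * (Real.sin x * Real.cos x) - Real.sin x ^ 2 * y x) x := by
    intro x
    have h2 := (Real.hasDerivAt_sin x).mul ((hy x).inv (hne x))
    refine h2.congr_deriv ?_
    have := hne x
    simp only [Pi.inv_apply]
    field_simp
    ring
  have hy2pi : y (2 * Real.pi) = y 0 := by simpa using hper 0
  -- integrability facts
  have hic : IntervalIntegrable (fun x => Real.cos x * (y x)⁻¹) MeasureTheory.volume 0 (2*Real.pi) :=
    (Real.continuous_cos.mul hinv).intervalIntegrable _ _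
  have his : IntervalIntegrable (fun x => Real.sin x) MeasureTheory.volume 0 (2*Real.pi) :=
    Real.continuous_sin.intervalIntegrable _ _
  have hisc : IntervalIntegrable (fun x => c * (Real.sin x * Real.cos x))
      MeasureTheory.volume 0 (2*Real.pi) :=
    (continuous_const.mul (Real.continuous_sin.mul Real.continuous_cos)).intervalIntegrable _ _
  have hiy : IntervalIntegrable (fun x => Real.sin x ^ 2 * y x)
      MeasureTheory.volume 0 (2*Real.pi) :=
    ((Real.continuous_sin.pow 2).mul hcont).intervalIntegrable _ _
  -- ∫ sin = 0
  have Isin : (∫ x in (0:ℝ)..(2*Real.pi), Real.sin x) = 0 := by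
    simp [integral_sin, Real.cos_two_pi]
  -- ∫ sin·cos = 0
  have Isc : (∫ x in (0:ℝ)..(2*Real.pi), Real.sin x * Real.cos x) = 0 := by
    have hk : ∀ x : ℝ, HasDerivAt (fun x => Real.sin x ^ 2 / 2) (Real.sin x * Real.cos x) x := by
      intro x
      have := ((Real.hasDerivAt_sin x).pow 2).div_const 2
      refine this.congr_deriv ?_
      ring
    have := intervalIntegral.integral_eq_sub_of_hasDerivAt (fun x _ => hk x)
      ((Real.continuous_sin.mul Real.continuous_cos).intervalIntegrable 0 (2*Real.pi))
    rw [this]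
    simp [Real.sin_two_pi]
  -- Eq1: c * ∫ cos/y + ∫ sin = 0
  have Eq1 : (∫ x in (0:ℝ)..(2*Real.pi),
      (c * Real.cos x * (y x)⁻¹ + Real.sin x)) = 0 := by
    have := intervalIntegral.integral_eq_sub_of_hasDerivAt (fun x _ => hg x)
      ((((continuous_const.mul Real.continuous_cos).mul hinv).add
        Real.continuous_sin).intervalIntegrable 0 (2*Real.pi)) (a := 0) (b := 2*Real.pi)
    rw [this, hy2pi]; ring
  have hA : (∫ x in (0:ℝ)..(2*Real.pi), Real.cos x * (y x)⁻¹) = 0 := by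
    have hsplit : (∫ x in (0:ℝ)..(2*Real.pi), (c * Real.cos x * (y x)⁻¹ + Real.sin x))
        = c * (∫ x in (0:ℝ)..(2*Real.pi), Real.cos x * (y x)⁻¹)
          + ∫ x in (0:ℝ)..(2*Real.pi), Real.sin x := by
      rw [← intervalIntegral.integral_const_mul]
      rw [← intervalIntegral.integral_add (hic.const_mul c) his]
      congr 1; ext x; ring
    rw [hsplit, Isin] at Eq1
    have : c * (∫ x in (0:ℝ)..(2*Real.pi), Real.cos x * (y x)⁻¹) = 0 := by linarith
    exact (mul_eq_zero.1 this).resolve_left (ne_of_gt hc)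
  -- Eq2: ∫ cos/y - c∫sin·cos - ∫ sin² y = 0
  have Eq2 : (∫ x in (0:ℝ)..(2*Real.pi),
      (Real.cos x * (y x)⁻¹ - c * (Real.sin x * Real.cos x) - Real.sin x ^ 2 * y x)) = 0 := by
    have := intervalIntegral.integral_eq_sub_of_hasDerivAt (fun x _ => hh x)
      ((((Real.continuous_cos.mul hinv).sub
        (continuous_const.mul (Real.continuous_sin.mul Real.continuous_cos))).sub
        ((Real.continuous_sin.pow 2).mul hcont)).intervalIntegrable 0 (2*Real.pi))
      (a := 0) (b := 2*Real.pi)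
    rw [this]
    simp [Real.sin_two_pi]
  have hB : (∫ x in (0:ℝ)..(2*Real.pi), Real.sin x ^ 2 * y x) = 0 := by
    have hsplit : (∫ x in (0:ℝ)..(2*Real.pi),
        (Real.cos x * (y x)⁻¹ - c * (Real.sin x * Real.cos x) - Real.sin x ^ 2 * y x))
        = (∫ x in (0:ℝ)..(2*Real.pi), Real.cos x * (y x)⁻¹)
          - c * (∫ x in (0:ℝ)..(2*Real.pi), Real.sin x * Real.cos x)
          - ∫ x in (0:ℝ)..(2*Real.pi), Real.sin x ^ 2 * y x := by
      rw [← intervalIntegral.integral_const_mul,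
        intervalIntegral.integral_sub (hic.sub hisc) hiy,
        intervalIntegral.integral_sub hic hisc]
    rw [hsplit, hA, Isc] at Eq2
    linarith
  -- constant sign
  rcases lt_or_gt_of_ne (hne 0) with h0 | h0
  · -- y 0 < 0 : then ∀ x, y x < 0
    have key : ∀ x, 0 < -y x := by
      intro x
      by_contra h
      push_neg at h
      have hx : 0 < y x := lt_of_le_of_ne (by linarith) (Ne.symm (hne x))
      have hsub := intermediate_value_uIcc (a := 0) (b := x) hcont.continuousOn
      have h0m : (0:ℝ) ∈ Set.uIcc (y 0) (y x) := Set.mem_uIcc.2 (Or.inl ⟨h0.le, hx.le⟩)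
      obtain ⟨t, _, ht⟩ := hsub h0m
      exact hne t ht
    have := abel_aux_pos (fun x => -y x) hcont.neg key
    rw [show (∫ x in (0:ℝ)..(2*Real.pi), Real.sin x ^ 2 * (-y x))
        = -(∫ x in (0:ℝ)..(2*Real.pi), Real.sin x ^ 2 * y x) by
      rw [← intervalIntegral.integral_neg]; congr 1; ext x; ring] at this
    rw [hB] at this
    simp at this
  · -- y 0 > 0
    have key : ∀ x, 0 < y x := by
      intro x
      by_contra h
      push_neg at h
      have hx : y x < 0 := lt_of_le_of_ne h (hne x)
      have hsub := intermediate_value_uIcc (a := 0) (b := x) hcont.continuousOn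
      have h0m : (0:ℝ) ∈ Set.uIcc (y 0) (y x) := Set.mem_uIcc.2 (Or.inr ⟨hx.le, h0.le⟩)
      obtain ⟨t, _, ht⟩ := hsub h0m
      exact hne t ht
    have := abel_aux_pos y hcont key
    rw [hB] at this
    exact lt_irrefl 0 this
end

section
/- Let 0 < a < 1, b = 0 and c > 0. Then the Abel equation y′(x) = c·cos x·y(x)² + (sin x − a)·y(x)³ has at most one 2π-periodic solution y with y(x) > 0 for all x. -/
/-!
For two positive solutions the difference `w = 1/y₁ - 1/y₂` solves the linear equation
`w' = (sin x - a) y₁ y₂ w`, so `w = w 0 · exp (∫ (sin - a) y₁ y₂)`. Differentiating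
`-1/(2y²)` along a periodic solution gives `∫₀^{2π} (c cos x / y + sin x - a) = 0`, hence
`∫₀^{2π} cos · w = 0`. Integrating `(sin · w)'` and `w'` over a period then yields
`∫₀^{2π} (sin - a) w' = 0`, that is `w 0 · ∫₀^{2π} (sin - a)² y₁ y₂ exp (…) = 0`.
The last integral is positive, so `w 0 = 0` and `w ≡ 0`.
-/

open Real intervalIntegral

theorem eq_mul_exp_integral_of_hasDerivAt {g w : ℝ → ℝ} (hg : Continuous g)
    (hw : ∀ x, HasDerivAt w (g x * w x) x) (x : ℝ) :
    w x = w 0 * exp (∫ t in (0)..x, g t) := by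
  set G : ℝ → ℝ := fun x => ∫ t in (0)..x, g t
  have hG : ∀ x, HasDerivAt G (g x) x := fun x =>
    (hg.integral_hasStrictDerivAt 0 x).hasDerivAt
  have hderiv : ∀ u, HasDerivAt (fun x => w x * exp (-G x)) 0 u := fun u =>
    ((hw u).mul (hG u).neg.exp).congr_deriv (by ring)
  have hconst : w x * exp (-G x) = w 0 :=
    (is_const_of_deriv_eq_zero (fun u => (hderiv u).differentiableAt)
      (fun u => (hderiv u).deriv) x 0).trans (by simp [G])
  rw [← hconst, mul_assoc, ← exp_add, neg_add_cancel, exp_zero, mul_one]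

def IsAbelSolution (A B y : ℝ → ℝ) : Prop :=
  ∀ x, HasDerivAt y (A x * y x ^ 2 + B x * y x ^ 3) x

namespace IsAbelSolution

variable {A B y y₁ y₂ : ℝ → ℝ} {x T : ℝ}

theorem continuous (hy : IsAbelSolution A B y) : Continuous y :=
  continuous_iff_continuousAt.2 fun x => (hy x).continuousAt

theorem hasDerivAt_neg_inv_sq_div_two (hy : IsAbelSolution A B y) (hx : y x ≠ 0) :
    HasDerivAt (fun x => -(y x ^ 2)⁻¹ / 2) (A x * (y x)⁻¹ + B x) x := by
  have hsq := ((hy x).pow 2).inv (pow_ne_zero 2 hx)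
  refine (hsq.neg.div_const 2).congr_deriv ?_
  simp only [Pi.pow_apply]
  field_simp
  ring

theorem integral_mul_inv_add_eq_zero (hy : IsAbelSolution A B y) (hA : Continuous A)
    (hB : Continuous B) (hy0 : ∀ x, y x ≠ 0) (hper : Function.Periodic y T) :
    ∫ x in (0)..T, (A x * (y x)⁻¹ + B x) = 0 := by
  have hcont : Continuous fun x => A x * (y x)⁻¹ + B x :=
    (hA.mul (hy.continuous.inv₀ hy0)).add hB
  rw [integral_eq_sub_of_hasDerivAt (fun x _ => hy.hasDerivAt_neg_inv_sq_div_two (hy0 x))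
    (hcont.intervalIntegrable _ _)]
  simp [← hper 0]

theorem integral_mul_inv_sub_inv_eq_zero (h₁ : IsAbelSolution A B y₁)
    (h₂ : IsAbelSolution A B y₂) (hA : Continuous A) (hB : Continuous B)
    (hy₁ : ∀ x, y₁ x ≠ 0) (hy₂ : ∀ x, y₂ x ≠ 0) (hper₁ : Function.Periodic y₁ T)
    (hper₂ : Function.Periodic y₂ T) :
    ∫ x in (0)..T, A x * ((y₁ x)⁻¹ - (y₂ x)⁻¹) = 0 := by
  have hint : ∀ {y : ℝ → ℝ}, Continuous y → (∀ x, y x ≠ 0) →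
      IntervalIntegrable (fun x => A x * (y x)⁻¹ + B x) MeasureTheory.volume 0 T := fun hy hy0 =>
    ((hA.mul (hy.inv₀ hy0)).add hB).intervalIntegrable _ _
  calc ∫ x in (0)..T, A x * ((y₁ x)⁻¹ - (y₂ x)⁻¹)
      = (∫ x in (0)..T, (A x * (y₁ x)⁻¹ + B x))
          - ∫ x in (0)..T, (A x * (y₂ x)⁻¹ + B x) := by
        rw [← integral_sub (hint h₁.continuous hy₁) (hint h₂.continuous hy₂)]
        congr 1 with x
        ring
    _ = 0 := by
        rw [h₁.integral_mul_inv_add_eq_zero hA hB hy₁ hper₁,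
          h₂.integral_mul_inv_add_eq_zero hA hB hy₂ hper₂, sub_self]

theorem hasDerivAt_inv_sub_inv (h₁ : IsAbelSolution A B y₁) (h₂ : IsAbelSolution A B y₂)
    (hx₁ : y₁ x ≠ 0) (hx₂ : y₂ x ≠ 0) :
    HasDerivAt (fun x => (y₁ x)⁻¹ - (y₂ x)⁻¹)
      (B x * (y₁ x * y₂ x) * ((y₁ x)⁻¹ - (y₂ x)⁻¹)) x := by
  refine ((h₁ x).inv hx₁ |>.sub ((h₂ x).inv hx₂)).congr_deriv ?_
  field_simp
  ring

end IsAbelSolution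

theorem integral_sin_sub_mul_deriv_eq_zero {w w' : ℝ → ℝ} (a : ℝ)
    (hw : ∀ x, HasDerivAt w (w' x) x) (hw' : Continuous w') (hper : w (2 * π) = w 0)
    (hcos : ∫ x in (0)..2 * π, cos x * w x = 0) :
    ∫ x in (0)..2 * π, (sin x - a) * w' x = 0 := by
  have hwc : Continuous w := continuous_iff_continuousAt.2 fun x => (hw x).continuousAt
  have hF : ∀ x, HasDerivAt (fun x => sin x * w x - a * w x)
      (cos x * w x + (sin x - a) * w' x) x := fun x =>
    (((hasDerivAt_sin x).mul (hw x)).sub ((hw x).const_mul a)).congr_deriv (by ring)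
  have hFT := integral_eq_sub_of_hasDerivAt (fun x _ => hF x)
    (((continuous_cos.mul hwc).add ((continuous_sin.sub continuous_const).mul hw'))
      |>.intervalIntegrable 0 (2 * π))
  rw [integral_add (f := fun x => cos x * w x) (g := fun x => (sin x - a) * w' x)
    ((continuous_cos.mul hwc).intervalIntegrable _ _)
    (((continuous_sin.sub continuous_const).mul hw').intervalIntegrable _ _), hcos] at hFT
  simpa [hper] using hFT

theorem integral_sin_sub_sq_mul_pos {h : ℝ → ℝ} (a : ℝ) (hh : Continuous h)
    (hpos : ∀ x, 0 < h x) : 0 < ∫ x in (0)..2 * π, (sin x - a) ^ 2 * h x := by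
  have hsin : ∃ x ∈ Set.Icc 0 (2 * π), sin x ≠ a := by
    by_cases ha : a = 0
    · exact ⟨π / 2, ⟨by positivity, by linarith [pi_pos]⟩, by simp [ha]⟩
    · exact ⟨0, ⟨le_rfl, two_pi_pos.le⟩, by simpa using Ne.symm ha⟩
  obtain ⟨x, hx, hxa⟩ := hsin
  refine integral_pos two_pi_pos
    (((continuous_sin.sub continuous_const).pow 2).mul hh).continuousOn
    (fun x _ => mul_nonneg (sq_nonneg _) (hpos x).le) ⟨x, hx, ?_⟩
  exact mul_pos (pow_two_pos_of_ne_zero (sub_ne_zero.2 hxa)) (hpos x)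

theorem eq_zero_of_integral_cos_mul_eq_zero {h w : ℝ → ℝ} (a : ℝ) (hh : Continuous h)
    (hpos : ∀ x, 0 < h x) (hw : ∀ x, HasDerivAt w ((sin x - a) * h x * w x) x)
    (hper : w (2 * π) = w 0) (hcos : ∫ x in (0)..2 * π, cos x * w x = 0) : w = 0 := by
  set g : ℝ → ℝ := fun x => (sin x - a) * h x
  have hg : Continuous g := (continuous_sin.sub continuous_const).mul hh
  have hw_exp := eq_mul_exp_integral_of_hasDerivAt hg hw
  have hG : Continuous fun x => ∫ t in (0)..x, g t :=
    continuous_iff_continuousAt.2 fun x =>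
      (hg.integral_hasStrictDerivAt 0 x).hasDerivAt.continuousAt
  have hzero := integral_sin_sub_mul_deriv_eq_zero a hw
    (hg.mul (continuous_iff_continuousAt.2 fun x => (hw x).continuousAt)) hper hcos
  have hfactor : w 0 * ∫ x in (0)..2 * π,
      (sin x - a) ^ 2 * (h x * exp (∫ t in (0)..x, g t)) = 0 := by
    refine (integral_const_mul _ _).symm.trans (Eq.trans ?_ hzero)
    congr 1 with x
    rw [hw_exp x]
    ring
  have hw₀ : w 0 = 0 := (mul_eq_zero.1 hfactor).resolve_right (integral_sin_sub_sq_mul_pos a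
    (hh.mul (continuous_exp.comp hG)) fun x => mul_pos (hpos x) (exp_pos _)).ne'
  funext x
  rw [hw_exp x, hw₀, zero_mul, Pi.zero_apply]

theorem abel_at_most_one_positive_periodic_solution_general
    (a c : ℝ) (hc : 0 < c)
    (y₁ y₂ : ℝ → ℝ)
    (hsol₁ : ∀ x : ℝ, HasDerivAt y₁
      (c * Real.cos x * (y₁ x) ^ 2 + (Real.sin x - a) * (y₁ x) ^ 3) x)
    (hper₁ : ∀ x : ℝ, y₁ (x + 2 * Real.pi) = y₁ x)
    (hpos₁ : ∀ x : ℝ, 0 < y₁ x)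
    (hsol₂ : ∀ x : ℝ, HasDerivAt y₂
      (c * Real.cos x * (y₂ x) ^ 2 + (Real.sin x - a) * (y₂ x) ^ 3) x)
    (hper₂ : ∀ x : ℝ, y₂ (x + 2 * Real.pi) = y₂ x)
    (hpos₂ : ∀ x : ℝ, 0 < y₂ x) :
    y₁ = y₂ := by
  have h₁ : IsAbelSolution (fun x => c * cos x) (fun x => sin x - a) y₁ := hsol₁
  have h₂ : IsAbelSolution (fun x => c * cos x) (fun x => sin x - a) y₂ := hsol₂
  have hcos : ∫ x in (0)..2 * π, cos x * ((y₁ x)⁻¹ - (y₂ x)⁻¹) = 0 := by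
    have := h₁.integral_mul_inv_sub_inv_eq_zero h₂ (continuous_const.mul continuous_cos)
      (continuous_sin.sub continuous_const) (fun x => (hpos₁ x).ne') (fun x => (hpos₂ x).ne')
      hper₁ hper₂
    simp only [mul_assoc, integral_const_mul] at this
    exact (mul_eq_zero.1 this).resolve_left hc.ne'
  have hw := eq_zero_of_integral_cos_mul_eq_zero a (h₁.continuous.mul h₂.continuous)
    (fun x => mul_pos (hpos₁ x) (hpos₂ x))
    (fun x => h₁.hasDerivAt_inv_sub_inv h₂ (hpos₁ x).ne' (hpos₂ x).ne')
    (by simp only [← hper₁ 0, ← hper₂ 0, zero_add]) hcos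
  funext x
  simpa [sub_eq_zero] using congrFun hw x

/-- For `0 < a < 1`, `b = 0`, `c > 0`, the Abel equation
`y′ = c·cos x·y² + (sin x − a)·y³` has at most one everywhere-positive
2π-periodic solution. -/
theorem abel_at_most_one_positive_periodic_solution
    (a c : ℝ) (ha0 : 0 < a) (ha1 : a < 1) (hc : 0 < c)
    (y₁ y₂ : ℝ → ℝ)
    (hsol₁ : ∀ x : ℝ, HasDerivAt y₁
      (c * Real.cos x * (y₁ x) ^ 2 + (Real.sin x - a) * (y₁ x) ^ 3) x)
    (hper₁ : ∀ x : ℝ, y₁ (x + 2 * Real.pi) = y₁ x)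
    (hpos₁ : ∀ x : ℝ, 0 < y₁ x)
    (hsol₂ : ∀ x : ℝ, HasDerivAt y₂
      (c * Real.cos x * (y₂ x) ^ 2 + (Real.sin x - a) * (y₂ x) ^ 3) x)
    (hper₂ : ∀ x : ℝ, y₂ (x + 2 * Real.pi) = y₂ x)
    (hpos₂ : ∀ x : ℝ, 0 < y₂ x) :
    y₁ = y₂ :=
  abel_at_most_one_positive_periodic_solution_general a c hc y₁ y₂ hsol₁ hper₁ hpos₁ hsol₂ hper₂
    hpos₂
end

section
/- Let 0 < a < 1, b = 0 and c > 0. Then the Abel equation y′(x) = c·cos x·y(x)² + (sin x − a)·y(x)³ has no 2π-periodic solution y with y(x) < 0 for all x. -/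
open Real

/-- For `0 < a < 1`, `b = 0`, `c > 0`, the Abel equation
`y′ = c·cos x·y² + (sin x − a)·y³` has no everywhere-negative
2π-periodic solution. -/
theorem abel_no_negative_periodic_solution_b_zero
    (a c : ℝ) (ha0 : 0 < a) (ha1 : a < 1) (hc : 0 < c) :
    ¬ ∃ y : ℝ → ℝ,
      (∀ x : ℝ, HasDerivAt y
        (c * Real.cos x * (y x) ^ 2 + (Real.sin x - a) * (y x) ^ 3) x) ∧
      (∀ x : ℝ, y (x + 2 * Real.pi) = y x) ∧
      (∀ x : ℝ, y x < 0) := by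
  rintro ⟨y, hderiv, hper, hneg⟩
  have hy0 : ∀ x, y x ≠ 0 := fun x => (hneg x).ne
  have hcy : Continuous y :=
    continuous_iff_continuousAt.mpr fun x => (hderiv x).continuousAt
  have hinv : Continuous fun x => (y x)⁻¹ := hcy.inv₀ hy0
  have hy2π : y (2 * π) = y 0 := by simpa using hper 0
  have hπ : (0:ℝ) < π := Real.pi_pos
  -- helper: FTC + periodicity gives zero integral
  have key : ∀ (F f : ℝ → ℝ), (∀ x, HasDerivAt F (f x) x) → Continuous f →
      F (2 * π) = F 0 → (∫ x in (0:ℝ)..(2*π), f x) = 0 := by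
    intro F f hF hf hFper
    rw [intervalIntegral.integral_eq_sub_of_hasDerivAt (fun x _ => hF x)
      (hf.intervalIntegrable _ _), hFper, sub_self]
  -- identity 1 : ∫ (c cos x + (sin x - a) * y x) = 0
  have h1 : (∫ x in (0:ℝ)..(2*π), (c * Real.cos x + (Real.sin x - a) * y x)) = 0 := by
    apply key (fun x => -(y x)⁻¹)
    · intro x
      have h : HasDerivAt (fun x => -(y x)⁻¹) _ x := ((hderiv x).inv (hy0 x)).neg
      convert h using 1
      field_simp [hy0 x]
    · exact (continuous_const.mul Real.continuous_cos).add
        ((Real.continuous_sin.sub continuous_const).mul hcy)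
    · rw [hy2π]
  -- identity 2 : ∫ (c cos x * (y x)⁻¹ + (sin x - a)) = 0
  have h2 : (∫ x in (0:ℝ)..(2*π), (c * Real.cos x * (y x)⁻¹ + (Real.sin x - a))) = 0 := by
    apply key (fun x => -(1/2) * ((y x)^2)⁻¹)
    · intro x
      have h : HasDerivAt (fun x => -(1/2) * ((y x)^2)⁻¹) _ x := (((hderiv x).pow 2).inv (pow_ne_zero 2 (hy0 x))).const_mul (-(1/2) : ℝ)
      convert h using 1
      field_simp [hy0 x]
      simp only [Pi.pow_apply]
      ring
    · exact ((continuous_const.mul Real.continuous_cos).mul hinv).add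
        (Real.continuous_sin.sub continuous_const)
    · simp [hy2π]
  -- identity 3 : ∫ (cos x * (y x)⁻¹ - sin x * (c cos x + (sin x - a) y x)) = 0
  have h3 : (∫ x in (0:ℝ)..(2*π),
      (Real.cos x * (y x)⁻¹ - Real.sin x * (c * Real.cos x + (Real.sin x - a) * y x))) = 0 := by
    apply key (fun x => Real.sin x * (y x)⁻¹)
    · intro x
      have h : HasDerivAt (fun x => Real.sin x * (y x)⁻¹) _ x := (Real.hasDerivAt_sin x).mul ((hderiv x).inv (hy0 x))
      convert h using 1
      field_simp [hy0 x]
      ring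
    · exact (Real.continuous_cos.mul hinv).sub (Real.continuous_sin.mul
        ((continuous_const.mul Real.continuous_cos).add
          ((Real.continuous_sin.sub continuous_const).mul hcy)))
    · simp [Real.sin_two_pi]
  -- identity 4 : ∫ sin x * cos x = 0
  have h4 : (∫ x in (0:ℝ)..(2*π), Real.sin x * Real.cos x) = 0 := by
    apply key (fun x => Real.sin x ^ 2 / 2)
    · intro x
      have h : HasDerivAt (fun x => Real.sin x ^ 2 / 2) _ x := ((Real.hasDerivAt_sin x).pow 2).div_const 2
      convert h using 1
      ring
    · exact Real.continuous_sin.mul Real.continuous_cos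
    · simp [Real.sin_two_pi]
  -- basic integrals
  have hcos : (∫ x in (0:ℝ)..(2*π), Real.cos x) = 0 := by
    simp [integral_cos, Real.sin_two_pi]
  have hsa : (∫ x in (0:ℝ)..(2*π), (Real.sin x - a)) = -(2 * π * a) := by
    rw [intervalIntegral.integral_sub (Real.continuous_sin.intervalIntegrable _ _)
      (intervalIntegrable_const)]
    simp [integral_sin, Real.cos_two_pi]
  -- integrability facts
  have ic1 : IntervalIntegrable (fun x => Real.cos x * (y x)⁻¹) MeasureTheory.volume 0 (2*π) :=
    (Real.continuous_cos.mul hinv).intervalIntegrable _ _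
  have ic2 : IntervalIntegrable (fun x => (Real.sin x - a) * y x) MeasureTheory.volume 0 (2*π) :=
    ((Real.continuous_sin.sub continuous_const).mul hcy).intervalIntegrable _ _
  have ic3 : IntervalIntegrable (fun x => Real.sin x * ((Real.sin x - a) * y x))
      MeasureTheory.volume 0 (2*π) :=
    (Real.continuous_sin.mul ((Real.continuous_sin.sub continuous_const).mul hcy)).intervalIntegrable _ _
  have ic4 : IntervalIntegrable (fun x => Real.sin x * Real.cos x) MeasureTheory.volume 0 (2*π) :=
    (Real.continuous_sin.mul Real.continuous_cos).intervalIntegrable _ _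
  have ic5 : IntervalIntegrable (fun x => (Real.sin x - a)^2 * y x) MeasureTheory.volume 0 (2*π) :=
    (((Real.continuous_sin.sub continuous_const).pow 2).mul hcy).intervalIntegrable _ _
  have ic4c : IntervalIntegrable (fun x => c * (Real.sin x * Real.cos x)) MeasureTheory.volume 0 (2*π) :=
    (continuous_const.mul (Real.continuous_sin.mul Real.continuous_cos)).intervalIntegrable _ _
  have ic2a : IntervalIntegrable (fun x => a * ((Real.sin x - a) * y x)) MeasureTheory.volume 0 (2*π) :=
    (continuous_const.mul ((Real.continuous_sin.sub continuous_const).mul hcy)).intervalIntegrable _ _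
  -- I1 = 0
  have hI1 : (∫ x in (0:ℝ)..(2*π), (Real.sin x - a) * y x) = 0 := by
    have := h1
    rw [intervalIntegral.integral_add (f := fun x => c * Real.cos x) ((continuous_const.mul Real.continuous_cos).intervalIntegrable _ _) ic2,
      intervalIntegral.integral_const_mul, hcos] at this
    linarith
  -- c * I = 2πa
  have hI : (∫ x in (0:ℝ)..(2*π), Real.cos x * (y x)⁻¹) = 2 * π * a / c := by
    have := h2
    rw [intervalIntegral.integral_add (f := fun x => c * Real.cos x * (y x)⁻¹) (g := fun x => Real.sin x - a) (((continuous_const.mul Real.continuous_cos).mul hinv).intervalIntegrable _ _)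
      ((Real.continuous_sin.sub continuous_const).intervalIntegrable _ _), hsa] at this
    have h5 : (∫ x in (0:ℝ)..(2*π), c * Real.cos x * (y x)⁻¹)
        = c * ∫ x in (0:ℝ)..(2*π), Real.cos x * (y x)⁻¹ := by
      rw [← intervalIntegral.integral_const_mul]
      congr 1 with x
      ring
    rw [h5] at this
    rw [eq_div_iff hc.ne']
    linarith
  -- I = I2
  have hII2 : (∫ x in (0:ℝ)..(2*π), Real.cos x * (y x)⁻¹)
      = ∫ x in (0:ℝ)..(2*π), Real.sin x * ((Real.sin x - a) * y x) := by
    have := h3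
    have hrw : (fun x => Real.cos x * (y x)⁻¹
        - Real.sin x * (c * Real.cos x + (Real.sin x - a) * y x))
        = fun x => Real.cos x * (y x)⁻¹
          - (c * (Real.sin x * Real.cos x) + Real.sin x * ((Real.sin x - a) * y x)) := by
      funext x; ring
    rw [hrw, intervalIntegral.integral_sub ic1
      ((ic4c).add ic3),
      intervalIntegral.integral_add (ic4c) ic3,
      intervalIntegral.integral_const_mul, h4] at this
    linarith
  -- I2 = ∫ (sin-a)² y ≤ 0
  have hI2 : (∫ x in (0:ℝ)..(2*π), Real.sin x * ((Real.sin x - a) * y x)) ≤ 0 := by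
    have hrw : (fun x => Real.sin x * ((Real.sin x - a) * y x))
        = fun x => (Real.sin x - a)^2 * y x + a * ((Real.sin x - a) * y x) := by
      funext x; ring
    rw [hrw, intervalIntegral.integral_add ic5 (ic2a),
      intervalIntegral.integral_const_mul, hI1, mul_zero, add_zero]
    have hnn : 0 ≤ ∫ x in (0:ℝ)..(2*π), -((Real.sin x - a)^2 * y x) := by
      apply intervalIntegral.integral_nonneg (by positivity)
      intro x _
      nlinarith [hneg x, sq_nonneg (Real.sin x - a)]
    rw [intervalIntegral.integral_neg] at hnn
    linarith
  rw [hI] at hII2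
  have : (0:ℝ) < 2 * π * a / c := by positivity
  linarith
end

section
/- Let 0 < a < 1, c > 0 and 0 < b < c·√(1 − a²). Then the Abel equation (E) has no 2π-periodic solution y with y(x) < 0 for all x. -/
open Real

/-- For `0 < a < 1`, `c > 0` and `0 < b < c·√(1 − a²)`, the Abel equation
`y′ = (b + c·cos x)·y² + (sin x − a)·y³` has no everywhere-negative
2π-periodic solution. -/
theorem abel_no_negative_periodic_solution
    (a b c : ℝ) (ha0 : 0 < a) (ha1 : a < 1) (hc : 0 < c)
    (hb0 : 0 < b) (hb : b < c * Real.sqrt (1 - a ^ 2)) :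
    ¬ ∃ y : ℝ → ℝ,
      (∀ x : ℝ, HasDerivAt y
        ((b + c * Real.cos x) * (y x) ^ 2 + (Real.sin x - a) * (y x) ^ 3) x) ∧
      (∀ x : ℝ, y (x + 2 * Real.pi) = y x) ∧
      (∀ x : ℝ, y x < 0) := by
  rintro ⟨y, hy, hper, hneg⟩
  have hyne : ∀ x, y x ≠ 0 := fun x => (hneg x).ne
  have hyc : Continuous y := by
    rw [continuous_iff_continuousAt]; exact fun x => (hy x).continuousAt
  set w : ℝ → ℝ := fun x => -(y x)⁻¹ with hw_def
  have hwpos : ∀ x, 0 < w x := by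
    intro x
    have : (y x)⁻¹ < 0 := inv_lt_zero.mpr (hneg x)
    simp only [hw_def]; linarith
  have hwc : Continuous w := (hyc.inv₀ hyne).neg
  have hwper : w (2*π) = w 0 := by
    simp only [hw_def]
    rw [← zero_add (2*π), hper 0]
  have contA : Continuous fun x => Real.sin x - a := Real.continuous_sin.sub continuous_const
  have contB : Continuous fun x => b + c * Real.cos x :=
    continuous_const.add (continuous_const.mul Real.continuous_cos)
  have hw : ∀ x, HasDerivAt w ((b + c * Real.cos x) + (Real.sin x - a) * y x) x := by
    intro x
    have h1 : HasDerivAt w _ x := ((hy x).inv (hyne x)).neg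
    convert h1 using 1
    rw [neg_div, neg_neg, eq_div_iff (pow_ne_zero 2 (hyne x))]
    ring
  -- first identity
  have hG1 : ∀ x, HasDerivAt (fun x => (w x)^2 / 2)
      ((b + c * Real.cos x) * w x - (Real.sin x - a)) x := by
    intro x
    have h1 : HasDerivAt (fun x => (w x)^2 / 2) _ x := ((hw x).pow 2).div_const 2
    convert h1 using 1
    simp only [hw_def]
    field_simp [hyne x]
    linear_combination (-(-(b * 2) - c * Real.cos x * 2 - y x * Real.sin x * 2 + y x * a * 2)) *
      mul_inv_cancel₀ (hyne x)
  have hint1 : IntervalIntegrable (fun x => (b + c * Real.cos x) * w x - (Real.sin x - a))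
      MeasureTheory.volume 0 (2*π) :=
    ((contB.mul hwc).sub contA).intervalIntegrable _ _
  have key1 : (∫ x in (0:ℝ)..(2*π), ((b + c * Real.cos x) * w x - (Real.sin x - a))) = 0 := by
    rw [intervalIntegral.integral_eq_sub_of_hasDerivAt (fun t _ => hG1 t) hint1]
    rw [hwper]; ring
  -- second identity
  have hG2 : ∀ x, HasDerivAt (fun x => (Real.sin x - a) * w x)
      (Real.cos x * w x + ((Real.sin x - a) * (b + c * Real.cos x)
        + (Real.sin x - a)^2 * y x)) x := by
    intro x
    have h1 : HasDerivAt (fun x => (Real.sin x - a) * w x) _ x :=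
      ((Real.hasDerivAt_sin x).sub_const a).mul (hw x)
    convert h1 using 1
    ring
  have hint2 : IntervalIntegrable (fun x => Real.cos x * w x
      + ((Real.sin x - a) * (b + c * Real.cos x) + (Real.sin x - a)^2 * y x))
      MeasureTheory.volume 0 (2*π) :=
    ((Real.continuous_cos.mul hwc).add ((contA.mul contB).add
      ((contA.pow 2).mul hyc))).intervalIntegrable _ _
  have key2 : (∫ x in (0:ℝ)..(2*π), (Real.cos x * w x
      + ((Real.sin x - a) * (b + c * Real.cos x) + (Real.sin x - a)^2 * y x))) = 0 := by
    rw [intervalIntegral.integral_eq_sub_of_hasDerivAt (fun t _ => hG2 t) hint2]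
    rw [hwper]
    simp [Real.sin_two_pi]
  -- elementary integrals
  have intA : (∫ x in (0:ℝ)..(2*π), (Real.sin x - a)) = -(2*π*a) := by
    rw [intervalIntegral.integral_sub (Real.continuous_sin.intervalIntegrable _ _)
      (intervalIntegrable_const)]
    simp [integral_sin, Real.cos_two_pi]
  have hFder : ∀ u : ℝ, HasDerivAt
      (fun x => -b * Real.cos x - c/2 * (Real.cos x)^2 - a*b*x - a*c*Real.sin x)
      ((Real.sin u - a) * (b + c * Real.cos u)) u := by
    intro u
    have h : HasDerivAt
        (fun x => -b * Real.cos x - c/2 * (Real.cos x)^2 - a*b*x - a*c*Real.sin x) _ u :=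
      ((((Real.hasDerivAt_cos u).const_mul (-b)).sub
        (((Real.hasDerivAt_cos u).pow 2).const_mul (c/2))).sub
        ((hasDerivAt_id u).const_mul (a*b))).sub
        ((Real.hasDerivAt_sin u).const_mul (a*c))
    convert h using 1
    ring
  have intAB : (∫ x in (0:ℝ)..(2*π), (Real.sin x - a) * (b + c * Real.cos x)) = -(2*π*(a*b)) := by
    rw [intervalIntegral.integral_eq_sub_of_hasDerivAt (fun t _ => hFder t)
      ((contA.mul contB).intervalIntegrable _ _)]
    simp [Real.cos_two_pi, Real.sin_two_pi]
    ring
  -- split integrals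
  have hiCW : IntervalIntegrable (fun x => Real.cos x * w x) MeasureTheory.volume 0 (2*π) :=
    (Real.continuous_cos.mul hwc).intervalIntegrable _ _
  have hiAB : IntervalIntegrable (fun x => (Real.sin x - a) * (b + c * Real.cos x))
      MeasureTheory.volume 0 (2*π) := (contA.mul contB).intervalIntegrable _ _
  have hiA2y : IntervalIntegrable (fun x => (Real.sin x - a)^2 * y x)
      MeasureTheory.volume 0 (2*π) := ((contA.pow 2).mul hyc).intervalIntegrable _ _
  have hiW : IntervalIntegrable w MeasureTheory.volume 0 (2*π) :=
    hwc.intervalIntegrable _ _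
  have hiBW : IntervalIntegrable (fun x => (b + c * Real.cos x) * w x)
      MeasureTheory.volume 0 (2*π) := (contB.mul hwc).intervalIntegrable _ _
  have hiA : IntervalIntegrable (fun x => Real.sin x - a) MeasureTheory.volume 0 (2*π) :=
    contA.intervalIntegrable _ _
  -- from key1 : ∫ Bw = ∫ A
  have eq1 : (∫ x in (0:ℝ)..(2*π), (b + c * Real.cos x) * w x) = -(2*π*a) := by
    have h := intervalIntegral.integral_sub hiBW hiA
    rw [key1] at h
    rw [intA] at h
    linarith [h]
  -- from key2 : ∫ cos·w = 2πab - ∫A²y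
  have eq2 : (∫ x in (0:ℝ)..(2*π), Real.cos x * w x)
      = 2*π*(a*b) - (∫ x in (0:ℝ)..(2*π), (Real.sin x - a)^2 * y x) := by
    have h1 := intervalIntegral.integral_add hiCW (hiAB.add hiA2y)
    have h2 := intervalIntegral.integral_add hiAB hiA2y
    rw [key2] at h1
    rw [h2, intAB] at h1
    linarith [h1]
  -- linearity for ∫ Bw
  have eq3 : (∫ x in (0:ℝ)..(2*π), (b + c * Real.cos x) * w x)
      = b * (∫ x in (0:ℝ)..(2*π), w x) + c * (∫ x in (0:ℝ)..(2*π), Real.cos x * w x) := by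
    have h1 : (fun x => (b + c * Real.cos x) * w x)
        = fun x => b * w x + c * (Real.cos x * w x) := by funext x; ring
    rw [h1, intervalIntegral.integral_add (f := fun x => b * w x)
      (g := fun x => c * (Real.cos x * w x)) ((continuous_const.mul hwc).intervalIntegrable _ _)
      ((continuous_const.mul (Real.continuous_cos.mul hwc)).intervalIntegrable _ _),
      intervalIntegral.integral_const_mul, intervalIntegral.integral_const_mul]
  -- positivity
  have hW0 : 0 ≤ ∫ x in (0:ℝ)..(2*π), w x :=
    intervalIntegral.integral_nonneg (by positivity) (fun x _ => (hwpos x).le)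
  have hJ0 : (∫ x in (0:ℝ)..(2*π), (Real.sin x - a)^2 * y x) ≤ 0 := by
    have h : 0 ≤ (∫ x in (0:ℝ)..(2*π), -((Real.sin x - a)^2 * y x)) :=
      intervalIntegral.integral_nonneg (by positivity)
        (fun x _ => by nlinarith [hneg x, sq_nonneg (Real.sin x - a)])
    rw [intervalIntegral.integral_neg] at h
    linarith
  -- conclude
  have h4 : b * (∫ x in (0:ℝ)..(2*π), w x) + c * (∫ x in (0:ℝ)..(2*π), Real.cos x * w x)
      = -(2*π*a) := by rw [← eq3, eq1]
  have h5 : 2*π*(a*b) ≤ ∫ x in (0:ℝ)..(2*π), Real.cos x * w x := by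
    rw [eq2]; linarith
  have h6 : c*(2*π*(a*b)) ≤ c * ∫ x in (0:ℝ)..(2*π), Real.cos x * w x :=
    mul_le_mul_of_nonneg_left h5 hc.le
  have h7 : 0 ≤ b * ∫ x in (0:ℝ)..(2*π), w x :=
    mul_nonneg hb0.le hW0
  have h8 : 0 < 2*π*a := by positivity
  have h9 : 0 < c*(2*π*(a*b)) := by positivity
  linarith
end

section
/- Let F : ℝ × ℝ × ℝ → ℝ be continuous with F(x + 2π, y, λ) = F(x, y, λ) for all (x, y, λ), and suppose F is strictly increasing in its third argument, i.e. F(x, y, λ₁) < F(x, y, λ₂) whenever λ₁ < λ₂. Let λ₁ < λ₂ and let y₁, y₂ : ℝ → ℝ be differentiable 2π-periodic functions with yᵢ′(x) = F(x, yᵢ(x), λᵢ) for all x (i = 1, 2). Then y₁(x) ≠ y₂(x) for every x ∈ ℝ. -/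
open Real

/-- Non-intersection property of periodic solutions in a rotated family of
scalar 2π-periodic equations `y′ = F(x, y, λ)`: if `F` is continuous,
2π-periodic in `x`, strictly increasing in `λ`, and `y₁, y₂` are 2π-periodic
solutions for parameters `λ₁ < λ₂`, then the graphs of `y₁` and `y₂` never
intersect. -/
theorem rotated_vector_field_no_intersection
    (F : ℝ × ℝ × ℝ → ℝ) (hcont : Continuous F)
    (hxper : ∀ x y lam : ℝ, F (x + 2 * Real.pi, y, lam) = F (x, y, lam))
    (hmono : ∀ x y lam₁ lam₂ : ℝ, lam₁ < lam₂ → F (x, y, lam₁) < F (x, y, lam₂))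
    (lam₁ lam₂ : ℝ) (hlam : lam₁ < lam₂)
    (y₁ y₂ : ℝ → ℝ)
    (hsol₁ : ∀ x : ℝ, HasDerivAt y₁ (F (x, y₁ x, lam₁)) x)
    (hper₁ : ∀ x : ℝ, y₁ (x + 2 * Real.pi) = y₁ x)
    (hsol₂ : ∀ x : ℝ, HasDerivAt y₂ (F (x, y₂ x, lam₂)) x)
    (hper₂ : ∀ x : ℝ, y₂ (x + 2 * Real.pi) = y₂ x) :
    ∀ x : ℝ, y₁ x ≠ y₂ x := by
  intro x₀ h0
  set g : ℝ → ℝ := fun x => y₂ x - y₁ x with hg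
  have hgd : ∀ x, HasDerivAt g (F (x, y₂ x, lam₂) - F (x, y₁ x, lam₁)) x :=
    fun x => (hsol₂ x).sub (hsol₁ x)
  have hgc : Continuous g := by
    have h : Differentiable ℝ y₂ := fun x => (hsol₂ x).differentiableAt
    have h1 : Differentiable ℝ y₁ := fun x => (hsol₁ x).differentiableAt
    exact (h.sub h1).continuous
  have key : ∀ t : ℝ, g t = 0 →
      (∀ᶠ x in nhdsWithin t (Set.Ioi t), 0 < g x) ∧
      (∀ᶠ x in nhdsWithin t (Set.Iio t), g x < 0) := by
    intro t ht
    have heq : y₁ t = y₂ t := by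
      have := ht; simp only [hg] at this; linarith
    have hdpos : 0 < F (t, y₂ t, lam₂) - F (t, y₁ t, lam₁) := by
      rw [heq]; have := hmono t (y₂ t) lam₁ lam₂ hlam; linarith
    have hslope := hasDerivAt_iff_tendsto_slope.mp (hgd t)
    have hev : ∀ᶠ x in nhdsWithin t {t}ᶜ, 0 < slope g t x :=
      hslope.eventually (eventually_gt_nhds hdpos)
    constructor
    · have := hev.filter_mono (nhdsWithin_mono t (fun x hx => ne_of_gt hx))
      filter_upwards [this, self_mem_nhdsWithin] with x hx hx'
      rw [slope_def_field, ht] at hx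
      have hxt : (0:ℝ) < x - t := by simp only [Set.mem_Ioi] at hx'; linarith
      rcases div_pos_iff.mp hx with ⟨h1, _⟩ | ⟨_, h2⟩
      · linarith
      · linarith
    · have := hev.filter_mono (nhdsWithin_mono t (fun x hx => ne_of_lt hx))
      filter_upwards [this, self_mem_nhdsWithin] with x hx hx'
      rw [slope_def_field, ht] at hx
      have hxt : x - t < 0 := by simp only [Set.mem_Iio] at hx'; linarith
      rcases div_pos_iff.mp hx with ⟨_, h2⟩ | ⟨h1, _⟩
      · linarith
      · linarith
  have hz0 : g x₀ = 0 := by simp [hg, h0]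
  have hpi : (0:ℝ) < 2 * Real.pi := by positivity
  have hz2 : g (x₀ + 2 * Real.pi) = 0 := by
    simp only [hg, hper₁ x₀, hper₂ x₀]; exact hz0
  obtain ⟨hpos0, -⟩ := key x₀ hz0
  obtain ⟨u, hu, hIoo⟩ := mem_nhdsGT_iff_exists_Ioo_subset.mp hpos0
  simp only [Set.mem_Ioi] at hu
  have hu2 : u ≤ x₀ + 2 * Real.pi := by
    by_contra h
    push_neg at h
    have : 0 < g (x₀ + 2 * Real.pi) := hIoo ⟨by linarith, h⟩
    linarith
  set S : Set ℝ := {x | g x = 0} ∩ Set.Icc u (x₀ + 2 * Real.pi) with hS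
  have hSclosed : IsClosed S :=
    (isClosed_singleton.preimage hgc).inter isClosed_Icc
  have hSne : S.Nonempty := ⟨x₀ + 2 * Real.pi, hz2, by constructor <;> linarith⟩
  have hSbdd : BddBelow S := ⟨u, fun x hx => hx.2.1⟩
  set T := sInf S with hT
  have hTmem : T ∈ S := hSclosed.csInf_mem hSne hSbdd
  obtain ⟨hTz, hTu, hT2⟩ := hTmem
  obtain ⟨-, hneg⟩ := key T hTz
  obtain ⟨v, hv, hIoo2⟩ := mem_nhdsLT_iff_exists_Ioo_subset.mp hneg
  simp only [Set.mem_Iio] at hv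
  set a := (x₀ + u) / 2 with ha
  have haIoo : a ∈ Set.Ioo x₀ u := ⟨by simp [ha]; linarith, by simp [ha]; linarith⟩
  have hga : 0 < g a := hIoo haIoo
  set x := (max a v + T) / 2 with hx
  have hmlt : max a v < T := max_lt (by linarith [haIoo.2]) hv
  have hxT : x < T := by simp [hx]; linarith
  have hvx : v < x := by
    have := le_max_right a v; simp only [hx]; linarith [le_max_right a v]
  have hax : a < x := by
    have := le_max_left a v; simp only [hx]; linarith [le_max_left a v]
  have hgx : g x < 0 := hIoo2 ⟨hvx, hxT⟩
  have hivt := intermediate_value_Ioo' (le_of_lt hax) hgc.continuousOn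
  obtain ⟨c, hc, hgc0⟩ := hivt (show (0:ℝ) ∈ Set.Ioo (g x) (g a) from ⟨hgx, hga⟩)
  have hcu : u ≤ c := by
    by_contra h
    push_neg at h
    have : 0 < g c := hIoo ⟨by linarith [haIoo.1, hc.1], h⟩
    linarith [this, hgc0]
  have hcS : c ∈ S := ⟨hgc0, hcu, by linarith [hc.2, hxT, hT2]⟩
  have : T ≤ c := csInf_le hSbdd hcS
  linarith [hc.2, hxT]
end

section
/- Let a ≥ 0, b > 0 and c ∈ ℝ. Let (x, y) : ℝ → ℝ² be a solution of the planar system x′(t) = y(t), y′(t) = −(sin x(t) − a) − (b + c·cos x(t))·y(t), and suppose there exists T > 0 such that for all t, y(t + T) = y(t) and x(t + T) = x(t) + 2π or x(t + T) = x(t) − 2π. Then y(t) ≠ 0 for all t ∈ ℝ. -/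
open Real Set Metric Filter Topology
open scoped NNReal

namespace JosephsonAux

noncomputable def G (a b c : ℝ) : ℝ × ℝ → ℝ :=
  fun p => -(Real.sin p.1 - a) - (b + c * Real.cos p.1) * p.2

noncomputable def V (a b c : ℝ) : ℝ × ℝ → ℝ × ℝ := fun p => (p.2, G a b c p)

lemma sin_lip (u v : ℝ) : |Real.sin u - Real.sin v| ≤ |u - v| := by
  rw [Real.sin_sub_sin, abs_mul, abs_mul]
  have h1 : |Real.sin ((u - v)/2)| ≤ |(u - v)/2| := Real.abs_sin_le_abs
  have h2 : |Real.cos ((u + v)/2)| ≤ 1 := Real.abs_cos_le_one _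
  have h3 : |(u - v)/2| = |u - v|/2 := by rw [abs_div]; simp
  have h4 : (0:ℝ) ≤ |Real.sin ((u - v)/2)| := abs_nonneg _
  have h5 : (0:ℝ) ≤ |u - v| := abs_nonneg _
  have h7 : |(2:ℝ)| = 2 := by norm_num
  have e1 : |(2:ℝ)| * |Real.sin ((u - v)/2)| * |Real.cos ((u + v)/2)| ≤ |(2:ℝ)| * |Real.sin ((u - v)/2)| :=
    mul_le_of_le_one_right (by positivity) h2
  rw [h7] at e1 ⊢
  linarith
lemma cos_lip (u v : ℝ) : |Real.cos u - Real.cos v| ≤ |u - v| := by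
  rw [Real.cos_sub_cos, abs_mul, abs_mul]
  have h1 : |Real.sin ((u - v)/2)| ≤ |(u - v)/2| := Real.abs_sin_le_abs
  have h2 : |Real.sin ((u + v)/2)| ≤ 1 := Real.abs_sin_le_one _
  have h3 : |(u - v)/2| = |u - v|/2 := by rw [abs_div]; simp
  have h4 : (0:ℝ) ≤ |Real.sin ((u - v)/2)| := abs_nonneg _
  have h5 : (0:ℝ) ≤ |u - v| := abs_nonneg _
  have h6 : (0:ℝ) ≤ |Real.sin ((u + v)/2)| := abs_nonneg _
  have h7 : |(-2 : ℝ)| = 2 := by norm_num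
  have e1 : |(-2:ℝ)| * |Real.sin ((u + v)/2)| * |Real.sin ((u - v)/2)| ≤ |(-2:ℝ)| * |Real.sin ((u - v)/2)| := by
    have := mul_le_of_le_one_right (a := |Real.sin ((u - v)/2)|) h4 h2
    nlinarith
  rw [h7] at e1 ⊢
  linarith

lemma lipschitz_V (a b c R : ℝ) (hR : 0 ≤ R) :
    ∃ K : ℝ≥0, LipschitzOnWith K (V a b c) (closedBall (0 : ℝ × ℝ) R) := by
  set L : ℝ := 1 + |b| + |c| + |c| * R with hL
  have hcR : 0 ≤ |c| * R := mul_nonneg (abs_nonneg c) hR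
  have hL1 : 1 ≤ L := by
    have := abs_nonneg b; have := abs_nonneg c; simp only [hL]; linarith
  have hL0 : 0 ≤ L := le_trans zero_le_one hL1
  refine ⟨Real.toNNReal L, ?_⟩
  rw [lipschitzOnWith_iff_dist_le_mul]
  intro p hp q hq
  have hcoe : ((Real.toNNReal L : ℝ≥0) : ℝ) = L := Real.coe_toNNReal L hL0
  rw [hcoe]
  have hq2 : |q.2| ≤ R := by
    have hqn : ‖q‖ ≤ R := by simpa using mem_closedBall_zero_iff.1 hq
    calc |q.2| = ‖q.2‖ := rfl
    _ ≤ ‖q‖ := norm_snd_le q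
    _ ≤ R := hqn
  set d : ℝ := dist p q with hd
  have hdist : (0:ℝ) ≤ d := dist_nonneg
  have hb1 : |p.1 - q.1| ≤ d := by
    have : dist p.1 q.1 ≤ d := by rw [hd, Prod.dist_eq]; exact le_max_left _ _
    simpa [Real.dist_eq] using this
  have hb2 : |p.2 - q.2| ≤ d := by
    have : dist p.2 q.2 ≤ d := by rw [hd, Prod.dist_eq]; exact le_max_right _ _
    simpa [Real.dist_eq] using this
  have hG : |G a b c p - G a b c q| ≤ L * d := by
    have hexp : G a b c p - G a b c q
        = -(Real.sin p.1 - Real.sin q.1) - b * (p.2 - q.2)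
          - Real.cos p.1 * (c * (p.2 - q.2)) - q.2 * (c * (Real.cos p.1 - Real.cos q.1)) := by
      simp only [G]; ring
    rw [hexp]
    have t1 : |(-(Real.sin p.1 - Real.sin q.1) - b * (p.2 - q.2)
          - Real.cos p.1 * (c * (p.2 - q.2))) - q.2 * (c * (Real.cos p.1 - Real.cos q.1))|
        ≤ |(-(Real.sin p.1 - Real.sin q.1) - b * (p.2 - q.2))|
          + |Real.cos p.1 * (c * (p.2 - q.2))| + |q.2 * (c * (Real.cos p.1 - Real.cos q.1))| := by
      refine (abs_sub _ _).trans ?_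
      gcongr
      exact abs_sub _ _
    refine t1.trans ?_
    have t2 : |(-(Real.sin p.1 - Real.sin q.1) - b * (p.2 - q.2))|
        ≤ |Real.sin p.1 - Real.sin q.1| + |b| * |p.2 - q.2| := by
      refine (abs_sub _ _).trans ?_
      rw [abs_neg, abs_mul]
    have t3 : |Real.cos p.1 * (c * (p.2 - q.2))| ≤ |c| * |p.2 - q.2| := by
      rw [abs_mul, abs_mul]
      exact mul_le_of_le_one_left (mul_nonneg (abs_nonneg c) (abs_nonneg _))
        (Real.abs_cos_le_one p.1)
    have t4 : |q.2 * (c * (Real.cos p.1 - Real.cos q.1))| ≤ R * (|c| * |p.1 - q.1|) := by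
      rw [abs_mul, abs_mul]
      have hc := cos_lip p.1 q.1
      gcongr
    have hsd : |Real.sin p.1 - Real.sin q.1| ≤ d := (sin_lip p.1 q.1).trans hb1
    have t4' : R * (|c| * |p.1 - q.1|) ≤ |c| * R * d := by
      have h1 : |c| * |p.1 - q.1| ≤ |c| * d := by gcongr
      nlinarith [abs_nonneg c]
    have h3 : |b| * |p.2 - q.2| ≤ |b| * d := by gcongr
    have h4 : |c| * |p.2 - q.2| ≤ |c| * d := by gcongr
    simp only [hL]
    nlinarith
  have hsecond : dist (G a b c p) (G a b c q) ≤ L * d := by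
    rw [Real.dist_eq]; exact hG
  have hfirst : dist p.2 q.2 ≤ L * d := by
    have h1 : dist p.2 q.2 ≤ d := by rw [hd, Prod.dist_eq]; exact le_max_right _ _
    calc dist p.2 q.2 ≤ d := h1
    _ = 1 * d := (one_mul d).symm
    _ ≤ L * d := by gcongr
  calc dist (V a b c p) (V a b c q)
      = max (dist p.2 q.2) (dist (G a b c p) (G a b c q)) := by
        simp only [Prod.dist_eq, V]
    _ ≤ L * d := max_le hfirst hsecond

/-- Bundle of hypotheses: a second-kind periodic solution with positive winding whose
`y`-component vanishes somewhere. -/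
structure Bad (a b c : ℝ) (x y : ℝ → ℝ) (T : ℝ) : Prop where
  hx : ∀ t, HasDerivAt x (y t) t
  hy : ∀ t, HasDerivAt y (G a b c (x t, y t)) t
  hT : 0 < T
  hpy : ∀ t, y (t + T) = y t
  hpx : ∀ t, x (t + T) = x t + 2 * π
  hzero : ∃ t, y t = 0

variable {a b c : ℝ} {x y : ℝ → ℝ} {T : ℝ}

lemma Bad.cx (S : Bad a b c x y T) : Continuous x :=
  continuous_iff_continuousAt.2 fun t => (S.hx t).continuousAt

lemma Bad.cy (S : Bad a b c x y T) : Continuous y :=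
  continuous_iff_continuousAt.2 fun t => (S.hy t).continuousAt

lemma Bad.hz (S : Bad a b c x y T) (t : ℝ) :
    HasDerivAt (fun s => (x s, y s)) (V a b c (x t, y t)) t :=
  (S.hx t).prodMk (S.hy t)

lemma Bad.unique (S : Bad a b c x y T) {w : ℝ → ℝ × ℝ}
    (hw : ∀ t, HasDerivAt w (V a b c (w t)) t) {t₀ : ℝ}
    (h0 : (x t₀, y t₀) = w t₀) (t : ℝ) : (x t, y t) = w t := by
  set z : ℝ → ℝ × ℝ := fun s => (x s, y s) with hzdef
  set lo : ℝ := min t t₀ - 1 with hlo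
  set hi : ℝ := max t t₀ + 1 with hhi
  have ht₀ : t₀ ∈ Ioo lo hi := by
    constructor
    · have : min t t₀ ≤ t₀ := min_le_right _ _
      linarith
    · have : t₀ ≤ max t t₀ := le_max_right _ _
      linarith
  have ht : t ∈ Icc lo hi := by
    constructor
    · have : min t t₀ ≤ t := min_le_left _ _
      linarith
    · have : t ≤ max t t₀ := le_max_left _ _
      linarith
  have hzc : ContinuousOn z (Icc lo hi) := ((S.cx).prodMk (S.cy)).continuousOn
  have hwc : ContinuousOn w (Icc lo hi) :=
    (continuous_iff_continuousAt.2 fun s => (hw s).continuousAt).continuousOn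
  obtain ⟨C1, hC1⟩ := (isCompact_Icc (a := lo) (b := hi)).exists_bound_of_continuousOn hzc
  obtain ⟨C2, hC2⟩ := (isCompact_Icc (a := lo) (b := hi)).exists_bound_of_continuousOn hwc
  set R : ℝ := max (max C1 C2) 0 with hR
  obtain ⟨K, hK⟩ := lipschitz_V a b c R (le_max_right _ _)
  have key := ODE_solution_unique_of_mem_Icc
    (v := fun _ p => V a b c p) (s := fun _ => closedBall (0 : ℝ × ℝ) R)
    (K := K) (fun _ _ => hK) ht₀ hzc
    (fun u _ => S.hz u)
    (fun u hu => mem_closedBall_zero_iff.2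
      ((hC1 u (Ioo_subset_Icc_self hu)).trans ((le_max_left C1 C2).trans (le_max_left _ _))))
    hwc (fun u _ => hw u)
    (fun u hu => mem_closedBall_zero_iff.2
      ((hC2 u (Ioo_subset_Icc_self hu)).trans ((le_max_right C1 C2).trans (le_max_left _ _))))
    h0
  exact key ht

lemma shift_int {f : ℝ → ℝ} {p c0 : ℝ} (h : ∀ t, f (t + p) = f t + c0) :
    ∀ (n : ℤ) (t : ℝ), f (t + n * p) = f t + n * c0 := by
  intro n
  induction n using Int.induction_on with
  | zero => simp
  | succ k ih =>
    intro t
    have e : t + ((k : ℤ) + 1 : ℤ) * p = (t + p) + (k : ℤ) * p := by push_cast; ring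
    rw [e, ih (t + p), h t]
    push_cast; ring
  | pred k ih =>
    intro t
    have hfp : f (t - p) = f t - c0 := by
      have := h (t - p); simp at this; linarith [this]
    have hih := ih (t - p)
    rw [hfp] at hih
    have e2 : t - p + ((-(k:ℤ) : ℤ) : ℝ) * p = t + ((-(k:ℤ) - 1 : ℤ) : ℝ) * p := by
      push_cast; ring
    rw [e2] at hih
    rw [hih]
    push_cast; ring

lemma Bad.y_int (S : Bad a b c x y T) (n : ℤ) (t : ℝ) : y (t + n * T) = y t := by
  have h := shift_int (f := y) (p := T) (c0 := 0) (fun t => by simp [S.hpy t]) n t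
  simpa using h

lemma Bad.x_int (S : Bad a b c x y T) (n : ℤ) (t : ℝ) : x (t + n * T) = x t + n * (2 * π) :=
  shift_int (f := x) (p := T) (c0 := 2 * π) (fun t => S.hpx t) n t

lemma Bad.no_rep (S : Bad a b c x y T) {s₀ s₁ : ℝ} (hlt : s₀ < s₁)
    (hxx : x s₀ = x s₁) (hyy : y s₀ = y s₁) : False := by
  set Δ : ℝ := s₁ - s₀ with hΔdef
  have hΔ : 0 < Δ := by simp [hΔdef]; linarith
  set w : ℝ → ℝ × ℝ := fun s => (x (s + Δ), y (s + Δ)) with hwdef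
  have hw : ∀ s, HasDerivAt w (V a b c (w s)) s := by
    intro s
    have h1 : HasDerivAt (fun u : ℝ => u + Δ) 1 s := (hasDerivAt_id s).add_const Δ
    have := (S.hz (s + Δ)).scomp s h1
    rw [one_smul] at this
    exact this
  have h0 : (x s₀, y s₀) = w s₀ := by
    have : s₀ + Δ = s₁ := by simp [hΔdef]
    simp [hwdef, this, hxx, hyy]
  have hall := S.unique hw h0
  have hper : ∀ t, x (t + Δ) = x t := by
    intro t
    have := congrArg Prod.fst (hall t)
    simpa [hwdef] using this.symm
  have hper_int : ∀ (n : ℤ) (t : ℝ), x (t + n * Δ) = x t := by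
    intro n t
    have h := shift_int (f := x) (p := Δ) (c0 := 0) (fun t => by simp [hper t]) n t
    simpa using h
  obtain ⟨C, hC⟩ := (isCompact_Icc (a := s₀) (b := s₀ + Δ)).exists_bound_of_continuousOn
    (S.cx.continuousOn)
  have hbound : ∀ t : ℝ, |x t| ≤ C := by
    intro t
    have hmem := toIcoMod_mem_Ico hΔ s₀ t
    have heq : toIcoMod hΔ s₀ t + (toIcoDiv hΔ s₀ t : ℤ) * Δ = t := by
      have := (toIcoMod_add_toIcoDiv_zsmul hΔ s₀ t)
      simpa [zsmul_eq_mul] using this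
    have := hper_int (toIcoDiv hΔ s₀ t) (toIcoMod hΔ s₀ t)
    rw [heq] at this
    rw [this]
    simpa [Real.norm_eq_abs] using hC _ (Ico_subset_Icc_self hmem)
  have hπ := Real.pi_pos
  obtain ⟨n, hn⟩ := exists_nat_gt ((2 * C) / (2 * π))
  have hgrow := S.x_int n s₀
  push_cast at hgrow
  have h1 : |x s₀| ≤ C := hbound s₀
  have h2 : |x (s₀ + n * T)| ≤ C := hbound _
  rw [hgrow] at h2
  have : (n : ℝ) * (2 * π) > 2 * C := by
    rw [div_lt_iff₀ (by linarith : (0:ℝ) < 2 * π)] at hn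
    linarith
  have := abs_le.1 h1
  have := abs_le.1 h2
  linarith [this.1, this.2]

lemma Bad.not_equilibrium (S : Bad a b c x y T) {τ : ℝ} (h0 : y τ = 0) :
    G a b c (x τ, 0) ≠ 0 := by
  intro hG0
  set w : ℝ → ℝ × ℝ := fun _ => ((x τ : ℝ), (0 : ℝ)) with hwdef
  have hw : ∀ s, HasDerivAt w (V a b c (w s)) s := by
    intro s
    have h1 : V a b c (w s) = 0 := by
      simp only [hwdef, V]
      rw [hG0]
      rfl
    rw [h1]
    exact hasDerivAt_const s _
  have h0' : (x τ, y τ) = w τ := by simp [hwdef, h0]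
  have hall := S.unique hw h0'
  have e1 := congrArg Prod.fst (hall (τ + T))
  have e2 : x (τ + T) = x τ := by simpa [hwdef] using e1
  have := S.hpx τ
  rw [e2] at this
  have : (2:ℝ) * π = 0 := by linarith
  nlinarith [Real.pi_pos]

/-! ### Zero set structure -/

lemma Bad.slope_tendsto (S : Bad a b c x y T) {τ : ℝ} (h0 : y τ = 0) :
    Tendsto (slope y τ) (𝓝[≠] τ) (𝓝 (G a b c (x τ, 0))) := by
  have h := hasDerivAt_iff_tendsto_slope.1 (S.hy τ)
  rwa [h0] at h

/-- Every zero of `y` is a transversal crossing; in particular zeros are isolated. -/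
lemma Bad.isolated (S : Bad a b c x y T) {τ : ℝ} (h0 : y τ = 0) :
    ∀ᶠ t in 𝓝[≠] τ, y t ≠ 0 := by
  have hne := S.not_equilibrium h0
  have hev := (S.slope_tendsto h0).eventually_ne hne
  have hself : ∀ᶠ t in 𝓝[≠] τ, t ≠ τ := eventually_mem_nhdsWithin
  filter_upwards [hev, hself] with t hst htτ hy0
  apply hst
  rw [slope_def_field, hy0, h0]
  simp

/-- A differentiable function with negative derivative is locally smaller to the right. -/
lemma slope_right_neg {f : ℝ → ℝ} {τ d : ℝ} (hf : HasDerivAt f d τ) (hd : d < 0) :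
    ∀ᶠ t in 𝓝[>] τ, f t < f τ := by
  have h := hasDerivAt_iff_tendsto_slope.1 hf
  have hmono : 𝓝[>] τ ≤ 𝓝[≠] τ :=
    nhdsWithin_mono τ (fun t ht => ne_of_gt ht)
  have h' : Tendsto (slope f τ) (𝓝[>] τ) (𝓝 d) := h.mono_left hmono
  have hev : ∀ᶠ t in 𝓝[>] τ, slope f τ t < 0 := h'.eventually_lt_const hd
  have hself : ∀ᶠ t in 𝓝[>] τ, τ < t := eventually_mem_nhdsWithin
  filter_upwards [hev, hself] with t hs ht
  have hne : t - τ ≠ 0 := by linarith [ht]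
  have : f t - f τ = slope f τ t * (t - τ) := by
    rw [slope_def_field]; field_simp
  nlinarith [hs, sub_pos.2 ht]

/-- At the right endpoint of an interval of positivity of `y`, `y'` is negative. -/
lemma Bad.deriv_neg_at_right (S : Bad a b c x y T) {α β : ℝ} (hab : α < β) (h0 : y β = 0)
    (hpos : ∀ t ∈ Ioo α β, 0 < y t) : G a b c (x β, 0) < 0 := by
  have hmono : 𝓝[<] β ≤ 𝓝[≠] β :=
    nhdsWithin_mono β (fun t ht => ne_of_lt ht)
  have h' : Tendsto (slope y β) (𝓝[<] β) (𝓝 (G a b c (x β, 0))) :=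
    (S.slope_tendsto h0).mono_left hmono
  have hev : ∀ᶠ t in 𝓝[<] β, slope y β t ≤ 0 := by
    filter_upwards [Ioo_mem_nhdsLT_of_mem (⟨hab, le_rfl⟩ : β ∈ Ioc α β)] with t ht
    rw [slope_def_field, h0]
    have h1 : 0 < y t := hpos t ht
    have h2 : t - β < 0 := by linarith [ht.2]
    have := div_nonpos_of_nonneg_of_nonpos (le_of_lt h1) (le_of_lt h2)
    simpa using this
  have hle : G a b c (x β, 0) ≤ 0 := le_of_tendsto h' hev
  exact lt_of_le_of_ne hle (S.not_equilibrium h0)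

/-- Finitely many zeros of `y` in any compact interval. -/
lemma Bad.zfin (S : Bad a b c x y T) (lo hi : ℝ) :
    ({t | y t = 0} ∩ Icc lo hi).Finite := by
  by_contra hinf
  have hinf' : ({t | y t = 0} ∩ Icc lo hi).Infinite := hinf
  obtain ⟨τ, _, hacc⟩ := hinf'.exists_accPt_of_subset_isCompact isCompact_Icc inter_subset_right
  rw [accPt_iff_frequently] at hacc
  have h0 : y τ = 0 := by
    have hfr : ∃ᶠ t in 𝓝 τ, y t = 0 := by
      apply hacc.mono
      rintro t ⟨-, ht, -⟩
      exact ht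
    have hτZ : τ ∈ closure {t | y t = 0} := mem_closure_iff_frequently.2 hfr
    rwa [IsClosed.closure_eq (isClosed_eq S.cy continuous_const)] at hτZ
  have hiso := S.isolated h0
  have hacc' : ∃ᶠ t in 𝓝[≠] τ, t ∈ {t | y t = 0} ∩ Icc lo hi := by
    rw [frequently_nhdsWithin_iff]
    apply hacc.mono
    rintro t ⟨hne, hmem⟩
    exact ⟨hmem, hne⟩
  obtain ⟨t, htmem, hty⟩ := (hacc'.and_eventually hiso).exists
  exact hty htmem.1

/-! ### Arcs of positivity -/

def IsArc (x y : ℝ → ℝ) (α β : ℝ) : Prop :=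
  α < β ∧ y α = 0 ∧ y β = 0 ∧ ∀ t ∈ Ioo α β, 0 < y t

lemma Bad.arc_strictMono (S : Bad a b c x y T) {α β : ℝ} (hA : IsArc x y α β) :
    StrictMonoOn x (Icc α β) := by
  apply strictMonoOn_of_deriv_pos (convex_Icc _ _) S.cx.continuousOn
  intro t ht
  rw [interior_Icc] at ht
  rw [(S.hx t).deriv]
  exact hA.2.2.2 t ht

lemma Bad.arc_shift (S : Bad a b c x y T) {α β : ℝ} (n : ℤ) (hA : IsArc x y α β) :
    IsArc x y (α + n * T) (β + n * T) := by
  obtain ⟨hab, h₁, h₂, hpos⟩ := hA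
  refine ⟨by linarith, ?_, ?_, ?_⟩
  · rw [S.y_int n α]; exact h₁
  · rw [S.y_int n β]; exact h₂
  · intro t ht
    have : y t = y (t - n * T) := by
      have h2 := S.y_int n (t - n * T)
      rw [sub_add_cancel] at h2
      exact h2
    rw [this]
    exact hpos _ ⟨by linarith [ht.1], by linarith [ht.2]⟩

/-- Somewhere `y` is positive. -/
lemma Bad.exists_pos (S : Bad a b c x y T) : ∃ t, 0 < y t := by
  by_contra hnone
  push_neg at hnone
  have hanti : AntitoneOn x (Icc 0 T) := by
    apply antitoneOn_of_deriv_nonpos (convex_Icc _ _) S.cx.continuousOn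
    · intro t _
      exact (S.hx t).differentiableAt.differentiableWithinAt
    · intro t _
      rw [(S.hx t).deriv]
      exact hnone t
  have h1 : x T ≤ x 0 := hanti ⟨le_rfl, le_of_lt S.hT⟩ ⟨le_of_lt S.hT, le_rfl⟩ (le_of_lt S.hT)
  have h2 := S.hpx 0
  rw [zero_add] at h2
  nlinarith [Real.pi_pos]

/-- Around every point where `y` is positive there is a maximal arc of positivity,
whose left endpoint dominates every zero to the left of the point,
and right endpoint is below every zero to the right. -/
lemma Bad.exists_arc (S : Bad a b c x y T) {t₁ : ℝ} (h1 : 0 < y t₁) :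
    ∃ α β, IsArc x y α β ∧ t₁ ∈ Ioo α β ∧
      (∀ z, y z = 0 → z ≤ t₁ → z ≤ α) ∧ (∀ z, y z = 0 → t₁ ≤ z → β ≤ z) := by
  obtain ⟨ζ, hζ⟩ := S.hzero
  have hzc : IsClosed {t | y t = 0} := isClosed_eq S.cy continuous_const
  -- the set of zeros below t₁
  set Zlo : Set ℝ := {t | y t = 0} ∩ Iic t₁ with hZlo
  have hZlo_ne : Zlo.Nonempty := by
    obtain ⟨m, hm⟩ := exists_nat_gt ((ζ - t₁) / T)
    have hy0 : y (ζ - (m : ℝ) * T) = 0 := by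
      have h2 := S.y_int (-(m : ℤ)) ζ
      push_cast at h2
      rw [show ζ - (m:ℝ) * T = ζ + -(m:ℝ) * T by ring, h2]
      exact hζ
    refine ⟨ζ - (m : ℝ) * T, hy0, ?_⟩
    rw [div_lt_iff₀ S.hT] at hm
    have : ζ - (m : ℝ) * T ≤ t₁ := by nlinarith
    exact this
  have hZlo_bdd : BddAbove Zlo := ⟨t₁, fun z hz => hz.2⟩
  have hZlo_cl : IsClosed Zlo := hzc.inter isClosed_Iic
  set α := sSup Zlo with hα
  have hαmem : α ∈ Zlo := hZlo_cl.csSup_mem hZlo_ne hZlo_bdd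
  have hαt₁ : α < t₁ := by
    rcases lt_or_eq_of_le (mem_Iic.mp hαmem.2) with h | h
    · exact h
    · exfalso; rw [h] at hαmem; have := hαmem.1; simp only [mem_setOf_eq] at this; linarith
  -- the set of zeros above t₁
  set Zhi : Set ℝ := {t | y t = 0} ∩ Ici t₁ with hZhi
  have hZhi_ne : Zhi.Nonempty := by
    obtain ⟨m, hm⟩ := exists_nat_gt ((t₁ - ζ) / T)
    have hy0 : y (ζ + (m : ℝ) * T) = 0 := by
      have h2 := S.y_int (m : ℤ) ζ
      push_cast at h2
      rw [h2]; exact hζ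
    refine ⟨ζ + (m : ℝ) * T, hy0, ?_⟩
    rw [div_lt_iff₀ S.hT] at hm
    have : t₁ ≤ ζ + (m : ℝ) * T := by nlinarith
    exact this
  have hZhi_bdd : BddBelow Zhi := ⟨t₁, fun z hz => hz.2⟩
  have hZhi_cl : IsClosed Zhi := hzc.inter isClosed_Ici
  set β := sInf Zhi with hβ
  have hβmem : β ∈ Zhi := hZhi_cl.csInf_mem hZhi_ne hZhi_bdd
  have hβt₁ : t₁ < β := by
    rcases lt_or_eq_of_le (mem_Ici.mp hβmem.2) with h | h
    · exact h
    · exfalso; rw [← h] at hβmem; have := hβmem.1; simp only [mem_setOf_eq] at this; linarith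
  have hpos : ∀ t ∈ Ioo α β, 0 < y t := by
    intro t ht
    by_contra hle
    push_neg at hle
    rcases lt_or_eq_of_le hle with hlt | heq
    · -- y t < 0 : there is a zero between t and t₁
      rcases le_or_gt t t₁ with h | h
      · have hcont : ContinuousOn y (Icc t t₁) := S.cy.continuousOn
        have : (0:ℝ) ∈ Icc (y t) (y t₁) := ⟨le_of_lt hlt, le_of_lt h1⟩
        obtain ⟨z, hz, hz0⟩ := intermediate_value_Icc h hcont this
        have hzα : z ≤ α := le_csSup hZlo_bdd ⟨hz0, le_trans hz.2 le_rfl⟩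
        linarith [ht.1, hz.1]
      · have hcont : ContinuousOn y (Icc t₁ t) := S.cy.continuousOn
        have hmem : (0:ℝ) ∈ Icc (y t) (y t₁) := ⟨le_of_lt hlt, le_of_lt h1⟩
        obtain ⟨z, hz, hz0⟩ := intermediate_value_Icc' (le_of_lt h) hcont hmem
        have hβz : β ≤ z := csInf_le hZhi_bdd ⟨hz0, hz.1⟩
        linarith [ht.2, hz.2]
    · -- y t = 0 : t is itself a zero inside (α, β), contradiction with sup/inf
      rcases le_or_gt t t₁ with h | h
      · have : t ≤ α := le_csSup hZlo_bdd ⟨heq, h⟩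
        linarith [ht.1]
      · have : β ≤ t := csInf_le hZhi_bdd ⟨heq, le_of_lt h⟩
        linarith [ht.2]
  refine ⟨α, β, ⟨lt_trans hαt₁ hβt₁, hαmem.1, hβmem.1, hpos⟩, ⟨hαt₁, hβt₁⟩, ?_, ?_⟩
  · intro z hz hzle
    exact le_csSup hZlo_bdd ⟨hz, hzle⟩
  · intro z hz hzge
    exact csInf_le hZhi_bdd ⟨hz, hzge⟩

/-- There is an arc of maximal span. -/
lemma Bad.arc_max (S : Bad a b c x y T) :
    ∃ α β, IsArc x y α β ∧ ∀ α' β', IsArc x y α' β' → x β' - x α' ≤ x β - x α := by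
  obtain ⟨ζ, hζ⟩ := S.hzero
  set W : Set (ℝ × ℝ) :=
    {p | IsArc x y p.1 p.2 ∧ p.1 ∈ Icc ζ (ζ + T) ∧ p.2 ∈ Icc ζ (ζ + T)} with hW
  have hWfin : W.Finite := by
    have hfin := S.zfin ζ (ζ + T)
    have hsub : W ⊆ ({t | y t = 0} ∩ Icc ζ (ζ + T)) ×ˢ ({t | y t = 0} ∩ Icc ζ (ζ + T)) := by
      rintro ⟨p1, p2⟩ ⟨hA, h1, h2⟩
      exact ⟨⟨hA.2.1, h1⟩, ⟨hA.2.2.1, h2⟩⟩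
    exact (hfin.prod hfin).subset hsub
  have hyζT : y (ζ + T) = 0 := by rw [S.hpy ζ]; exact hζ
  have hnorm : ∀ α β, IsArc x y α β → ∃ p ∈ W, x p.2 - x p.1 = x β - x α := by
    intro α β hA
    set k := toIcoDiv S.hT ζ α with hk
    have hmem : α + (-k : ℤ) * T ∈ Ico ζ (ζ + T) := by
      have h1 := toIcoMod_mem_Ico S.hT ζ α
      have h2 : toIcoMod S.hT ζ α = α + (-k : ℤ) * T := by
        have := toIcoMod_add_toIcoDiv_zsmul S.hT ζ α
        rw [zsmul_eq_mul] at this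
        push_cast
        linarith
      rwa [h2] at h1
    have hA' : IsArc x y (α + (-k : ℤ) * T) (β + (-k : ℤ) * T) := S.arc_shift (-k) hA
    have hβ'le : β + (-k : ℤ) * T ≤ ζ + T := by
      by_contra hgt
      push_neg at hgt
      have hpos := hA'.2.2.2 (ζ + T) ⟨lt_of_lt_of_le hmem.2 le_rfl, hgt⟩
      rw [hyζT] at hpos
      exact lt_irrefl _ hpos
    refine ⟨(α + (-k : ℤ) * T, β + (-k : ℤ) * T), ⟨hA', Ico_subset_Icc_self hmem, ?_, ?_⟩, ?_⟩
    · exact le_trans hmem.1 (le_of_lt hA'.1)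
    · exact hβ'le
    · have e1 := S.x_int (-k) α
      have e2 := S.x_int (-k) β
      simp only [e1, e2]
      ring
  have hWne : W.Nonempty := by
    obtain ⟨t₁, ht₁⟩ := S.exists_pos
    obtain ⟨α, β, hA, -, -, -⟩ := S.exists_arc ht₁
    obtain ⟨p, hp, -⟩ := hnorm α β hA
    exact ⟨p, hp⟩
  obtain ⟨p, hpW, hmax⟩ := Set.exists_max_image W (fun p => x p.2 - x p.1) hWfin hWne
  refine ⟨p.1, p.2, hpW.1, ?_⟩
  intro α' β' hA'
  obtain ⟨q, hq, he⟩ := hnorm α' β' hA'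
  rw [← he]
  exact hmax q hq

/-- The main contradiction. -/
lemma Bad.derive_false (S : Bad a b c x y T) : False := by
  have hπ := Real.pi_pos
  obtain ⟨α, β, hA, hmax⟩ := S.arc_max
  set A := x α with hAdef
  set B := x β with hBdef
  have hmono := S.arc_strictMono hA
  have hAB : A < B :=
    hmono ⟨le_rfl, le_of_lt hA.1⟩ ⟨le_of_lt hA.1, le_rfl⟩ hA.1
  -- y is negative just to the right of β
  have hyβ : y β = 0 := hA.2.2.1
  have hd : G a b c (x β, 0) < 0 := S.deriv_neg_at_right hA.1 hyβ hA.2.2.2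
  have hyd : HasDerivAt y (G a b c (x β, 0)) β := by
    have := S.hy β; rwa [hyβ] at this
  have hevneg : ∀ᶠ t in 𝓝[>] β, y t < 0 := by
    have := slope_right_neg hyd hd
    rw [hyβ] at this
    exact this
  -- extract an interval (β, β+ε) where y < 0
  obtain ⟨U0, hU0, hU0sub⟩ := eventually_nhdsWithin_iff.1 hevneg |>.exists_mem
  obtain ⟨ε, hε, hball⟩ := Metric.mem_nhds_iff.1 hU0
  have hyneg : ∀ t ∈ Ioo β (β + ε), y t < 0 := by
    intro t ht
    apply hU0sub
    · apply hball
      rw [Metric.mem_ball, Real.dist_eq, abs_lt]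
      constructor <;> [linarith [ht.1]; linarith [ht.2]]
    · exact mem_Ioi.2 ht.1
  -- x dips below B just right of β
  set t₂ : ℝ := β + ε / 2 with ht₂def
  have hβt₂ : β < t₂ := by simp only [ht₂def]; linarith
  have hxt₂ : x t₂ < B := by
    have hanti : StrictAntiOn x (Icc β (β + ε / 2)) := by
      apply strictAntiOn_of_deriv_neg (convex_Icc _ _) S.cx.continuousOn
      intro u hu
      rw [interior_Icc] at hu
      rw [(S.hx u).deriv]
      exact hyneg u ⟨hu.1, by linarith [hu.2]⟩
    have := hanti ⟨le_rfl, by linarith⟩ ⟨by linarith, le_rfl⟩ hβt₂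
    simpa [hBdef] using this
  -- eventually x exceeds B
  obtain ⟨tm, htm, hmin'⟩ :=
    isCompact_Icc.exists_isMinOn (nonempty_Icc.2 (by linarith [S.hT] : β ≤ β + T))
      S.cx.continuousOn
  have hmin : ∀ v ∈ Icc β (β + T), x tm ≤ x v := fun v hv => hmin' hv
  obtain ⟨n₀, hn₀⟩ := exists_nat_gt (max ((B - x tm) / (2 * π)) ((t₂ - β) / T))
  have hn₀1 : (B - x tm) / (2 * π) < n₀ := lt_of_le_of_lt (le_max_left _ _) hn₀
  have hn₀2 : (t₂ - β) / T < n₀ := lt_of_le_of_lt (le_max_right _ _) hn₀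
  rw [div_lt_iff₀ (by linarith : (0:ℝ) < 2 * π)] at hn₀1
  rw [div_lt_iff₀ S.hT] at hn₀2
  set N : ℝ := β + n₀ * T with hNdef
  have ht₂N : t₂ < N := by simp only [hNdef]; linarith
  have hbig : ∀ t, N ≤ t → B < x t := by
    intro t ht
    set k := toIcoDiv S.hT β t with hk
    set u := toIcoMod S.hT β t with hu
    have humem : u ∈ Ico β (β + T) := toIcoMod_mem_Ico S.hT β t
    have heq : u + (k : ℝ) * T = t := by
      have := toIcoMod_add_toIcoDiv_zsmul S.hT β t
      rw [zsmul_eq_mul] at this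
      exact_mod_cast this
    have hxt : x t = x u + (k : ℝ) * (2 * π) := by
      have := S.x_int k u
      rw [heq] at this
      exact this
    have hkn : (n₀ : ℤ) ≤ k := by
      have h1 : (k : ℝ) * T = t - u := by linarith
      have h2 : t - u > (n₀ : ℝ) * T - T := by
        have := humem.2
        simp only [hNdef] at ht
        linarith
      have hT' := S.hT
      have h3 : ((n₀ : ℝ)) - 1 < (k : ℝ) := by nlinarith
      have h4 : ((n₀ : ℤ) : ℝ) < ((k + 1 : ℤ) : ℝ) := by push_cast; linarith
      have h5 : (n₀ : ℤ) < k + 1 := by exact_mod_cast h4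
      exact Int.lt_add_one_iff.mp h5
    have hxu : x tm ≤ x u := hmin u (Ico_subset_Icc_self humem)
    have hk2π : (n₀ : ℝ) * (2 * π) ≤ (k : ℝ) * (2 * π) := by
      have : ((n₀ : ℤ) : ℝ) ≤ (k : ℝ) := by exact_mod_cast hkn
      push_cast at this ⊢
      nlinarith
    rw [hxt]
    push_cast at hk2π ⊢
    nlinarith
  have hxN : B < x N := hbig N le_rfl
  -- the last time x equals B
  set U : Set ℝ := {t | x t = B} ∩ Icc t₂ N with hUdef
  have hUne : U.Nonempty := by
    have hcont : ContinuousOn x (Icc t₂ N) := S.cx.continuousOn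
    have hmem : B ∈ Icc (x t₂) (x N) := ⟨le_of_lt hxt₂, le_of_lt hxN⟩
    obtain ⟨u, hu, hxu⟩ := intermediate_value_Icc (le_of_lt ht₂N) hcont hmem
    exact ⟨u, hxu, hu⟩
  have hUcl : IsClosed U := (isClosed_eq S.cx continuous_const).inter isClosed_Icc
  have hUbdd : BddAbove U := ⟨N, fun z hz => hz.2.2⟩
  set τ := sSup U with hτdef
  have hτU : τ ∈ U := hUcl.csSup_mem hUne hUbdd
  have hxτ : x τ = B := hτU.1
  have hβτ : β < τ := lt_of_lt_of_le hβt₂ hτU.2.1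
  have hafter : ∀ t, τ < t → B < x t := by
    intro t ht
    rcases le_or_gt t N with hle | hgt
    · by_contra hxle
      push_neg at hxle
      rcases lt_or_eq_of_le hxle with hlt | heqB
      · have hcont : ContinuousOn x (Icc t N) := S.cx.continuousOn
        have hmem : B ∈ Icc (x t) (x N) := ⟨le_of_lt hlt, le_of_lt hxN⟩
        obtain ⟨u, hu, hxu⟩ := intermediate_value_Icc hle hcont hmem
        have huU : u ∈ U := ⟨hxu, le_trans hτU.2.1 (le_trans (le_of_lt ht) hu.1), hu.2⟩
        have := le_csSup hUbdd huU
        linarith [hu.1]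
      · have htU : t ∈ U := ⟨heqB, le_trans hτU.2.1 (le_of_lt ht), hle⟩
        have := le_csSup hUbdd htU
        linarith
    · exact hbig t (le_of_lt hgt)
  -- y τ ≥ 0
  have hyτnn : 0 ≤ y τ := by
    by_contra hneg
    push_neg at hneg
    have hev := slope_right_neg (S.hx τ) hneg
    obtain ⟨t, hxt, hτt⟩ := (hev.and eventually_mem_nhdsWithin).exists
    rw [hxτ] at hxt
    exact (not_lt.2 (le_of_lt (hafter t hτt))) hxt
  rcases eq_or_lt_of_le hyτnn with hyτ0 | hyτpos
  · -- repeated point (B, 0)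
    exact S.no_rep hβτ (by rw [hxτ]) (by rw [← hyτ0, hyβ])
  · -- positive arc through τ
    obtain ⟨α', β', hA', hτmem, hleft, -⟩ := S.exists_arc hyτpos
    have hβα' : β ≤ α' := hleft β hyβ (le_of_lt hβτ)
    set A' := x α' with hA'def
    set B' := x β' with hB'def
    have hmono' := S.arc_strictMono hA'
    have hA'B : A' < B := by
      have := hmono' ⟨le_rfl, le_of_lt hA'.1⟩ ⟨le_of_lt hτmem.1, le_of_lt hτmem.2⟩ hτmem.1
      rwa [hxτ] at this
    have hBB' : B < B' := by
      have := hmono' ⟨le_of_lt hτmem.1, le_of_lt hτmem.2⟩ ⟨le_of_lt hA'.1, le_rfl⟩ hτmem.2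
      rwa [hxτ] at this
    rcases le_or_gt A' A with hle | hAA'
    · -- the arc (α', β') has larger span than the maximal one
      have := hmax α' β' hA'
      simp only [← hA'def, ← hB'def, ← hAdef, ← hBdef] at this
      linarith
    · -- crossing configuration: build an intersection point
      obtain ⟨σ₂, hσ₂mem, hxσ₂⟩ := intermediate_value_Icc (le_of_lt hA'.1)
        (S.cx.continuousOn) ⟨le_of_lt hA'B, le_of_lt hBB'⟩
      have hσ₂Ioo : σ₂ ∈ Ioo α' β' := by
        constructor
        · rcases lt_or_eq_of_le hσ₂mem.1 with h | h
          · exact h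
          · exfalso; rw [← h] at hxσ₂; simp only [← hA'def] at hxσ₂; linarith
        · rcases lt_or_eq_of_le hσ₂mem.2 with h | h
          · exact h
          · exfalso; rw [h] at hxσ₂; simp only [← hB'def] at hxσ₂; linarith
      -- inverse of x on [α, β]
      have hxinj : InjOn x (Icc α β) := hmono.injOn
      have hxsurj : Icc A B ⊆ x '' Icc α β :=
        intermediate_value_Icc (le_of_lt hA.1) S.cx.continuousOn
      set F : Icc α β → Icc A B := fun r =>
        ⟨x r, hmono.monotoneOn (by exact ⟨le_rfl, le_of_lt hA.1⟩) r.2 r.2.1,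
          hmono.monotoneOn r.2 (by exact ⟨le_of_lt hA.1, le_rfl⟩) r.2.2⟩ with hF
      have hFcont : Continuous F := (S.cx.comp continuous_subtype_val).subtype_mk _
      have hFbij : Function.Bijective F := by
        constructor
        · intro r s h
          exact Subtype.ext (hxinj r.2 s.2 (congrArg Subtype.val h))
        · intro v
          obtain ⟨r, hr, hxr⟩ := hxsurj v.2
          exact ⟨⟨r, hr⟩, Subtype.ext hxr⟩
      set e : Icc α β ≃ Icc A B := Equiv.ofBijective F hFbij with he
      have hecont : Continuous e := hFcont
      set homeo := hecont.homeoOfEquivCompactToT2 with hhomeo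
      set ψ : ℝ → ℝ := fun u => (homeo.symm (Set.projIcc A B (le_of_lt hAB) u) : ℝ) with hψ
      have hψcont : Continuous ψ :=
        continuous_subtype_val.comp (homeo.symm.continuous.comp continuous_projIcc)
      have hψmem : ∀ u, ψ u ∈ Icc α β := fun u => (homeo.symm _).2
      have hψx : ∀ u ∈ Icc A B, x (ψ u) = u := by
        intro u hu
        have h1 : homeo (homeo.symm (Set.projIcc A B (le_of_lt hAB) u))
            = Set.projIcc A B (le_of_lt hAB) u := homeo.apply_symm_apply _
        have h2 : (homeo (homeo.symm (Set.projIcc A B (le_of_lt hAB) u)) : ℝ)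
            = x (ψ u) := rfl
        rw [h1] at h2
        rw [Set.projIcc_of_mem _ hu] at h2
        exact h2.symm
      -- the comparison function
      set g : ℝ → ℝ := fun s => y s - y (ψ (x s)) with hg
      have hgcont : Continuous g := S.cy.sub (S.cy.comp (hψcont.comp S.cx))
      have hvals : ∀ s ∈ Icc α' σ₂, x s ∈ Icc A B := by
        intro s hs
        have hs' : s ∈ Icc α' β' := ⟨hs.1, le_trans hs.2 hσ₂mem.2⟩
        constructor
        · have : A' ≤ x s := hmono'.monotoneOn ⟨le_rfl, le_of_lt hA'.1⟩ hs' hs.1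
          linarith
        · have : x s ≤ x σ₂ := hmono'.monotoneOn hs' (⟨hσ₂mem.1, hσ₂mem.2⟩) hs.2
          rw [hxσ₂] at this
          exact this
      have hgα' : g α' < 0 := by
        have hxα'mem : A' ∈ Icc A B := ⟨le_of_lt hAA', le_of_lt hA'B⟩
        have hxψ : x (ψ A') = A' := hψx A' hxα'mem
        have hψIoo : ψ A' ∈ Ioo α β := by
          have hm := hψmem A'
          constructor
          · rcases lt_or_eq_of_le hm.1 with h | h
            · exact h
            · exfalso; rw [← h] at hxψ; simp only [← hAdef] at hxψ; linarith
          · rcases lt_or_eq_of_le hm.2 with h | h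
            · exact h
            · exfalso; rw [h] at hxψ; simp only [← hBdef] at hxψ; linarith
        have hypos := hA.2.2.2 _ hψIoo
        simp only [hg]
        rw [hA'.2.1]
        simp only [← hA'def]
        linarith
      have hgσ₂ : 0 < g σ₂ := by
        have hxψB : x (ψ B) = B := hψx B ⟨le_of_lt hAB, le_rfl⟩
        have hψB : ψ B = β := by
          apply hxinj (hψmem B) ⟨le_of_lt hA.1, le_rfl⟩
          rw [hxψB]
        have hyσ₂ := hA'.2.2.2 σ₂ hσ₂Ioo
        simp only [hg]
        rw [hxσ₂, hψB, hyβ]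
        linarith
      have hα'σ₂ : α' ≤ σ₂ := hσ₂mem.1
      obtain ⟨sstar, hsmem, hgs⟩ := intermediate_value_Icc hα'σ₂ hgcont.continuousOn
        ⟨le_of_lt hgα', le_of_lt hgσ₂⟩
      have hgs' : y sstar - y (ψ (x sstar)) = 0 := hgs
      set r : ℝ := ψ (x sstar) with hrdef
      have hxsmem : x sstar ∈ Icc A B := hvals sstar hsmem
      have hxr : x r = x sstar := hψx _ hxsmem
      have hyr : y r = y sstar := by linarith
      have hrβ : r ≤ β := (hψmem _).2
      have hchain : r ≤ sstar := le_trans hrβ (le_trans hβα' hsmem.1)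
      rcases lt_or_eq_of_le hchain with hlt2 | heq2
      · exact S.no_rep hlt2 hxr hyr
      · have h2' : α' ≤ sstar := hsmem.1
        have hβα'eq : β = α' := by
          rw [← heq2] at h2'
          exact le_antisymm hβα' (le_trans h2' hrβ)
        have hcontra : A' = B := by rw [hA'def, ← hβα'eq, hBdef]
        linarith

end JosephsonAux

open JosephsonAux in
/-- A limit cycle of the second kind of the Josephson system
`x′ = y`, `y′ = −(sin x − a) − (b + c·cos x)·y` (a periodic orbit winding
around the cylinder) does not intersect the line `y = 0`, provided
`a ≥ 0`, `b > 0`. -/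
theorem josephson_second_kind_cycle_avoids_zero
    (a b c : ℝ) (ha : 0 ≤ a) (hb : 0 < b)
    (x y : ℝ → ℝ)
    (hx : ∀ t : ℝ, HasDerivAt x (y t) t)
    (hy : ∀ t : ℝ, HasDerivAt y
      (-(Real.sin (x t) - a) - (b + c * Real.cos (x t)) * y t) t)
    (T : ℝ) (hT : 0 < T)
    (hperiodic : ∀ t : ℝ, y (t + T) = y t ∧
      (x (t + T) = x t + 2 * Real.pi ∨ x (t + T) = x t - 2 * Real.pi)) :
    ∀ t : ℝ, y t ≠ 0 := by
  intro t₀ h0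
  have hπ := Real.pi_pos
  have hpy : ∀ t, y (t + T) = y t := fun t => (hperiodic t).1
  have hcx : Continuous x := continuous_iff_continuousAt.2 fun t => (hx t).continuousAt
  by_cases hcase : ∀ s, x (s + T) = x s + 2 * Real.pi
  · -- positive winding
    have S : Bad a b c x y T :=
      { hx := hx
        hy := fun t => by
          have := hy t
          simpa [G] using this
        hT := hT
        hpy := hpy
        hpx := hcase
        hzero := ⟨t₀, h0⟩ }
    exact S.derive_false
  · -- negative winding: first show it holds for every `s`
    push_neg at hcase
    obtain ⟨s₁, hs₁⟩ := hcase
    have hm1 : x (s₁ + T) = x s₁ - 2 * Real.pi := by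
      rcases (hperiodic s₁).2 with hp | hm
      · exact absurd hp hs₁
      · exact hm
    have hminus : ∀ s, x (s + T) = x s - 2 * Real.pi := by
      intro s
      rcases (hperiodic s).2 with hp | hm
      · exfalso
        -- IVT between s and s₁
        set w : ℝ → ℝ := fun u => x (u + T) - x u with hw
        have hwc : Continuous w := (hcx.comp (continuous_id.add continuous_const)).sub hcx
        have hws : w s = 2 * Real.pi := by simp only [hw]; rw [hp]; ring
        have hws₁ : w s₁ = -(2 * Real.pi) := by simp only [hw]; rw [hm1]; ring
        have hzero : ∃ u, w u = 0 := by
          rcases le_total s s₁ with h | h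
          · have hmem : (0:ℝ) ∈ Icc (w s₁) (w s) :=
              ⟨by rw [hws₁]; linarith, by rw [hws]; linarith⟩
            obtain ⟨u, _, hu⟩ := intermediate_value_Icc' h hwc.continuousOn hmem
            exact ⟨u, hu⟩
          · have hmem : (0:ℝ) ∈ Icc (w s₁) (w s) :=
              ⟨by rw [hws₁]; linarith, by rw [hws]; linarith⟩
            obtain ⟨u, _, hu⟩ := intermediate_value_Icc h hwc.continuousOn hmem
            exact ⟨u, hu⟩
        obtain ⟨u, hu⟩ := hzero
        have hwu : w u = 2 * Real.pi ∨ w u = -(2 * Real.pi) := by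
          rcases (hperiodic u).2 with h1 | h1
          · left; simp only [hw]; rw [h1]; ring
          · right; simp only [hw]; rw [h1]; ring
        rcases hwu with h1 | h1 <;> rw [hu] at h1 <;> linarith
      · exact hm
    -- mirror the solution
    set xm : ℝ → ℝ := fun t => -x t with hxm
    set ym : ℝ → ℝ := fun t => -y t with hym
    have S : Bad (-a) b c xm ym T :=
      { hx := fun t => by
          have := (hx t).neg
          exact this
        hy := fun t => by
          have h1 := (hy t).neg
          have h2 : -(-(Real.sin (x t) - a) - (b + c * Real.cos (x t)) * y t)
              = G (-a) b c (xm t, ym t) := by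
            simp [G, hxm, hym, Real.sin_neg, Real.cos_neg]
            ring
          rw [h2] at h1
          exact h1
        hT := hT
        hpy := fun t => by simp [hym, hpy t]
        hpx := fun t => by
          simp only [hxm, hminus t]
          ring
        hzero := ⟨t₀, by simp [hym, h0]⟩ }
    exact S.derive_false
end

section
/- Let a > 1, b > 0 and c ∈ ℝ. Then the Abel equation (E) has exactly one 2π-periodic solution y with y(x) ≠ 0 for all x, and this solution satisfies y(x) > 0 for all x. -/
open Real


open Set Real

lemma global_ode_exists {v : ℝ → ℝ → ℝ} {K : NNReal} {C : ℝ}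
    (hlip : ∀ t, LipschitzWith K (v t))
    (hcont : ∀ x, Continuous fun t => v t x)
    (hC : 0 ≤ C)
    (hbound : ∀ t x, |v t x| ≤ C) (x₀ : ℝ) :
    ∃ f : ℝ → ℝ, f 0 = x₀ ∧ ∀ t, HasDerivAt f (v t (f t)) t := by
  -- solutions on [-(n+1), n+1]
  have hex : ∀ n : ℕ, ∃ f : ℝ → ℝ, f 0 = x₀ ∧
      ∀ t ∈ Ioo (-((n:ℝ)+1)) ((n:ℝ)+1), HasDerivAt f (v t (f t)) t := by
    intro n
    set T : ℝ := (n:ℝ)+1 with hT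
    have hT0 : (0:ℝ) < T := by positivity
    have hpl : IsPicardLindelof v (tmin := -T) (tmax := T) ⟨0, by constructor <;> linarith⟩ x₀
        ⟨C*T, by positivity⟩ 0 ⟨C, hC⟩ K := by
      refine ⟨fun t _ => (hlip t).lipschitzOnWith,
        fun x _ => (hcont x).continuousOn, fun t _ x _ => ?_, ?_⟩
      · exact (Real.norm_eq_abs _).trans_le (hbound t x)
      · change C * max (T - 0) (0 - -T) ≤ C*T - ((0:NNReal):ℝ)
        rw [NNReal.coe_zero, sub_zero, sub_zero, zero_sub, neg_neg, max_self]
    obtain ⟨f, hf0, hf⟩ := hpl.exists_eq_forall_mem_Icc_hasDerivWithinAt₀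
    refine ⟨f, hf0, fun t ht => ?_⟩
    exact (hf t (Ioo_subset_Icc_self ht)).hasDerivAt (Icc_mem_nhds ht.1 ht.2)
  choose F hF0 hFd using hex
  have agree : ∀ p q : ℕ, ∀ t : ℝ, |t| < (p:ℝ)+1 → |t| < (q:ℝ)+1 → F p t = F q t := by
    have key : ∀ p q : ℕ, p ≤ q → ∀ t : ℝ, |t| < (p:ℝ)+1 → F p t = F q t := by
      intro p q hpq t ht
      have hpq' : (p:ℝ) + 1 ≤ (q:ℝ) + 1 := by
        have : (p:ℝ) ≤ q := Nat.cast_le.mpr hpq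
        linarith
      have hsub : Ioo (-((p:ℝ)+1)) ((p:ℝ)+1) ⊆ Ioo (-((q:ℝ)+1)) ((q:ℝ)+1) :=
        Ioo_subset_Ioo (by linarith) hpq'
      have h0 : (0:ℝ) ∈ Ioo (-((p:ℝ)+1)) ((p:ℝ)+1) := by
        constructor <;> [linarith [Nat.cast_nonneg (α := ℝ) p]; positivity]
      have := ODE_solution_unique_of_mem_Ioo (v := v) (s := fun _ => univ)
        (K := K) (fun t _ => (hlip t).lipschitzOnWith) h0
        (fun s hs => ⟨hFd p s hs, trivial⟩)
        (fun s hs => ⟨hFd q s (hsub hs), trivial⟩)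
        ((hF0 p).trans (hF0 q).symm)
      exact this (abs_lt.mp ht |>.imp (fun h => h) (fun h => h) |> fun h => ⟨h.1, h.2⟩)
    intro p q t hp hq
    rcases le_total p q with h | h
    · exact key p q h t hp
    · exact (key q p h t hq).symm
  refine ⟨fun t => F ⌊|t|⌋₊ t, ?_, ?_⟩
  · simpa using hF0 0
  · intro t
    set n : ℕ := ⌊|t|⌋₊ + 1 with hn
    have hlt : ∀ s : ℝ, |s| < (⌊|s|⌋₊ : ℝ) + 1 := fun s => Nat.lt_floor_add_one _
    have hev : (fun s => F ⌊|s|⌋₊ s) =ᶠ[nhds t] F n := by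
      filter_upwards [Metric.ball_mem_nhds t one_pos] with s hs
      have hs1 : |s| < (n:ℝ) + 1 := by
        have : |s - t| < 1 := by simpa [Real.dist_eq] using hs
        have h2 := hlt t
        have h3 : |s| ≤ |s - t| + |t| := by
          calc |s| = |s - t + t| := by ring_nf
          _ ≤ |s - t| + |t| := abs_add_le _ _
        have : |s| < |t| + 1 := by linarith
        have : |s| < (⌊|t|⌋₊ : ℝ) + 1 + 1 := by linarith
        simpa [hn, Nat.cast_add] using this
      exact agree _ n s (hlt s) hs1
    have htn : t ∈ Ioo (-((n:ℝ)+1)) ((n:ℝ)+1) := by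
      have := hlt t
      have hle : (⌊|t|⌋₊ : ℝ) + 1 ≤ (n:ℝ) + 1 := by simp [hn]
      have habs : |t| < (n:ℝ) + 1 := lt_of_lt_of_le this hle
      exact abs_lt.mp habs |> fun h => ⟨h.1, h.2⟩
    have hd := hFd n t htn
    have heq : F n t = F ⌊|t|⌋₊ t := agree n ⌊|t|⌋₊ t (htn |> fun h => abs_lt.mpr ⟨h.1, h.2⟩) (hlt t)
    have : HasDerivAt (fun s => F ⌊|s|⌋₊ s) (v t (F n t)) t := hd.congr_of_eventuallyEq hev
    simpa [← heq] using this

lemma global_ode_unique {v : ℝ → ℝ → ℝ} {K : NNReal}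
    (hlip : ∀ t, LipschitzWith K (v t)) {f g : ℝ → ℝ}
    (hf : ∀ t, HasDerivAt f (v t (f t)) t) (hg : ∀ t, HasDerivAt g (v t (g t)) t)
    {t₀ : ℝ} (h0 : f t₀ = g t₀) : f = g := by
  funext t
  have hT : (0:ℝ) < |t - t₀| + 1 := by positivity
  have h0m : t₀ ∈ Ioo (t₀ - (|t - t₀| + 1)) (t₀ + (|t - t₀| + 1)) := by
    constructor <;> linarith
  have := ODE_solution_unique_of_mem_Ioo (v := v) (s := fun _ => univ)
    (K := K) (fun s _ => (hlip s).lipschitzOnWith) h0m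
    (fun s _ => ⟨hf s, trivial⟩) (fun s _ => ⟨hg s, trivial⟩) h0
  apply this
  have := abs_lt.mp (lt_of_le_of_lt (le_refl |t - t₀|) (by linarith : |t - t₀| < |t - t₀| + 1))
  constructor <;> linarith

noncomputable def mA (a b c : ℝ) : ℝ := (a-1)/(2*(b+|c|))

noncomputable def GA (a b c : ℝ) (x u : ℝ) : ℝ :=
  (a - Real.sin x)/(max u (mA a b c)) - (b + c*Real.cos x)

section lemmas
variable {a b c : ℝ}

lemma mA_pos (ha : 1 < a) (hb : 0 < b) : 0 < mA a b c :=
  div_pos (by linarith) (by positivity)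

lemma mA_key (ha : 1 < a) : (a - 1) / mA a b c = 2*(b+|c|) := by
  rw [mA, div_div_eq_mul_div, mul_comm, mul_div_assoc,
    div_self (ne_of_gt (by linarith : (0:ℝ) < a - 1)), mul_one]

lemma fieldbd (hb : 0 < b) : ∀ x : ℝ, |b + c * Real.cos x| ≤ b + |c| := by
  intro x
  calc |b + c * Real.cos x| ≤ |b| + |c * Real.cos x| := abs_add_le _ _
  _ ≤ b + |c| * 1 := by
      rw [abs_of_pos hb, abs_mul]
      gcongr
      exact abs_cos_le_one x
  _ = b + |c| := by ring

lemma numer_mem (ha : 1 < a) : ∀ x : ℝ, a - 1 ≤ a - Real.sin x ∧ a - Real.sin x ≤ a + 1 := by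
  intro x
  constructor <;> nlinarith [Real.neg_one_le_sin x, Real.sin_le_one x]

lemma GA_low (ha : 1 < a) (hb : 0 < b) (x u : ℝ) (hu : u ≤ mA a b c) :
    b + |c| ≤ GA a b c x u := by
  have hm := mA_pos (c := c) ha hb
  rw [GA, max_eq_right hu]
  have h1 : (a - 1) / mA a b c ≤ (a - Real.sin x) / mA a b c := by
    gcongr
    exact Real.sin_le_one x
  rw [mA_key ha] at h1
  obtain ⟨hl, hr⟩ := abs_le.mp (fieldbd hb x)
  linarith

lemma GA_bound (ha : 1 < a) (hb : 0 < b) (x u : ℝ) :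
    |GA a b c x u| ≤ (a+1)/(mA a b c) + (b + |c|) := by
  have hm := mA_pos (c := c) ha hb
  have hmax : mA a b c ≤ max u (mA a b c) := le_max_right _ _
  have hmaxpos : 0 < max u (mA a b c) := lt_of_lt_of_le hm hmax
  rw [GA]
  calc |(a - Real.sin x)/(max u (mA a b c)) - (b + c*Real.cos x)|
      ≤ |(a - Real.sin x)/(max u (mA a b c))| + |b + c*Real.cos x| := abs_sub _ _
  _ ≤ (a+1)/(mA a b c) + (b + |c|) := by
      gcongr
      · rw [abs_div, abs_of_pos hmaxpos,
          abs_of_nonneg (by linarith [(numer_mem ha x).1] : (0:ℝ) ≤ a - Real.sin x)]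
        exact div_le_div₀ (by linarith) (numer_mem ha x).2 hm hmax
      · exact fieldbd hb x

lemma GA_lipschitz (ha : 1 < a) (hb : 0 < b) (x : ℝ) :
    LipschitzWith (Real.toNNReal ((a+1)/(mA a b c)^2)) (GA a b c x) := by
  have hm := mA_pos (c := c) ha hb
  apply LipschitzWith.of_dist_le_mul
  intro u v
  simp only [Real.dist_eq]
  set m := mA a b c with hmdef
  set p := max u m with hp
  set q := max v m with hq
  have hpm : m ≤ p := le_max_right _ _
  have hqm : m ≤ q := le_max_right _ _
  have hp0 : 0 < p := lt_of_lt_of_le hm hpm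
  have hq0 : 0 < q := lt_of_lt_of_le hm hqm
  have hnum := numer_mem (a := a) ha x
  have hdiff : GA a b c x u - GA a b c x v = (a - Real.sin x) * ((q - p)/(p*q)) := by
    simp only [GA, ← hmdef, ← hp, ← hq]
    field_simp
    ring
  rw [hdiff]
  have h1 : |q - p| ≤ |u - v| := by
    have := abs_max_sub_max_le_abs v u m
    rw [← hp, ← hq] at this
    rwa [abs_sub_comm (u) (v)]
  have hsn : (0:ℝ) ≤ a - Real.sin x := by linarith [hnum.1]
  have hpq : (0:ℝ) < p*q := by positivity
  have h2 : |(a - Real.sin x) * ((q - p)/(p*q))| = (a - Real.sin x) * (|q - p|/(p*q)) := by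
    rw [abs_mul, abs_of_nonneg hsn, abs_div, abs_of_pos hpq]
  rw [h2]
  have hcoe : ((Real.toNNReal ((a+1)/m^2) : NNReal) : ℝ) = (a+1)/m^2 :=
    Real.coe_toNNReal _ (by positivity)
  rw [hcoe]
  have hm2 : m^2 ≤ p*q := by nlinarith
  calc (a - Real.sin x) * (|q - p|/(p*q)) ≤ (a+1) * (|u - v|/m^2) := by
        apply mul_le_mul hnum.2 _ (by positivity) (by linarith [hnum.1])
        exact div_le_div₀ (abs_nonneg _) h1 (by positivity) hm2
  _ = (a+1)/m^2 * |u - v| := by ring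

lemma GA_cont (ha : 1 < a) (hb : 0 < b) {f : ℝ → ℝ} (hf : Continuous f) :
    Continuous fun x => GA a b c x (f x) := by
  have hm := mA_pos (c := c) ha hb
  apply Continuous.sub
  · apply Continuous.div (by continuity) (by continuity)
    intro x
    have h1 : mA a b c ≤ max (f x) (mA a b c) := le_max_right _ _
    have := lt_of_lt_of_le hm h1
    exact ne_of_gt this
  · continuity

lemma GA_eq_of_ge (x u : ℝ) (hu : mA a b c ≤ u) :
    GA a b c x u = (a - Real.sin x)/u - (b + c*Real.cos x) := by
  rw [GA, max_eq_left hu]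

end lemmas

lemma abel_u_exists {a b c : ℝ} (ha : 1 < a) (hb : 0 < b) :
    ∃ u : ℝ → ℝ, (∀ t, mA a b c ≤ u t) ∧ (∀ t, u (t + 2*π) = u t) ∧
      (∀ t, HasDerivAt u ((a - Real.sin t)/(u t) - (b + c*Real.cos t)) t) := by
  have hm : 0 < mA a b c := mA_pos ha hb
  obtain ⟨m, hmdef⟩ : ∃ m : ℝ, m = mA a b c := ⟨_, rfl⟩
  rw [← hmdef] at hm ⊢
  obtain ⟨C, hCdef⟩ : ∃ C : ℝ, C = (a+1)/m + (b + |c|) := ⟨_, rfl⟩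
  have hC : 0 < C := by rw [hCdef]; positivity
  obtain ⟨K, hKdef⟩ : ∃ K : NNReal, K = Real.toNNReal ((a+1)/m^2) := ⟨_, rfl⟩
  -- the global flow
  have hexists : ∀ u0 : ℝ, ∃ f : ℝ → ℝ, f 0 = u0 ∧ ∀ t, HasDerivAt f (GA a b c t (f t)) t := by
    intro u0
    refine global_ode_exists (v := GA a b c) (K := K) (fun t => ?_)
      (fun x => GA_cont ha hb continuous_const) hC.le
      (fun t x => ?_) u0
    · rw [hKdef, hmdef]; exact GA_lipschitz ha hb t
    · rw [hCdef, hmdef]; exact GA_bound ha hb t x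
  choose sol hsol0 hsold using hexists
  have hsolc : ∀ u0, Continuous (sol u0) := fun u0 =>
    (fun t => (hsold u0 t).differentiableAt) |> Differentiable.continuous
  -- drift bounds
  have hup : ∀ u0 t, 0 ≤ t → sol u0 t ≤ u0 + C*t := by
    intro u0 t ht
    have hdiff : Differentiable ℝ (fun s => sol u0 s - C*s) := by
      intro s
      exact ((hsold u0 s).sub ((hasDerivAt_id s).const_mul C)).differentiableAt
    have hmono : Antitone (fun s => sol u0 s - C*s) := by
      apply antitone_of_deriv_nonpos hdiff
      intro s
      have hd : HasDerivAt (fun s => sol u0 s - C*s) (GA a b c s (sol u0 s) - C) s := by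
        exact ((hsold u0 s).sub ((hasDerivAt_id s).const_mul C)).congr_deriv (by ring)
      rw [hd.deriv]
      have h2 := abs_le.mp (GA_bound (c := c) ha hb s (sol u0 s))
      rw [← hmdef] at h2
      linarith [h2.2, hCdef]
    have := hmono ht
    simp only [mul_zero, sub_zero, hsol0] at this
    linarith
  have hdown : ∀ u0 t, 0 ≤ t → u0 - C*t ≤ sol u0 t := by
    intro u0 t ht
    have hdiff : Differentiable ℝ (fun s => sol u0 s + C*s) := by
      intro s
      exact ((hsold u0 s).add ((hasDerivAt_id s).const_mul C)).differentiableAt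
    have hmono : Monotone (fun s => sol u0 s + C*s) := by
      apply monotone_of_deriv_nonneg hdiff
      intro s
      have hd : HasDerivAt (fun s => sol u0 s + C*s) (GA a b c s (sol u0 s) + C) s := by
        exact ((hsold u0 s).add ((hasDerivAt_id s).const_mul C)).congr_deriv (by ring)
      rw [hd.deriv]
      have h2 := abs_le.mp (GA_bound (c := c) ha hb s (sol u0 s))
      rw [← hmdef] at h2
      linarith [h2.1, hCdef]
    have := hmono ht
    simp only [mul_zero, add_zero, hsol0] at this
    linarith
  -- invariance of u ≥ m
  have hinv : ∀ u0, m ≤ u0 → ∀ t, 0 ≤ t → m ≤ sol u0 t := by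
    intro u0 hu0 t1 ht1
    by_contra hcon
    push_neg at hcon
    set A : Set ℝ := Icc 0 t1 ∩ (sol u0)⁻¹' (Ici m) with hA
    have hA0 : (0:ℝ) ∈ A := ⟨⟨le_refl 0, ht1⟩, by rw [mem_preimage, hsol0]; exact hu0⟩
    have hAne : A.Nonempty := ⟨0, hA0⟩
    have hAbdd : BddAbove A := BddAbove.mono (inter_subset_left) bddAbove_Icc
    have hAcl : IsClosed A := IsClosed.inter isClosed_Icc (IsClosed.preimage (hsolc u0) isClosed_Ici)
    have hsA : sSup A ∈ A := hAcl.csSup_mem hAne hAbdd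
    set s := sSup A with hs
    have hsmem : s ∈ Icc 0 t1 := hsA.1
    have hsm : m ≤ sol u0 s := hsA.2
    have hst1 : s ≠ t1 := by
      intro h
      rw [h] at hsm
      linarith
    have hslt : s < t1 := lt_of_le_of_ne hsmem.2 hst1
    have hlow : ∀ r ∈ Ioc s t1, sol u0 r < m := by
      intro r hr
      by_contra hcon2
      push_neg at hcon2
      have : r ∈ A := ⟨⟨le_trans hsmem.1 hr.1.le, hr.2⟩, hcon2⟩
      have := le_csSup hAbdd this
      exact absurd (lt_of_lt_of_le hr.1 this) (lt_irrefl _)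
    have hmono : StrictMonoOn (sol u0) (Icc s t1) := by
      apply strictMonoOn_of_deriv_pos (convex_Icc s t1) ((hsolc u0).continuousOn)
      intro r hr
      rw [interior_Icc] at hr
      rw [(hsold u0 r).deriv]
      have hrlow : sol u0 r < m := hlow r ⟨hr.1, hr.2.le⟩
      have hrlow' : sol u0 r ≤ mA a b c := hmdef ▸ hrlow.le
      have := GA_low (c := c) ha hb r (sol u0 r) hrlow'
      have hbc : (0:ℝ) < b + |c| := by positivity
      linarith
    have := hmono (left_mem_Icc.mpr hslt.le) (right_mem_Icc.mpr hslt.le) hslt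
    linarith
  -- Poincaré map continuity via Gronwall
  have hpi : (0:ℝ) < 2*π := by positivity
  have hlipGA : ∀ t, LipschitzWith K (GA a b c t) := fun t => by
    rw [hKdef, hmdef]; exact GA_lipschitz ha hb t
  have hgron : ∀ r s : ℝ, dist (sol r (2*π)) (sol s (2*π)) ≤ dist r s * Real.exp (K * (2*π)) := by
    intro r s
    have h := dist_le_of_trajectories_ODE (v := GA a b c) (K := K) (δ := dist r s)
      hlipGA ((hsolc r).continuousOn)
      (fun t _ => (hsold r t).hasDerivWithinAt)
      ((hsolc s).continuousOn)
      (fun t _ => (hsold s t).hasDerivWithinAt)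
      (le_of_eq (by rw [hsol0, hsol0]))
      (2*π) (right_mem_Icc.mpr hpi.le)
    simpa using h
  have hPcont : Continuous fun r => sol r (2*π) := by
    apply LipschitzWith.continuous (K := Real.toNNReal (Real.exp (K * (2*π))))
    apply LipschitzWith.of_dist_le_mul
    intro r s
    rw [Real.coe_toNNReal _ (Real.exp_nonneg _)]
    calc dist (sol r (2*π)) (sol s (2*π)) ≤ dist r s * Real.exp (K*(2*π)) := hgron r s
    _ = Real.exp (K*(2*π)) * dist r s := mul_comm _ _
  -- upper fixed-point-free point U
  obtain ⟨D, hDdef⟩ : ∃ D : ℝ, D = max m (2*(a+1)/b) := ⟨_, rfl⟩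
  have hDm : m ≤ D := hDdef ▸ le_max_left _ _
  have hDb : 2*(a+1)/b ≤ D := hDdef ▸ le_max_right _ _
  have hD0 : 0 < D := lt_of_lt_of_le hm hDm
  obtain ⟨U, hUdef⟩ : ∃ U : ℝ, U = 2*π*C + D := ⟨_, rfl⟩
  have hUD : D ≤ U := by
    rw [hUdef]
    nlinarith [hC, hpi]
  have hmU : m ≤ U := le_trans hDm hUD
  have hUlow : ∀ t ∈ Icc 0 (2*π), D ≤ sol U t := by
    intro t ht
    have h1 := hdown U t ht.1
    have hct : C*t ≤ C*(2*π) := mul_le_mul_of_nonneg_left ht.2 hC.le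
    have : U - C*(2*π) = D := by rw [hUdef]; ring
    linarith
  have hfub : ∀ t ∈ Icc 0 (2*π), GA a b c t (sol U t) ≤ -b/2 - c*Real.cos t := by
    intro t ht
    have hDle := hUlow t ht
    have hge : mA a b c ≤ sol U t := by rw [← hmdef]; linarith
    rw [GA_eq_of_ge t _ hge]
    have hsolpos : 0 < sol U t := lt_of_lt_of_le hD0 hDle
    have hDb0 : 0 < 2*(a+1)/b := by positivity
    have h1 : (a - Real.sin t)/(sol U t) ≤ (a+1)/(sol U t) :=
      div_le_div₀ (by linarith) (by nlinarith [Real.neg_one_le_sin t]) hsolpos le_rfl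
    have h2 : (a+1)/(sol U t) ≤ (a+1)/(2*(a+1)/b) :=
      div_le_div₀ (by linarith) le_rfl hDb0 (by linarith)
    have h3 : (a+1)/(2*(a+1)/b) = b/2 := by
      rw [div_div_eq_mul_div]
      rw [mul_comm (a+1) b, mul_div_assoc]
      have h4 : (a+1)/(2*(a+1)) = 1/2 := by
        rw [div_eq_div_iff (by positivity : (0:ℝ) < 2*(a+1)).ne' (two_ne_zero)]
        ring
      rw [h4]
      ring
    rw [h3] at h2
    linarith
  have hcont2 : Continuous fun t => GA a b c t (sol U t) := GA_cont ha hb (hsolc U)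
  have hFTC : sol U (2*π) - sol U 0 = ∫ t in (0:ℝ)..(2*π), GA a b c t (sol U t) :=
    (intervalIntegral.integral_eq_sub_of_hasDerivAt
      (fun t _ => hsold U t) (hcont2.intervalIntegrable _ _)).symm
  have hIb : (∫ t in (0:ℝ)..(2*π), GA a b c t (sol U t)) ≤
      ∫ t in (0:ℝ)..(2*π), (-b/2 - c*Real.cos t) := by
    apply intervalIntegral.integral_mono_on hpi.le (hcont2.intervalIntegrable _ _)
      (((continuous_const).sub (continuous_const.mul Real.continuous_cos)).intervalIntegrable _ _) hfub
  have hIeval : (∫ t in (0:ℝ)..(2*π), (-b/2 - c*Real.cos t)) = -(π*b) := by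
    rw [intervalIntegral.integral_sub (g := fun t => c * Real.cos t) intervalIntegrable_const
        ((continuous_const.mul Real.continuous_cos).intervalIntegrable _ _),
      intervalIntegral.integral_const, intervalIntegral.integral_const_mul, integral_cos]
    simp [Real.sin_two_pi]
    ring
  have hPU : sol U (2*π) < U := by
    have : sol U 0 = U := hsol0 U
    nlinarith [hb, Real.pi_pos]
  -- fixed point by IVT
  have hPm : m ≤ sol m (2*π) := hinv m le_rfl (2*π) hpi.le
  have hivt := intermediate_value_Icc' hmU ((hPcont.sub continuous_id).continuousOn)
  have h0mem : (0:ℝ) ∈ Icc ((fun r => sol r (2*π) - r) U) ((fun r => sol r (2*π) - r) m) := by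
    constructor
    · simp only
      linarith
    · simp only
      linarith
  obtain ⟨ustar, hustar_mem, hPfix'⟩ := hivt h0mem
  have hPfix : sol ustar (2*π) = ustar := by
    have : sol ustar (2*π) - ustar = 0 := hPfix'
    linarith
  have hustar_low : m ≤ ustar := hustar_mem.1
  -- periodicity
  have hper : ∀ t, sol ustar (t + 2*π) = sol ustar t := by
    have hgl : (fun t => sol ustar (t + 2*π)) = sol ustar := by
      apply global_ode_unique (v := GA a b c) (K := K) hlipGA (t₀ := 0)
        _ (fun t => hsold ustar t)
      · rw [zero_add, hsol0, hPfix]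
      · intro t
        have h1 : HasDerivAt (fun t : ℝ => sol ustar (t + 2*π))
            (GA a b c (t + 2*π) (sol ustar (t + 2*π)) * 1) t :=
          HasDerivAt.comp t (hsold ustar (t+2*π)) ((hasDerivAt_id t).add_const (2*π))
        rw [mul_one] at h1
        have h2 : GA a b c (t + 2*π) (sol ustar (t + 2*π)) =
            GA a b c t (sol ustar (t + 2*π)) := by
          simp [GA, Real.sin_add_two_pi, Real.cos_add_two_pi]
        rwa [h2] at h1
    exact fun t => congrFun hgl t
  have hperN : ∀ (n : ℕ) (t : ℝ), sol ustar (t + n*(2*π)) = sol ustar t := by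
    intro n
    induction n with
    | zero => intro t; simp
    | succ k ih =>
        intro t
        have he : t + (k+1 : ℕ)*(2*π) = (t + 2*π) + k*(2*π) := by push_cast; ring
        rw [he, ih (t + 2*π), hper t]
  have hlowall : ∀ t, m ≤ sol ustar t := by
    intro t
    have hpige : (1:ℝ) ≤ 2*π := by nlinarith [Real.pi_gt_three]
    set n : ℕ := ⌈|t|⌉₊ with hn
    have hnt : |t| ≤ (n : ℝ) := Nat.le_ceil _
    have hnonneg : 0 ≤ t + n*(2*π) := by
      have h1 : -t ≤ |t| := neg_le_abs t
      have h2 : (n:ℝ) ≤ n*(2*π) := by nlinarith [Nat.cast_nonneg (α := ℝ) n]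
      linarith
    have := hinv ustar hustar_low (t + n*(2*π)) hnonneg
    rwa [hperN n t] at this
  refine ⟨sol ustar, fun t => hlowall t, hper, fun t => ?_⟩
  have := hsold ustar t
  rwa [GA_eq_of_ge t _ (hmdef ▸ hlowall t)] at this

lemma abel_u_unique {a b c : ℝ} (ha : 1 < a) (hb : 0 < b) {u w : ℝ → ℝ}
    (hul : ∀ t, mA a b c ≤ u t) (hup : ∀ t, u (t + 2*π) = u t)
    (hud : ∀ t, HasDerivAt u ((a - Real.sin t)/(u t) - (b + c*Real.cos t)) t)
    (hwl : ∀ t, mA a b c ≤ w t) (hwp : ∀ t, w (t + 2*π) = w t)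
    (hwd : ∀ t, HasDerivAt w ((a - Real.sin t)/(w t) - (b + c*Real.cos t)) t) :
    u = w := by
  have hm : 0 < mA a b c := mA_pos ha hb
  have hu0 : ∀ t, 0 < u t := fun t => lt_of_lt_of_le hm (hul t)
  have hw0 : ∀ t, 0 < w t := fun t => lt_of_lt_of_le hm (hwl t)
  have hucont : Continuous u :=
    Differentiable.continuous (fun t => (hud t).differentiableAt)
  have hwcont : Continuous w :=
    Differentiable.continuous (fun t => (hwd t).differentiableAt)
  set μ : ℝ → ℝ := fun t => -((a - Real.sin t)/(u t * w t)) with hμdef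
  have hμcont : Continuous μ := by
    apply Continuous.neg
    exact Continuous.div (by continuity) (hucont.mul hwcont)
      (fun t => (mul_pos (hu0 t) (hw0 t)).ne')
  have hμneg : ∀ t, μ t < 0 := by
    intro t
    have h1 : 0 < a - Real.sin t := by nlinarith [Real.sin_le_one t]
    have h2 : 0 < u t * w t := mul_pos (hu0 t) (hw0 t)
    have := div_pos h1 h2
    simp only [hμdef]
    linarith
  set I : ℝ → ℝ := fun t => ∫ s in (0:ℝ)..t, μ s with hIdef
  have hI : ∀ t, HasDerivAt I (μ t) t := fun t =>
    intervalIntegral.integral_hasDerivAt_right (hμcont.intervalIntegrable _ _)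
      (hμcont.stronglyMeasurableAtFilter _ _) hμcont.continuousAt
  set d : ℝ → ℝ := fun t => u t - w t with hddef
  have hdd : ∀ t, HasDerivAt d (μ t * d t) t := by
    intro t
    have h := (hud t).sub (hwd t)
    have heq : ((a - Real.sin t)/(u t) - (b + c*Real.cos t)) -
        ((a - Real.sin t)/(w t) - (b + c*Real.cos t)) = μ t * d t := by
      have h1 := (hu0 t).ne'
      have h2 := (hw0 t).ne'
      simp only [hμdef, hddef]
      field_simp
      ring
    rwa [heq] at h
  have hconst : ∀ t, d t * Real.exp (-(I t)) = d 0 := by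
    have hder : ∀ s, HasDerivAt (fun r => d r * Real.exp (-(I r))) 0 s := by
      intro s
      have h1 : HasDerivAt (fun r => Real.exp (-(I r))) (Real.exp (-(I s)) * (-(μ s))) s :=
        ((hI s).neg).exp
      have h2 := (hdd s).mul h1
      rw [show (0:ℝ) = μ s * d s * Real.exp (-(I s)) + d s * (Real.exp (-(I s)) * -(μ s)) by ring]
      exact h2
    intro t
    have hcz := is_const_of_deriv_eq_zero
      (fun s => ((hder s).differentiableAt : DifferentiableAt ℝ _ s))
      (fun s => (hder s).deriv) t 0
    have hI0 : I 0 = 0 := intervalIntegral.integral_same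
    simpa [hI0] using hcz
  have hdform : ∀ t, d t = d 0 * Real.exp (I t) := by
    intro t
    calc d t = d t * (Real.exp (-(I t)) * Real.exp (I t)) := by
          rw [← Real.exp_add, neg_add_cancel, Real.exp_zero, mul_one]
    _ = (d t * Real.exp (-(I t))) * Real.exp (I t) := by ring
    _ = d 0 * Real.exp (I t) := by rw [hconst t]
  have hd2π : d (2*π) = d 0 := by
    have h1 := hup 0
    have h2 := hwp 0
    rw [zero_add] at h1 h2
    simp only [hddef, h1, h2]
  have hI2π : I (2*π) < 0 := by
    have hpos : 0 < ∫ s in (0:ℝ)..(2*π), (-(μ s)) :=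
      intervalIntegral.intervalIntegral_pos_of_pos_on
        ((hμcont.neg).intervalIntegrable _ _)
        (fun x _ => by linarith [hμneg x]) (by positivity)
    rw [intervalIntegral.integral_neg] at hpos
    simp only [hIdef]
    linarith
  have hd0 : d 0 = 0 := by
    by_contra hne
    have h1 : d 0 * Real.exp (I (2*π)) = d 0 * 1 := by
      rw [mul_one]
      exact (hdform (2*π)).symm.trans hd2π
    have h2 : Real.exp (I (2*π)) = 1 := mul_left_cancel₀ hne h1
    rw [Real.exp_eq_one_iff] at h2
    linarith
  funext t
  have := hdform t
  rw [hd0, zero_mul] at this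
  have : u t - w t = 0 := this
  linarith

lemma abel_z_pos {a b c : ℝ} (ha : 1 < a) (hb : 0 < b) {z : ℝ → ℝ}
    (hd : ∀ x, HasDerivAt z ((b + c * Real.cos x) * (z x)^2 + (Real.sin x - a) * (z x)^3) x)
    (hp : ∀ x, z (x + 2*π) = z x) (hnz : ∀ x, z x ≠ 0) : ∀ x, 0 < z x := by
  have hzc : Continuous z := Differentiable.continuous (fun x => (hd x).differentiableAt)
  -- constant sign
  by_contra hcon
  push_neg at hcon
  obtain ⟨x0, hx0⟩ := hcon
  have hx0neg : z x0 < 0 := lt_of_le_of_ne hx0 (hnz x0)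
  have hallneg : ∀ x, z x < 0 := by
    intro x
    rcases lt_or_ge (z x) 0 with h | h
    · exact h
    · exfalso
      have hpos : 0 < z x := lt_of_le_of_ne h (Ne.symm (hnz x))
      have hsub := intermediate_value_uIcc (a := x0) (b := x) (f := z) hzc.continuousOn
      have h0 : (0:ℝ) ∈ Set.uIcc (z x0) (z x) := by
        rw [Set.mem_uIcc]
        left
        exact ⟨hx0neg.le, hpos.le⟩
      obtain ⟨y, _, hy⟩ := hsub h0
      exact hnz y hy
  -- derivative of -(z)⁻¹
  have hqd : ∀ x, HasDerivAt (fun x => -(z x)⁻¹)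
      ((b + c*Real.cos x) + (Real.sin x - a)*z x) x := by
    intro x
    have h1 := ((hd x).inv (hnz x)).neg
    have hz2 : (z x)^2 ≠ 0 := pow_ne_zero 2 (hnz x)
    have heq : -(-((b + c * Real.cos x) * (z x)^2 + (Real.sin x - a) * (z x)^3) / (z x)^2) =
        (b + c*Real.cos x) + (Real.sin x - a)*z x := by
      have h0 : -(-((b + c * Real.cos x) * (z x)^2 + (Real.sin x - a) * (z x)^3) / (z x)^2)
          = ((b + c * Real.cos x) * (z x)^2 + (Real.sin x - a) * (z x)^3) / (z x)^2 := by
        ring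
      rw [h0, div_eq_iff hz2]
      ring
    rwa [heq] at h1
  have hpi : (0:ℝ) < 2*π := by positivity
  have hcont1 : Continuous fun x => (b + c*Real.cos x) + (Real.sin x - a)*z x := by
    continuity
  have hFTC : (∫ x in (0:ℝ)..(2*π), ((b + c*Real.cos x) + (Real.sin x - a)*z x)) =
      -(z (2*π))⁻¹ - (-(z 0)⁻¹) :=
    intervalIntegral.integral_eq_sub_of_hasDerivAt (fun x _ => hqd x)
      (hcont1.intervalIntegrable _ _)
  have hz2π : z (2*π) = z 0 := by
    have := hp 0
    rwa [zero_add] at this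
  rw [hz2π, sub_self] at hFTC
  have hsplit : (∫ x in (0:ℝ)..(2*π), ((b + c*Real.cos x) + (Real.sin x - a)*z x)) =
      (∫ x in (0:ℝ)..(2*π), (b + c*Real.cos x)) +
      ∫ x in (0:ℝ)..(2*π), (Real.sin x - a)*z x := by
    apply intervalIntegral.integral_add
    · exact (continuous_const.add (continuous_const.mul Real.continuous_cos)).intervalIntegrable _ _
    · exact ((Real.continuous_sin.sub continuous_const).mul hzc).intervalIntegrable _ _
  have heval : (∫ x in (0:ℝ)..(2*π), (b + c*Real.cos x)) = 2*π*b := by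
    rw [intervalIntegral.integral_add (g := fun t => c * Real.cos t) intervalIntegrable_const
        ((continuous_const.mul Real.continuous_cos).intervalIntegrable _ _),
      intervalIntegral.integral_const, intervalIntegral.integral_const_mul, integral_cos]
    simp [Real.sin_two_pi]
  have hposint : 0 < ∫ x in (0:ℝ)..(2*π), (Real.sin x - a)*z x := by
    apply intervalIntegral.intervalIntegral_pos_of_pos_on
      (((Real.continuous_sin.sub continuous_const).mul hzc).intervalIntegrable _ _)
      (fun x _ => ?_) hpi
    have h1 : Real.sin x - a < 0 := by nlinarith [Real.sin_le_one x]
    exact mul_pos_of_neg_of_neg h1 (hallneg x)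
  rw [hsplit, heval] at hFTC
  nlinarith [Real.pi_pos]

lemma abel_z_to_u {a b c : ℝ} (ha : 1 < a) (hb : 0 < b) {z : ℝ → ℝ}
    (hd : ∀ x, HasDerivAt z ((b + c * Real.cos x) * (z x)^2 + (Real.sin x - a) * (z x)^3) x)
    (hp : ∀ x, z (x + 2*π) = z x) (hnz : ∀ x, z x ≠ 0) (hpos : ∀ x, 0 < z x) :
    (∀ t, mA a b c ≤ (z t)⁻¹) ∧ (∀ t, (z (t + 2*π))⁻¹ = (z t)⁻¹) ∧
      (∀ t, HasDerivAt (fun x => (z x)⁻¹)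
        ((a - Real.sin t)/((z t)⁻¹) - (b + c*Real.cos t)) t) := by
  have hm : 0 < mA a b c := mA_pos ha hb
  have hzc : Continuous z := Differentiable.continuous (fun x => (hd x).differentiableAt)
  have hwpos : ∀ t, 0 < (z t)⁻¹ := fun t => inv_pos.mpr (hpos t)
  have hwd : ∀ t, HasDerivAt (fun x => (z x)⁻¹)
      ((a - Real.sin t)/((z t)⁻¹) - (b + c*Real.cos t)) t := by
    intro t
    have h1 := (hd t).inv (hnz t)
    have hz2 : (z t)^2 ≠ 0 := pow_ne_zero 2 (hnz t)
    have heq : -((b + c * Real.cos t) * (z t)^2 + (Real.sin t - a) * (z t)^3) / (z t)^2 =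
        (a - Real.sin t)/((z t)⁻¹) - (b + c*Real.cos t) := by
      rw [div_inv_eq_mul, div_eq_iff hz2]
      ring
    rwa [heq] at h1
  have hwp : ∀ t, (z (t + 2*π))⁻¹ = (z t)⁻¹ := fun t => by rw [hp t]
  have hwc : Continuous fun t => (z t)⁻¹ := hzc.inv₀ hnz
  refine ⟨?_, hwp, hwd⟩
  -- global minimum argument
  have hper : Function.Periodic (fun t => (z t)⁻¹) (2*π) := fun t => hwp t
  obtain ⟨x0, _, hx0min⟩ := (isCompact_Icc (a := (0:ℝ)) (b := 2*π)).exists_isMinOn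
    (Set.nonempty_Icc.mpr (by positivity)) hwc.continuousOn
  have hglob : ∀ t, (z x0)⁻¹ ≤ (z t)⁻¹ := by
    intro t
    have hr0 : 0 ≤ t - ⌊t/(2*π)⌋ * (2*π) := Int.sub_floor_div_mul_nonneg t (by positivity)
    have hr1 : t - ⌊t/(2*π)⌋ * (2*π) < 2*π := Int.sub_floor_div_mul_lt t (by positivity)
    have heq : (z (t - ⌊t/(2*π)⌋ * (2*π)))⁻¹ = (z t)⁻¹ :=
      hper.sub_int_mul_eq ⌊t/(2*π)⌋
    rw [← heq]
    exact hx0min ⟨hr0, hr1.le⟩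
  intro t
  refine le_trans ?_ (hglob t)
  by_contra hlt
  push_neg at hlt
  have hloc : IsLocalMin (fun t => (z t)⁻¹) x0 := Filter.Eventually.of_forall hglob
  have hderiv0 := hloc.hasDerivAt_eq_zero (hwd x0)
  have h1 : (a - 1)/(mA a b c) < (a - 1)/((z x0)⁻¹) :=
    div_lt_div_of_pos_left (by linarith) (hwpos x0) hlt
  rw [mA_key ha] at h1
  have h2 : (a - 1)/((z x0)⁻¹) ≤ (a - Real.sin x0)/((z x0)⁻¹) :=
    div_le_div₀ (by nlinarith [Real.sin_le_one x0]) (by nlinarith [Real.sin_le_one x0])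
      (hwpos x0) le_rfl
  obtain ⟨hfl, hfr⟩ := abs_le.mp (fieldbd hb x0)
  have hbc : (0:ℝ) < b + |c| := by positivity
  linarith

/-- For `a > 1`, `b > 0`, the Abel equation
`y′ = (b + c·cos x)·y² + (sin x − a)·y³` has exactly one nowhere-vanishing
2π-periodic solution, and this solution is everywhere positive. -/
theorem abel_exactly_one_periodic_solution_a_gt_one
    (a b c : ℝ) (ha : 1 < a) (hb : 0 < b) :
    ∃ y : ℝ → ℝ,
      ((∀ x : ℝ, HasDerivAt y
          ((b + c * Real.cos x) * (y x) ^ 2 + (Real.sin x - a) * (y x) ^ 3) x) ∧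
        (∀ x : ℝ, y (x + 2 * Real.pi) = y x) ∧
        (∀ x : ℝ, y x ≠ 0)) ∧
      (∀ x : ℝ, 0 < y x) ∧
      (∀ z : ℝ → ℝ,
        ((∀ x : ℝ, HasDerivAt z
            ((b + c * Real.cos x) * (z x) ^ 2 + (Real.sin x - a) * (z x) ^ 3) x) ∧
          (∀ x : ℝ, z (x + 2 * Real.pi) = z x) ∧
          (∀ x : ℝ, z x ≠ 0)) → z = y) := by
  obtain ⟨u, hul, hup, hud⟩ := abel_u_exists (a := a) (b := b) (c := c) ha hb
  have hm : 0 < mA a b c := mA_pos ha hb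
  have hu0 : ∀ t, 0 < u t := fun t => lt_of_lt_of_le hm (hul t)
  refine ⟨fun x => (u x)⁻¹, ⟨fun x => ?_, fun x => by simp only [hup x],
    fun x => (inv_pos.mpr (hu0 x)).ne'⟩, fun x => inv_pos.mpr (hu0 x), fun z hz => ?_⟩
  · have h1 := (hud x).inv (hu0 x).ne'
    have heq : -((a - Real.sin x)/(u x) - (b + c*Real.cos x)) / (u x)^2 =
        (b + c*Real.cos x) * ((u x)⁻¹)^2 + (Real.sin x - a) * ((u x)⁻¹)^3 := by
      have := (hu0 x).ne'
      field_simp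
      ring
    rwa [heq] at h1
  · obtain ⟨hzd, hzp, hznz⟩ := hz
    have hzpos := abel_z_pos ha hb hzd hzp hznz
    obtain ⟨hwl, hwp, hwd⟩ := abel_z_to_u ha hb hzd hzp hznz hzpos
    have hequ : (fun x => (z x)⁻¹) = u :=
      abel_u_unique ha hb hwl (fun t => hwp t) hwd hul hup hud
    funext x
    have hx := congrFun hequ x
    rw [← hx, inv_inv]
end
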